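/- arXiv:1004.3026 — 7 statements merged into one kernel-verified Lean document; each statement's English description precedes it below -/
import Mathlib

section
/- Let F and G be finite multigraphs without isolated vertices that are not isomorphic. Then for every symmetric measurable U : [0,1]² → [−1,1] and every ε > 0 there exists a symmetric measurable U′ : [0,1]² → [−1,1] such that ‖U − U′‖_∞ ≤ ε and t(F,U′) ≠ t(G,U′). -/
/- STATEMENT 9: Non-isomorphic multigraphs can be distinguished by an
   arbitrarily small perturbation of any kernel.  A multigraph (without loops)
   is encoded by a finite vertex type `V` and a multiset of ordered pairs
   `E : Multiset (V × V)` with distinct coordinates; since the kernels are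
   symmetric, the orientation of the edges is immaterial, and isomorphism is
   defined through the induced multisets of unordered pairs. -/

open MeasureTheory

noncomputable section

abbrev UI : Type := Set.Icc (0 : ℝ) 1

/-- Homomorphism density `t(F,U)` of a multigraph with vertex type `V` and edge
multiset `E` in a symmetric kernel `U` (edges counted with multiplicity). -/
def multiDensity {V : Type} [Fintype V] (E : Multiset (V × V))
    (U : UI → UI → ℝ) : ℝ :=
  ∫ x : V → UI, (E.map (fun p => U (x p.1) (x p.2))).prod

/-- Isomorphism of multigraphs: a bijection of the vertex sets carrying the
edge multiset (as unordered pairs) of one onto that of the other. -/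
def MultigraphIso {V W : Type} (E : Multiset (V × V)) (E' : Multiset (W × W)) : Prop :=
  ∃ φ : V ≃ W,
    (E.map (fun p => s(p.1, p.2))).map (Sym2.map φ) = E'.map (fun p => s(p.1, p.2))

namespace PerturbAux

section AnalyticAux
variable {V : Type} [Fintype V]


variable {V : Type} [Fintype V]

lemma integrand_measurable (E : Multiset (V × V)) {K : UI → UI → ℝ}
    (hK : Measurable (Function.uncurry K)) :
    Measurable fun x : V → UI => (E.map (fun p => K (x p.1) (x p.2))).prod := by
  induction E using Multiset.induction_on with
  | empty => simpa using measurable_const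
  | cons p E ih =>
    simp only [Multiset.map_cons, Multiset.prod_cons]
    exact (hK.comp ((measurable_pi_apply p.1).prodMk (measurable_pi_apply p.2))).mul ih

lemma integrand_abs_le (E : Multiset (V × V)) {K : UI → UI → ℝ} {C : ℝ}
    (hC : 0 ≤ C) (hK : ∀ a b, |K a b| ≤ C) (x : V → UI) :
    |(E.map (fun p => K (x p.1) (x p.2))).prod| ≤ C ^ (Multiset.card E) := by
  induction E using Multiset.induction_on with
  | empty => simp
  | cons p E ih =>
    simp only [Multiset.map_cons, Multiset.prod_cons, Multiset.card_cons, abs_mul, pow_succ']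
    exact mul_le_mul (hK _ _) ih (abs_nonneg _) hC

lemma integrand_integrable (E : Multiset (V × V)) {K : UI → UI → ℝ}
    (hKm : Measurable (Function.uncurry K)) {C : ℝ} (hC : 0 ≤ C) (hK : ∀ a b, |K a b| ≤ C) :
    Integrable (fun x : V → UI => (E.map (fun p => K (x p.1) (x p.2))).prod) := by
  refine ⟨(integrand_measurable E hKm).aestronglyMeasurable, ?_⟩
  exact HasFiniteIntegral.of_bounded (C := C ^ (Multiset.card E))
    (Filter.Eventually.of_forall fun x => by
      simpa [Real.norm_eq_abs] using integrand_abs_le E hC hK x)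

/-- The one-variable polynomial trick via Lagrange interpolation. -/
lemma exists_polynomial_multiDensity (E : Multiset (V × V)) (U D : UI → UI → ℝ)
    (hU : Measurable (Function.uncurry U)) (hD : Measurable (Function.uncurry D))
    {CU CD : ℝ} (hCU : ∀ a b, |U a b| ≤ CU) (hCD : ∀ a b, |D a b| ≤ CD) :
    ∃ P : Polynomial ℝ, ∀ s : ℝ,
      multiDensity E (fun x y => U x y + s * D x y) = P.eval s := by
  classical
  have hCU0 : 0 ≤ CU := le_trans (abs_nonneg _) (hCU ⟨0, by norm_num⟩ ⟨0, by norm_num⟩)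
  have hCD0 : 0 ≤ CD := le_trans (abs_nonneg _) (hCD ⟨0, by norm_num⟩ ⟨0, by norm_num⟩)
  set n := Multiset.card E with hn
  set v : Fin (n + 1) → ℝ := fun i => (i : ℝ) with hv
  have hvinj : Set.InjOn v (Finset.univ : Finset (Fin (n+1))) := by
    intro i _ j _ h
    have h2 : ((i : ℕ) : ℝ) = ((j : ℕ) : ℝ) := h
    exact Fin.ext (Nat.cast_injective h2)
  -- pointwise polynomial identity
  have key : ∀ (s : ℝ) (x : V → UI),
      (E.map (fun p => U (x p.1) (x p.2) + s * D (x p.1) (x p.2))).prod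
        = ∑ i : Fin (n+1), Polynomial.eval s (Lagrange.basis Finset.univ v i) *
            (E.map (fun p => U (x p.1) (x p.2) + v i * D (x p.1) (x p.2))).prod := by
    intro s x
    set Q : Polynomial ℝ :=
      (E.map (fun p => Polynomial.C (D (x p.1) (x p.2)) * Polynomial.X
        + Polynomial.C (U (x p.1) (x p.2)))).prod with hQ
    have hdeg : Q.degree < (Finset.univ : Finset (Fin (n+1))).card := by
      have h1 : Q.natDegree ≤ (Multiset.map Polynomial.natDegree
          (E.map (fun p => Polynomial.C (D (x p.1) (x p.2)) * Polynomial.X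
            + Polynomial.C (U (x p.1) (x p.2))))).sum := Polynomial.natDegree_multiset_prod_le _
      have h2 : (Multiset.map Polynomial.natDegree
          (E.map (fun p => Polynomial.C (D (x p.1) (x p.2)) * Polynomial.X
            + Polynomial.C (U (x p.1) (x p.2))))).sum ≤ n := by
        have := Multiset.sum_le_card_nsmul (Multiset.map Polynomial.natDegree
          (E.map (fun p => Polynomial.C (D (x p.1) (x p.2)) * Polynomial.X
            + Polynomial.C (U (x p.1) (x p.2))))) 1 ?_
        · simpa [hn] using this
        · intro d hd
          obtain ⟨q, hq, rfl⟩ := Multiset.mem_map.1 hd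
          obtain ⟨p, hp, rfl⟩ := Multiset.mem_map.1 hq
          exact Polynomial.natDegree_linear_le
      have h3 : Q.natDegree < n + 1 := lt_of_le_of_lt (le_trans h1 h2) (Nat.lt_succ_self n)
      calc Q.degree ≤ (Q.natDegree : WithBot ℕ) := Polynomial.degree_le_natDegree
        _ < ((n + 1 : ℕ) : WithBot ℕ) := by exact_mod_cast h3
        _ = ((Finset.univ : Finset (Fin (n+1))).card : WithBot ℕ) := by simp
    have hev : ∀ t : ℝ, Polynomial.eval t Q
        = (E.map (fun p => U (x p.1) (x p.2) + t * D (x p.1) (x p.2))).prod := by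
      intro t
      rw [hQ, Polynomial.eval_multiset_prod, Multiset.map_map]
      congr 1
      apply Multiset.map_congr rfl
      intro p _
      simp only [Function.comp_apply, Polynomial.eval_add, Polynomial.eval_mul, Polynomial.eval_C,
        Polynomial.eval_X]
      ring
    have hinterp := Lagrange.eq_interpolate (f := Q) hvinj hdeg
    have := congrArg (Polynomial.eval s) hinterp
    rw [Lagrange.interpolate_apply] at this
    simp only [Polynomial.eval_finset_sum, Polynomial.eval_mul, Polynomial.eval_C] at this
    rw [← hev s]
    rw [this]
    congr 1
    funext i
    rw [hev (v i)]
    ring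
  -- integrate
  refine ⟨∑ i : Fin (n+1),
    Polynomial.C (multiDensity E (fun x y => U x y + v i * D x y)) *
      Lagrange.basis Finset.univ v i, ?_⟩
  intro s
  have hker : ∀ t : ℝ, Measurable (Function.uncurry fun x y => U x y + t * D x y) :=
    fun t => hU.add (hD.const_mul t)
  have hbd : ∀ (t : ℝ) (a b : UI), |U a b + t * D a b| ≤ CU + |t| * CD := by
    intro t a b
    calc |U a b + t * D a b| ≤ |U a b| + |t * D a b| := abs_add_le _ _
      _ ≤ CU + |t| * CD := by
          rw [abs_mul]
          exact add_le_add (hCU a b) (mul_le_mul_of_nonneg_left (hCD a b) (abs_nonneg t))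
  have hint : ∀ t : ℝ, Integrable (fun x : V → UI =>
      (E.map (fun p => U (x p.1) (x p.2) + t * D (x p.1) (x p.2))).prod) :=
    fun t => integrand_integrable E (hker t)
      (by positivity) (hbd t)
  unfold multiDensity
  rw [show (fun x : V → UI =>
      (E.map (fun p => U (x p.1) (x p.2) + s * D (x p.1) (x p.2))).prod)
    = fun x : V → UI => ∑ i : Fin (n+1),
        Polynomial.eval s (Lagrange.basis Finset.univ v i) *
          (E.map (fun p => U (x p.1) (x p.2) + v i * D (x p.1) (x p.2))).prod
    from funext (key s)]
  rw [integral_finset_sum _ (fun i _ => (hint (v i)).const_mul _)]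
  rw [Polynomial.eval_finset_sum]
  congr 1
  funext i
  rw [integral_const_mul, Polynomial.eval_mul, Polynomial.eval_C]
  ring


end AnalyticAux

section StepKernel
variable {k : ℕ}


variable {k : ℕ}

/-- index of the subinterval of length `1/k` containing `x`. -/
def idx (hk : 0 < k) (x : UI) : Fin k :=
  ⟨min (Nat.floor ((k : ℝ) * x.1)) (k - 1), by omega⟩

lemma measurable_idx (hk : 0 < k) : Measurable (idx hk) := by
  have : idx hk = (fun n : ℕ => (⟨min n (k - 1), by omega⟩ : Fin k))
      ∘ (fun x : UI => Nat.floor ((k : ℝ) * x.1)) := rfl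
  rw [this]
  exact measurable_from_top.comp
    (Nat.measurable_floor.comp (measurable_const.mul measurable_subtype_coe))

lemma vol_idx_preimage (hk : 0 < k) (j : Fin k) :
    volume (idx hk ⁻¹' {j}) = ENNReal.ofReal (1 / k) := by
  have hk0 : (0 : ℝ) < k := by exact_mod_cast hk
  by_cases hj : (j : ℕ) < k - 1
  · have hset : idx hk ⁻¹' {j}
        = Subtype.val ⁻¹' (Set.Ico ((j : ℝ) / k) (((j : ℕ) + 1 : ℝ) / k)) := by
      ext x
      obtain ⟨x, hx0, hx1⟩ := x
      have hpos : (0 : ℝ) ≤ (k : ℝ) * x := by positivity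
      simp only [Set.mem_preimage, Set.mem_singleton_iff, Set.mem_Ico, idx, Fin.ext_iff]
      constructor
      · intro h
        have hfl : Nat.floor ((k : ℝ) * x) = (j : ℕ) := by omega
        have := (Nat.floor_eq_iff hpos).1 hfl
        constructor
        · rw [div_le_iff₀ hk0]; linarith [this.1]
        · rw [lt_div_iff₀ hk0]; linarith [this.2]
      · intro ⟨h1, h2⟩
        have hfl : Nat.floor ((k : ℝ) * x) = (j : ℕ) := by
          rw [Nat.floor_eq_iff hpos]
          constructor
          · rw [div_le_iff₀ hk0] at h1; linarith
          · rw [lt_div_iff₀ hk0] at h2; linarith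
        omega
    rw [hset, volume_preimage_coe measurableSet_Icc.nullMeasurableSet measurableSet_Ico]
    have hsub : Set.Ico ((j : ℝ) / k) (((j : ℕ) + 1 : ℝ) / k) ⊆ Set.Icc (0:ℝ) 1 := by
      intro y hy
      obtain ⟨h1, h2⟩ := hy
      constructor
      · have : (0:ℝ) ≤ (j : ℝ) / k := by positivity
        linarith
      · have hj1 : ((j : ℕ) + 1 : ℝ) ≤ k := by
          have : (j : ℕ) + 1 ≤ k := by omega
          exact_mod_cast this
        have : ((j : ℕ) + 1 : ℝ) / k ≤ 1 := by
          rw [div_le_one hk0]; exact hj1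
        linarith
      -- done
    rw [Set.inter_eq_self_of_subset_left hsub, Real.volume_Ico]
    congr 1
    field_simp
    ring
  · have hj' : (j : ℕ) = k - 1 := by omega
    have hcast : (((k - 1 : ℕ) : ℝ)) = (k : ℝ) - 1 := by
      rw [Nat.cast_sub hk]; simp
    have hset : idx hk ⁻¹' {j}
        = Subtype.val ⁻¹' (Set.Icc (((k : ℝ) - 1) / k) 1) := by
      ext x
      obtain ⟨x, hx0, hx1⟩ := x
      have hpos : (0 : ℝ) ≤ (k : ℝ) * x := by positivity
      simp only [Set.mem_preimage, Set.mem_singleton_iff, Set.mem_Icc, idx, Fin.ext_iff]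
      constructor
      · intro h
        have hfl : k - 1 ≤ Nat.floor ((k : ℝ) * x) := by omega
        have := (Nat.le_floor_iff hpos).1 hfl
        rw [hcast] at this
        refine ⟨?_, hx1⟩
        rw [div_le_iff₀ hk0]; linarith
      · intro ⟨h1, _⟩
        have hfl : k - 1 ≤ Nat.floor ((k : ℝ) * x) := by
          rw [Nat.le_floor_iff hpos, hcast]
          rw [div_le_iff₀ hk0] at h1; linarith
        omega
    rw [hset, volume_preimage_coe measurableSet_Icc.nullMeasurableSet measurableSet_Icc]
    have hsub : Set.Icc (((k : ℝ) - 1) / k) 1 ⊆ Set.Icc (0:ℝ) 1 := by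
      intro y hy
      obtain ⟨h1, h2⟩ := hy
      have hk1 : (1:ℝ) ≤ k := by exact_mod_cast hk
      have : (0:ℝ) ≤ ((k : ℝ) - 1) / k := by
        apply div_nonneg (by linarith) (by linarith)
      exact ⟨by linarith, h2⟩
    rw [Set.inter_eq_self_of_subset_left hsub, Real.volume_Icc]
    congr 1
    field_simp
    ring

lemma multiDensity_step {V : Type} [Fintype V] [DecidableEq V] (hk : 0 < k)
    (E : Multiset (V × V)) (A : Fin k → Fin k → ℝ) :
    multiDensity E (fun x y => A (idx hk x) (idx hk y))
      = (1 / (k : ℝ)) ^ (Fintype.card V)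
          * ∑ φ : V → Fin k, (E.map (fun p => A (φ p.1) (φ p.2))).prod := by
  classical
  set c : (V → Fin k) → ℝ := fun φ => (E.map (fun p => A (φ p.1) (φ p.2))).prod with hc
  set cell : (V → Fin k) → Set (V → UI) :=
    fun φ => Set.univ.pi (fun v => idx hk ⁻¹' {φ v}) with hcell
  have hcellmeas : ∀ φ, MeasurableSet (cell φ) :=
    fun φ => MeasurableSet.univ_pi fun v => measurable_idx hk (measurableSet_singleton _)
  have key : ∀ x : V → UI,
      (E.map (fun p => A (idx hk (x p.1)) (idx hk (x p.2)))).prod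
        = ∑ φ : V → Fin k, (cell φ).indicator (fun _ => c φ) x := by
    intro x
    have hmem : ∀ φ : V → Fin k, x ∈ cell φ ↔ (fun v => idx hk (x v)) = φ := by
      intro φ
      simp [hcell, Set.mem_pi, funext_iff]
    calc (E.map (fun p => A (idx hk (x p.1)) (idx hk (x p.2)))).prod
        = c (fun v => idx hk (x v)) := rfl
      _ = ∑ φ : V → Fin k, if (fun v => idx hk (x v)) = φ then c φ else 0 := by
          rw [Finset.sum_ite_eq]; simp
      _ = ∑ φ : V → Fin k, (cell φ).indicator (fun _ => c φ) x := by
          apply Finset.sum_congr rfl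
          intro φ _
          rw [Set.indicator_apply]
          simp only [hmem φ]
    -- done
  unfold multiDensity
  rw [show (fun x : V → UI => (E.map (fun p =>
        A (idx hk (x p.1)) (idx hk (x p.2)))).prod)
      = fun x => ∑ φ : V → Fin k, (cell φ).indicator (fun _ => c φ) x
    from funext key]
  rw [integral_finset_sum _ (fun φ _ =>
    (integrable_const (c φ)).indicator (hcellmeas φ))]
  have hvol : ∀ φ : V → Fin k, volume (cell φ) = ENNReal.ofReal (1/k) ^ (Fintype.card V) := by
    intro φ
    rw [hcell]
    rw [MeasureTheory.volume_pi, Measure.pi_pi]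
    simp [vol_idx_preimage hk]
  have : ∀ φ : V → Fin k, ∫ x : V → UI, (cell φ).indicator (fun _ => c φ) x
      = (1/(k:ℝ)) ^ (Fintype.card V) * c φ := by
    intro φ
    rw [integral_indicator_const _ (hcellmeas φ), measureReal_def, hvol φ]
    rw [ENNReal.toReal_pow, ENNReal.toReal_ofReal (by positivity)]
    simp [smul_eq_mul]
  simp only [this]
  rw [← Finset.mul_sum]


end StepKernel

section Combinatorics

open MvPolynomial

variable {k : ℕ}


open MvPolynomial

variable {k : ℕ}

/-- loopless edge variable -/
def Zp (i j : Fin k) : MvPolynomial (Sym2 (Fin k)) ℝ :=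
  if i = j then 0 else X s(i, j)

def Pp {V : Type} [Fintype V] [DecidableEq V] (E : Multiset (V × V)) :
    MvPolynomial (Sym2 (Fin k)) ℝ :=
  ∑ φ : V → Fin k, (E.map (fun p => Zp (φ p.1) (φ p.2))).prod

lemma eval_Pp {V : Type} [Fintype V] [DecidableEq V] (E : Multiset (V × V))
    (σ : Sym2 (Fin k) → ℝ) :
    eval σ (Pp E) = ∑ φ : V → Fin k,
      (E.map (fun p => if φ p.1 = φ p.2 then 0 else σ s(φ p.1, φ p.2))).prod := by
  unfold Pp
  rw [map_sum]
  apply Finset.sum_congr rfl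
  intro φ _
  rw [map_multiset_prod, Multiset.map_map]
  congr 1
  apply Multiset.map_congr rfl
  intro p _
  simp only [Function.comp_apply, Zp]
  split_ifs <;> simp

lemma toFinsupp_cons {α : Type*} [DecidableEq α] (a : α) (m : Multiset α) :
    Multiset.toFinsupp (a ::ₘ m) = Finsupp.single a 1 + Multiset.toFinsupp m := by
  rw [← Multiset.singleton_add, Multiset.toFinsupp_add, Multiset.toFinsupp_singleton]

lemma term_eq {V : Type} (E : Multiset (V × V)) (φ : V → Fin k)
    (h : ∀ p ∈ E, φ p.1 ≠ φ p.2) :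
    (E.map (fun p => Zp (φ p.1) (φ p.2))).prod
      = monomial (Multiset.toFinsupp (E.map (fun p => s(φ p.1, φ p.2)))) (1 : ℝ) := by
  induction E using Multiset.induction_on with
  | empty => simp
  | cons p E ih =>
    have hp : φ p.1 ≠ φ p.2 := h p (Multiset.mem_cons_self p E)
    simp only [Multiset.map_cons, Multiset.prod_cons]
    rw [ih (fun q hq => h q (Multiset.mem_cons_of_mem hq))]
    rw [Zp, if_neg hp, X, toFinsupp_cons, monomial_mul, one_mul]

lemma term_zero {V : Type} (E : Multiset (V × V)) (φ : V → Fin k)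
    (h : ∃ p ∈ E, φ p.1 = φ p.2) :
    (E.map (fun p => Zp (φ p.1) (φ p.2))).prod = 0 := by
  obtain ⟨p, hp, hpe⟩ := h
  apply Multiset.prod_eq_zero
  rw [Multiset.mem_map]
  exact ⟨p, hp, by simp [Zp, hpe]⟩

lemma coeff_Pp {V : Type} [Fintype V] [DecidableEq V] (E : Multiset (V × V))
    (m : Sym2 (Fin k) →₀ ℕ) :
    coeff m (Pp E) = ∑ φ : V → Fin k,
      (if (∀ p ∈ E, φ p.1 ≠ φ p.2) ∧
          Multiset.toFinsupp (E.map (fun p => s(φ p.1, φ p.2))) = m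
        then (1 : ℝ) else 0) := by
  classical
  unfold Pp
  rw [coeff_sum]
  apply Finset.sum_congr rfl
  intro φ _
  by_cases hgood : ∀ p ∈ E, φ p.1 ≠ φ p.2
  · rw [term_eq E φ hgood, coeff_monomial]
    by_cases hm : Multiset.toFinsupp (E.map (fun p => s(φ p.1, φ p.2))) = m
    · rw [if_pos hm, if_pos ⟨hgood, hm⟩]
    · rw [if_neg hm, if_neg (fun h => hm h.2)]
  · rw [term_zero E φ (by push_neg at hgood; exact hgood), MvPolynomial.coeff_zero,
      if_neg (fun h => hgood h.1)]

lemma image_subset_helper {V' W' : Type} [Fintype V'] [Fintype W']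
    (EF : Multiset (V' × V')) (EG : Multiset (W' × W'))
    (hGiso : ∀ w : W', ∃ p ∈ EG, p.1 = w ∨ p.2 = w)
    (ψ : V' → Fin k) (φ : W' → Fin k)
    (hM : EG.map (fun p => s(φ p.1, φ p.2)) = EF.map (fun p => s(ψ p.1, ψ p.2))) :
    Finset.image φ Finset.univ ⊆ Finset.image ψ Finset.univ := by
  intro i hi
  rw [Finset.mem_image] at hi
  obtain ⟨w, -, rfl⟩ := hi
  obtain ⟨p, hp, hw⟩ := hGiso w
  have hmem : s(φ p.1, φ p.2) ∈ EF.map (fun p => s(ψ p.1, ψ p.2)) := by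
    rw [← hM]
    exact Multiset.mem_map_of_mem _ hp
  rw [Multiset.mem_map] at hmem
  obtain ⟨q, -, hq⟩ := hmem
  have : φ w ∈ s(ψ q.1, ψ q.2) := by
    rw [hq]
    rcases hw with h | h <;> rw [← h] <;> simp [Sym2.mem_iff]
  rw [Sym2.mem_iff] at this
  rw [Finset.mem_image]
  rcases this with h | h
  · exact ⟨q.1, Finset.mem_univ _, h.symm⟩
  · exact ⟨q.2, Finset.mem_univ _, h.symm⟩

/-- The key combinatorial lemma. -/
lemma iso_of_coeff_eq {V W : Type} [Fintype V] [Fintype W] [DecidableEq V] [DecidableEq W]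
    (EF : Multiset (V × V)) (EG : Multiset (W × W))
    (hFloop : ∀ p ∈ EF, p.1 ≠ p.2) (hGloop : ∀ p ∈ EG, p.1 ≠ p.2)
    (hFiso : ∀ v : V, ∃ p ∈ EF, p.1 = v ∨ p.2 = v)
    (hGiso : ∀ w : W, ∃ p ∈ EG, p.1 = w ∨ p.2 = w)
    (ψ : V → Fin k) (hψ : Function.Injective ψ)
    (ψ' : W → Fin k) (hψ' : Function.Injective ψ')
    {c1 c2 : ℝ} (hc1 : 0 < c1) (hc2 : 0 < c2)
    (hcoeff : ∀ m, c1 * coeff m (Pp (k := k) EF) = c2 * coeff m (Pp (k := k) EG)) :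
    MultigraphIso EF EG := by
  classical
  -- coefficient at the F-monomial is positive for F
  have hposF : 0 < coeff (Multiset.toFinsupp (EF.map (fun p => s(ψ p.1, ψ p.2))))
      (Pp (k := k) EF) := by
    rw [coeff_Pp]
    apply Finset.sum_pos'
    · intro φ _; split_ifs <;> norm_num
    · refine ⟨ψ, Finset.mem_univ _, ?_⟩
      rw [if_pos ⟨fun p hp => fun h => hFloop p hp (hψ h), rfl⟩]
      norm_num
  -- hence also positive for G, giving a map φ : W → Fin k
  have hposG : 0 < coeff (Multiset.toFinsupp (EF.map (fun p => s(ψ p.1, ψ p.2))))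
      (Pp (k := k) EG) := by
    have h := hcoeff (Multiset.toFinsupp (EF.map (fun p => s(ψ p.1, ψ p.2))))
    nlinarith
  obtain ⟨φ, hφgood, hφeq⟩ : ∃ φ : W → Fin k, (∀ p ∈ EG, φ p.1 ≠ φ p.2) ∧
      EG.map (fun p => s(φ p.1, φ p.2)) = EF.map (fun p => s(ψ p.1, ψ p.2)) := by
    rw [coeff_Pp] at hposG
    by_contra hcon
    push_neg at hcon
    have : ∀ φ ∈ (Finset.univ : Finset (W → Fin k)),
        (if (∀ p ∈ EG, φ p.1 ≠ φ p.2) ∧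
            Multiset.toFinsupp (EG.map (fun p => s(φ p.1, φ p.2)))
              = Multiset.toFinsupp (EF.map (fun p => s(ψ p.1, ψ p.2)))
          then (1 : ℝ) else 0) = 0 := by
      intro φ _
      rw [if_neg]
      rintro ⟨h1, h2⟩
      exact hcon φ h1 (Multiset.toFinsupp.injective h2)
    rw [Finset.sum_congr rfl this] at hposG
    simp at hposG
  -- symmetric direction, only for cardinality
  have hposG' : 0 < coeff (Multiset.toFinsupp (EG.map (fun p => s(ψ' p.1, ψ' p.2))))
      (Pp (k := k) EG) := by
    rw [coeff_Pp]
    apply Finset.sum_pos'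
    · intro χ _; split_ifs <;> norm_num
    · refine ⟨ψ', Finset.mem_univ _, ?_⟩
      rw [if_pos ⟨fun p hp => fun h => hGloop p hp (hψ' h), rfl⟩]
      norm_num
  have hposF' : 0 < coeff (Multiset.toFinsupp (EG.map (fun p => s(ψ' p.1, ψ' p.2))))
      (Pp (k := k) EF) := by
    have h := hcoeff (Multiset.toFinsupp (EG.map (fun p => s(ψ' p.1, ψ' p.2))))
    nlinarith
  obtain ⟨χ, hχgood, hχeq⟩ : ∃ χ : V → Fin k, (∀ p ∈ EF, χ p.1 ≠ χ p.2) ∧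
      EF.map (fun p => s(χ p.1, χ p.2)) = EG.map (fun p => s(ψ' p.1, ψ' p.2)) := by
    rw [coeff_Pp] at hposF'
    by_contra hcon
    push_neg at hcon
    have : ∀ χ ∈ (Finset.univ : Finset (V → Fin k)),
        (if (∀ p ∈ EF, χ p.1 ≠ χ p.2) ∧
            Multiset.toFinsupp (EF.map (fun p => s(χ p.1, χ p.2)))
              = Multiset.toFinsupp (EG.map (fun p => s(ψ' p.1, ψ' p.2)))
          then (1 : ℝ) else 0) = 0 := by
      intro χ _
      rw [if_neg]
      rintro ⟨h1, h2⟩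
      exact hcon χ h1 (Multiset.toFinsupp.injective h2)
    rw [Finset.sum_congr rfl this] at hposF'
    simp at hposF'
  -- image equalities
  have himg1 : Finset.image φ Finset.univ = Finset.image ψ Finset.univ :=
    Finset.Subset.antisymm
      (image_subset_helper EF EG hGiso ψ φ hφeq)
      (image_subset_helper EG EF hFiso φ ψ hφeq.symm)
  have himg2 : Finset.image χ Finset.univ = Finset.image ψ' Finset.univ :=
    Finset.Subset.antisymm
      (image_subset_helper EG EF hFiso ψ' χ hχeq)
      (image_subset_helper EF EG hGiso χ ψ' hχeq.symm)
  -- cardinalities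
  have hcardψ : (Finset.image ψ Finset.univ).card = Fintype.card V := by
    rw [Finset.card_image_of_injective _ hψ, Finset.card_univ]
  have hcardψ' : (Finset.image ψ' Finset.univ).card = Fintype.card W := by
    rw [Finset.card_image_of_injective _ hψ', Finset.card_univ]
  have hVW : Fintype.card V ≤ Fintype.card W := by
    rw [← hcardψ, ← himg1]
    exact le_trans (Finset.card_image_le) (by rw [Finset.card_univ])
  have hWV : Fintype.card W ≤ Fintype.card V := by
    rw [← hcardψ', ← himg2]
    exact le_trans (Finset.card_image_le) (by rw [Finset.card_univ])
  have hcard : Fintype.card V = Fintype.card W := le_antisymm hVW hWV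
  -- φ is injective
  have hφinj : Function.Injective φ := by
    have : (Finset.image φ Finset.univ).card = (Finset.univ : Finset W).card := by
      rw [himg1, hcardψ, Finset.card_univ, hcard]
    have h2 := Finset.card_image_iff.1 this
    intro a b hab
    exact h2 (Finset.mem_coe.2 (Finset.mem_univ a)) (Finset.mem_coe.2 (Finset.mem_univ b)) hab
  -- build the bijection g : W → V with ψ ∘ g = φ
  have hex : ∀ w : W, ∃ v : V, ψ v = φ w := by
    intro w
    have : φ w ∈ Finset.image ψ Finset.univ := by
      rw [← himg1, Finset.mem_image]
      exact ⟨w, Finset.mem_univ _, rfl⟩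
    rw [Finset.mem_image] at this
    obtain ⟨v, -, hv⟩ := this
    exact ⟨v, hv⟩
  set g : W → V := fun w => (hex w).choose with hg
  have hgspec : ∀ w, ψ (g w) = φ w := fun w => (hex w).choose_spec
  have hginj : Function.Injective g := by
    intro a b hab
    apply hφinj
    rw [← hgspec a, ← hgspec b, hab]
  have hgbij : Function.Bijective g :=
    (Fintype.bijective_iff_injective_and_card g).2 ⟨hginj, hcard.symm⟩
  set e : W ≃ V := Equiv.ofBijective g hgbij with he
  -- the multiset identity transported through ψ
  have hkey : (EG.map (fun p => s(p.1, p.2))).map (Sym2.map g)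
      = EF.map (fun p => s(p.1, p.2)) := by
    apply Multiset.map_injective (Sym2.map.injective hψ)
    rw [Multiset.map_map, Multiset.map_map, Multiset.map_map]
    have l1 : ∀ p ∈ EG, ((Sym2.map ψ ∘ Sym2.map g) ∘ fun p : W × W => s(p.1, p.2)) p
        = s(φ p.1, φ p.2) := by
      intro p _
      obtain ⟨a, b⟩ := p
      simp only [Function.comp_apply, Sym2.map_pair_eq]
      rw [hgspec, hgspec]
    have l2 : ∀ p ∈ EF, (Sym2.map ψ ∘ fun p : V × V => s(p.1, p.2)) p
        = s(ψ p.1, ψ p.2) := by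
      intro p _
      obtain ⟨a, b⟩ := p
      simp only [Function.comp_apply, Sym2.map_pair_eq]
    rw [Multiset.map_congr rfl l1, Multiset.map_congr rfl l2]
    exact hφeq
  refine ⟨e.symm, ?_⟩
  have hstep : (EF.map (fun p => s(p.1, p.2))).map (Sym2.map ⇑e.symm)
      = ((EG.map (fun p => s(p.1, p.2))).map (Sym2.map g)).map (Sym2.map ⇑e.symm) := by
    rw [hkey]
  rw [hstep, Multiset.map_map, Multiset.map_map]
  apply Multiset.map_congr rfl
  intro p _
  obtain ⟨a, b⟩ := p
  simp only [Function.comp_apply, Sym2.map_pair_eq]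
  have h1 : e.symm (g a) = a := e.symm_apply_apply a
  have h2 : e.symm (g b) = b := e.symm_apply_apply b
  rw [h1, h2]


lemma exists_good_param {f g : ℝ → ℝ} {Pf Pg : Polynomial ℝ}
    (hf : ∀ s, f s = Pf.eval s) (hg : ∀ s, g s = Pg.eval s)
    (hne : f 1 ≠ g 1) {δ : ℝ} (hδ : 0 < δ) :
    ∃ s, 0 < s ∧ s ≤ δ ∧ f s ≠ g s := by
  have hP : Pf - Pg ≠ 0 := by
    intro h
    apply hne
    have h1 : Pf.eval 1 - Pg.eval 1 = 0 := by
      rw [← Polynomial.eval_sub, h, Polynomial.eval_zero]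
    rw [hf, hg]; linarith
  have hfin := Polynomial.finite_setOf_isRoot hP
  have hIoc : (Set.Ioc (0:ℝ) δ).Infinite := Set.Ioc_infinite hδ
  obtain ⟨s, hs⟩ := (hIoc.diff hfin).nonempty
  refine ⟨s, hs.1.1, hs.1.2, fun hfg => hs.2 ?_⟩
  show (Pf - Pg).IsRoot s
  rw [Polynomial.IsRoot, Polynomial.eval_sub, ← hf, ← hg, hfg, sub_self]

end Combinatorics

end PerturbAux

open PerturbAux

theorem perturb_to_distinguish
    {V W : Type} [Fintype V] [Fintype W]
    (EF : Multiset (V × V)) (EG : Multiset (W × W))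
    (hFloop : ∀ p ∈ EF, p.1 ≠ p.2) (hGloop : ∀ p ∈ EG, p.1 ≠ p.2)
    (hFiso : ∀ v : V, ∃ p ∈ EF, p.1 = v ∨ p.2 = v)
    (hGiso : ∀ w : W, ∃ p ∈ EG, p.1 = w ∨ p.2 = w)
    (hnoniso : ¬ MultigraphIso EF EG)
    (U : UI → UI → ℝ)
    (hmeas : Measurable (Function.uncurry U))
    (hsym : ∀ x y : UI, U x y = U y x)
    (hbd : ∀ x y : UI, U x y ∈ Set.Icc (-1 : ℝ) 1)
    (ε : ℝ) (hε : 0 < ε) :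
    ∃ U' : UI → UI → ℝ,
      Measurable (Function.uncurry U') ∧
      (∀ x y : UI, U' x y = U' y x) ∧
      (∀ x y : UI, U' x y ∈ Set.Icc (-1 : ℝ) 1) ∧
      (∀ᵐ p : UI × UI, |U p.1 p.2 - U' p.1 p.2| ≤ ε) ∧
      multiDensity EF U' ≠ multiDensity EG U' := by
  haveI : DecidableEq V := Classical.decEq V
  haveI : DecidableEq W := Classical.decEq W
  set k : ℕ := Fintype.card V + Fintype.card W + 1 with hkdef
  have hkpos : 0 < k := by omega
  have hkR : (0 : ℝ) < (k : ℝ) := by exact_mod_cast hkpos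
  obtain ⟨ψ⟩ : Nonempty (V ↪ Fin k) := by
    rw [Function.Embedding.nonempty_iff_card_le, Fintype.card_fin]
    omega
  obtain ⟨ψ'⟩ : Nonempty (W ↪ Fin k) := by
    rw [Function.Embedding.nonempty_iff_card_le, Fintype.card_fin]
    omega
  set c1 : ℝ := (1 / (k : ℝ)) ^ (Fintype.card V) with hc1def
  set c2 : ℝ := (1 / (k : ℝ)) ^ (Fintype.card W) with hc2def
  have hc1 : 0 < c1 := by positivity
  have hc2 : 0 < c2 := by positivity
  -- find a distinguishing evaluation point σ
  have hQ : ¬ (MvPolynomial.C c1 * Pp (k := k) EF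
      = MvPolynomial.C c2 * Pp (k := k) EG) := by
    intro h
    apply hnoniso
    refine iso_of_coeff_eq EF EG hFloop hGloop hFiso hGiso
      ψ ψ.injective ψ' ψ'.injective hc1 hc2 (fun m => ?_)
    have := congrArg (MvPolynomial.coeff m) h
    simpa [MvPolynomial.coeff_C_mul] using this
  obtain ⟨σ, hσ⟩ : ∃ σ : Sym2 (Fin k) → ℝ,
      MvPolynomial.eval σ (MvPolynomial.C c1 * Pp (k := k) EF)
        ≠ MvPolynomial.eval σ (MvPolynomial.C c2 * Pp (k := k) EG) := by
    by_contra h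
    push_neg at h
    exact hQ (MvPolynomial.funext h)
  set A : Fin k → Fin k → ℝ := fun i j => if i = j then 0 else σ s(i, j) with hA
  have hAsym : ∀ i j, A i j = A j i := by
    intro i j
    by_cases h : i = j
    · subst h; rfl
    · rw [hA]
      simp only
      rw [if_neg h, if_neg (Ne.symm h), Sym2.eq_swap]
  -- the unbounded step kernel distinguishes EF and EG
  set W0 : UI → UI → ℝ :=
    fun x y => A (idx hkpos x) (idx hkpos y) with hW0
  have hW0meas : Measurable (Function.uncurry W0) := by
    have : Function.uncurry W0 = (fun q : Fin k × Fin k => A q.1 q.2)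
        ∘ (fun p : UI × UI => (idx hkpos p.1, idx hkpos p.2)) := rfl
    rw [this]
    exact (measurable_of_countable _).comp
      (((measurable_idx hkpos).comp measurable_fst).prodMk
        ((measurable_idx hkpos).comp measurable_snd))
  have hW0sym : ∀ x y, W0 x y = W0 y x := fun x y => hAsym _ _
  have hdiff0 : multiDensity EF W0 ≠ multiDensity EG W0 := by
    rw [hW0]
    rw [multiDensity_step hkpos EF A, multiDensity_step hkpos EG A]
    have e1 : ∑ φ : V → Fin k, ((EF.map fun p => A (φ p.1) (φ p.2))).prod
        = MvPolynomial.eval σ (Pp (k := k) EF) := by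
      rw [eval_Pp]
    have e2 : ∑ φ : W → Fin k, ((EG.map fun p => A (φ p.1) (φ p.2))).prod
        = MvPolynomial.eval σ (Pp (k := k) EG) := by
      rw [eval_Pp]
    rw [e1, e2]
    intro h
    apply hσ
    rw [map_mul, map_mul, MvPolynomial.eval_C, MvPolynomial.eval_C]
    exact h
  -- bound for the step kernel
  set M : ℝ := 1 + ∑ i : Fin k, ∑ j : Fin k, |A i j| with hM
  have hMpos : (0 : ℝ) < M := by
    have : (0:ℝ) ≤ ∑ i : Fin k, ∑ j : Fin k, |A i j| :=
      Finset.sum_nonneg fun i _ => Finset.sum_nonneg fun j _ => abs_nonneg _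
    rw [hM]; linarith
  have hAbd : ∀ i j, |A i j| ≤ M := by
    intro i j
    have h1 : |A i j| ≤ ∑ j' : Fin k, |A i j'| :=
      Finset.single_le_sum (f := fun j' => |A i j'|)
        (fun _ _ => abs_nonneg _) (Finset.mem_univ j)
    have h2 : ∑ j' : Fin k, |A i j'| ≤ ∑ i' : Fin k, ∑ j' : Fin k, |A i' j'| :=
      Finset.single_le_sum (f := fun i' => ∑ j' : Fin k, |A i' j'|)
        (fun _ _ => Finset.sum_nonneg fun _ _ => abs_nonneg _) (Finset.mem_univ i)
    rw [hM]; linarith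
  have hW0bd : ∀ x y, |W0 x y| ≤ M := fun x y => hAbd _ _
  -- polynomial trick 1 : scale the step kernel into [-1,1]
  obtain ⟨PF1, hPF1⟩ := exists_polynomial_multiDensity EF (fun _ _ => (0:ℝ)) W0
    measurable_const hW0meas (CU := 0) (CD := M) (fun _ _ => by simp) hW0bd
  obtain ⟨PG1, hPG1⟩ := exists_polynomial_multiDensity EG (fun _ _ => (0:ℝ)) W0
    measurable_const hW0meas (CU := 0) (CD := M) (fun _ _ => by simp) hW0bd
  have hker1 : (fun x y => (0:ℝ) + 1 * W0 x y) = W0 := by funext x y; ring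
  have h11 : multiDensity EF (fun x y => (0:ℝ) + (1:ℝ) * W0 x y)
      ≠ multiDensity EG (fun x y => (0:ℝ) + (1:ℝ) * W0 x y) := by
    rw [hker1]; exact hdiff0
  obtain ⟨c, hc0, hcM, hcneq⟩ := exists_good_param hPF1 hPG1 h11 (δ := 1 / M)
    (by positivity)
  set W1 : UI → UI → ℝ := fun x y => (0:ℝ) + c * W0 x y with hW1
  have hdiff1 : multiDensity EF W1 ≠ multiDensity EG W1 := hcneq
  have hW1meas : Measurable (Function.uncurry W1) := by
    have : Function.uncurry W1
        = fun p : UI × UI => (0:ℝ) + c * Function.uncurry W0 p := rfl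
    rw [this]
    exact measurable_const.add (hW0meas.const_mul c)
  have hW1sym : ∀ x y, W1 x y = W1 y x := by
    intro x y; rw [hW1]; simp only; rw [hW0sym]
  have hW1bd : ∀ x y, |W1 x y| ≤ 1 := by
    intro x y
    rw [hW1]
    simp only [zero_add]
    rw [abs_mul, abs_of_pos hc0]
    calc c * |W0 x y| ≤ (1 / M) * M :=
        mul_le_mul hcM (hW0bd x y) (abs_nonneg _) (by positivity)
      _ = 1 := by field_simp
  -- polynomial trick 2 : perturb U towards W1
  have hUbd1 : ∀ a b, |U a b| ≤ 1 := by
    intro a b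
    obtain ⟨h1, h2⟩ := hbd a b
    exact abs_le.2 ⟨h1, h2⟩
  set D : UI → UI → ℝ := fun x y => W1 x y - U x y with hD
  have hDmeas : Measurable (Function.uncurry D) := by
    have : Function.uncurry D
        = fun p : UI × UI => Function.uncurry W1 p - Function.uncurry U p := rfl
    rw [this]
    exact hW1meas.sub hmeas
  have hDbd : ∀ a b, |D a b| ≤ 2 := by
    intro a b
    rw [hD]
    simp only
    calc |W1 a b - U a b| ≤ |W1 a b| + |U a b| := abs_sub _ _
      _ ≤ 1 + 1 := add_le_add (hW1bd a b) (hUbd1 a b)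
      _ = 2 := by norm_num
  obtain ⟨PF2, hPF2⟩ := exists_polynomial_multiDensity EF U D hmeas hDmeas
    (CU := 1) (CD := 2) hUbd1 hDbd
  obtain ⟨PG2, hPG2⟩ := exists_polynomial_multiDensity EG U D hmeas hDmeas
    (CU := 1) (CD := 2) hUbd1 hDbd
  have hker2 : (fun x y => U x y + (1:ℝ) * D x y) = W1 := by
    funext x y; rw [hD]; simp only; ring
  have h21 : multiDensity EF (fun x y => U x y + (1:ℝ) * D x y)
      ≠ multiDensity EG (fun x y => U x y + (1:ℝ) * D x y) := by
    rw [hker2]; exact hdiff1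
  obtain ⟨s, hs0, hsδ, hsneq⟩ := exists_good_param hPF2 hPG2 h21
    (δ := min (ε / 2) 1) (by positivity)
  have hs1 : s ≤ 1 := le_trans hsδ (min_le_right _ _)
  have hsε : s ≤ ε / 2 := le_trans hsδ (min_le_left _ _)
  refine ⟨fun x y => U x y + s * D x y, ?_, ?_, ?_, ?_, hsneq⟩
  · have : Function.uncurry (fun x y => U x y + s * D x y)
        = fun p : UI × UI => Function.uncurry U p + s * Function.uncurry D p := rfl
    rw [this]
    exact hmeas.add (hDmeas.const_mul s)
  · intro x y
    simp only
    rw [hsym x y, hD]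
    simp only
    rw [hW1sym x y, hsym x y]
  · intro x y
    simp only [Set.mem_Icc]
    have h1 := abs_le.1 (hUbd1 x y)
    have h2 := abs_le.1 (hW1bd x y)
    have hDxy : D x y = W1 x y - U x y := rfl
    constructor <;> nlinarith [h1.1, h1.2, h2.1, h2.2]
  · apply Filter.Eventually.of_forall
    intro p
    simp only
    have hd2 := hDbd p.1 p.2
    have : U p.1 p.2 - (U p.1 p.2 + s * D p.1 p.2) = -(s * D p.1 p.2) := by ring
    rw [this, abs_neg, abs_mul, abs_of_pos hs0]
    calc s * |D p.1 p.2| ≤ (ε / 2) * 2 :=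
        mul_le_mul hsε hd2 (abs_nonneg _) (by linarith)
      _ = ε := by ring

end
end

section
/- Let f₁,…,f_n : [0,1]^k → ℝ be bounded measurable functions, and suppose there are sets S₁,…,S_n ⊆ {1,…,k} such that each f_i depends only on the coordinates indexed by S_i (i.e., f_i(x) = f_i(y) whenever x_j = y_j for all j ∈ S_i), and each index j ∈ {1,…,k} belongs to at most two of the sets S₁,…,S_n. Then ∫_{[0,1]^k} f₁(x)⋯f_n(x) dx ≤ ‖f₁‖₂ ⋯ ‖f_n‖₂, where ‖f‖₂ = (∫_{[0,1]^k} f(x)² dx)^{1/2}. -/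
/- STATEMENT 10: Generalized Cauchy–Schwarz inequality for functions on the
   cube `[0,1]^k`, each depending on a set of coordinates, so that every
   coordinate is used by at most two of the functions. -/

open MeasureTheory

noncomputable section

open Function ENNReal

lemma cs_two {α : Type*} [MeasurableSpace α] (μ : Measure α) {f g : α → ℝ≥0∞}
    (hf : Measurable f) (hg : Measurable g) :
    ∫⁻ a, f a * g a ∂μ ≤
      (∫⁻ a, f a ^ (2:ℝ) ∂μ) ^ ((1:ℝ)/2) * (∫⁻ a, g a ^ (2:ℝ) ∂μ) ^ ((1:ℝ)/2) :=
  ENNReal.lintegral_mul_le_Lp_mul_Lq μ ⟨by norm_num, by norm_num, by norm_num⟩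
    hf.aemeasurable hg.aemeasurable

lemma cs_one {α : Type*} [MeasurableSpace α] (μ : Measure α) [IsProbabilityMeasure μ]
    {f : α → ℝ≥0∞} (hf : Measurable f) :
    ∫⁻ a, f a ∂μ ≤ (∫⁻ a, f a ^ (2:ℝ) ∂μ) ^ ((1:ℝ)/2) := by
  have h := cs_two μ hf (g := fun _ => 1) measurable_const
  simpa using h

lemma rpow_half_sq (a : ℝ≥0∞) : (a ^ (2:ℝ)) ^ ((1:ℝ)/2) = a := by
  rw [← ENNReal.rpow_mul]; norm_num

lemma sq_rpow_half (a : ℝ≥0∞) : (a ^ ((1:ℝ)/2)) ^ (2:ℝ) = a := by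
  rw [← ENNReal.rpow_mul]; norm_num

lemma key_const (k n : ℕ) (f : Fin n → (Fin k → UI) → ℝ≥0∞)
    (hconst : ∀ (i : Fin n) (x y : Fin k → UI), f i x = f i y) :
    ∫⁻ x : Fin k → UI, ∏ i, f i x ≤
      ∏ i, (∫⁻ x : Fin k → UI, (f i x) ^ (2:ℝ)) ^ ((1:ℝ)/2) := by
  set x₀ : Fin k → UI := fun _ => ⟨0, Set.mem_Icc.mpr ⟨le_rfl, zero_le_one⟩⟩ with hx₀
  have h1 : ∫⁻ x : Fin k → UI, ∏ i, f i x = ∏ i, f i x₀ := by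
    have h : ∀ x, ∏ i, f i x = ∏ i, f i x₀ :=
      fun x => Finset.prod_congr rfl fun i _ => hconst i x x₀
    simp_rw [h]; simp
  have h2 : ∀ i, ∫⁻ x : Fin k → UI, (f i x) ^ (2:ℝ) = f i x₀ ^ (2:ℝ) := by
    intro i
    have h : ∀ x, f i x ^ (2:ℝ) = f i x₀ ^ (2:ℝ) := fun x => by rw [hconst i x x₀]
    simp_rw [h]; simp
  rw [h1]
  refine le_of_eq ?_
  exact (Finset.prod_congr rfl fun i _ => by rw [h2 i, rpow_half_sq]).symm

lemma key : ∀ (N k n : ℕ) (f : Fin n → (Fin k → UI) → ℝ≥0∞),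
    (∀ i, Measurable (f i)) → ∀ (S : Fin n → Finset (Fin k)),
    (∀ (i : Fin n) (x y : Fin k → UI), (∀ j ∈ S i, x j = y j) → f i x = f i y) →
    (∀ j : Fin k, (Finset.univ.filter (fun i : Fin n => j ∈ S i)).card ≤ 2) →
    (∑ i, (S i).card ≤ N) →
    ∫⁻ x : Fin k → UI, ∏ i, f i x ≤
      ∏ i, (∫⁻ x : Fin k → UI, (f i x) ^ (2:ℝ)) ^ ((1:ℝ)/2) := by
  intro N
  induction N with
  | zero =>
    intro k n f hmeas S hdep htwo hsum
    refine key_const k n f fun i x y => hdep i x y ?_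
    have : S i = ∅ := by
      have := Finset.sum_eq_zero_iff.mp (Nat.le_zero.mp hsum) i (Finset.mem_univ i)
      exact Finset.card_eq_zero.mp this
    simp [this]
  | succ N ih =>
    intro k n f hmeas S hdep htwo hsum
    by_cases hne : ∀ i, S i = ∅
    · exact key_const k n f fun i x y => hdep i x y (by simp [hne i])
    push_neg at hne
    obtain ⟨i₀, hi₀⟩ := hne
    obtain ⟨j, hj⟩ := hi₀
    classical
    set μ : Fin k → Measure UI := fun _ => volume with hμ
    -- marginal squares
    set g : Fin n → (Fin k → UI) → ℝ≥0∞ := fun i x =>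
      ((∫⋯∫⁻_{j}, (fun y => f i y ^ (2:ℝ)) ∂μ) x) ^ ((1:ℝ)/2) with hg
    have hgmeas : ∀ i, Measurable (g i) := fun i =>
      (((hmeas i).pow_const (2:ℝ)).lmarginal μ).pow_const _
    have hgval : ∀ i x, g i x = (∫⁻ t : UI, (f i (update x j t)) ^ (2:ℝ)) ^ ((1:ℝ)/2) := by
      intro i x
      rw [hg]
      simp only [lmarginal_singleton]
      rfl
    -- g i does not depend on coordinate j, and is constant where f is
    have hgdep : ∀ (i : Fin n) (x y : Fin k → UI),
        (∀ l ∈ (S i).erase j, x l = y l) → g i x = g i y := by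
      intro i x y h
      rw [hgval, hgval]
      congr 1
      refine lintegral_congr fun t => ?_
      congr 1
      refine hdep i _ _ fun l hl => ?_
      rcases eq_or_ne l j with rfl | hlj
      · simp
      · rw [update_of_ne hlj, update_of_ne hlj]
        exact h l (Finset.mem_erase.mpr ⟨hlj, hl⟩)
    -- if j ∉ S i then g i = f i
    have hgof : ∀ i, j ∉ S i → ∀ x, g i x = f i x := by
      intro i hij x
      rw [hgval]
      have h : ∀ t : UI, f i (update x j t) = f i x := by
        intro t
        refine hdep i _ _ fun l hl => ?_
        have hlj : l ≠ j := fun h => hij (h ▸ hl)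
        rw [update_of_ne hlj]
      simp_rw [h]
      rw [lintegral_const, measure_univ, mul_one, rpow_half_sq]
    -- L² norms preserved
    have hsq : ∀ i x, g i x ^ (2:ℝ) = (∫⋯∫⁻_{j}, (fun y => f i y ^ (2:ℝ)) ∂μ) x := by
      intro i x; rw [hg]; exact sq_rpow_half _
    have heq : ∀ i, ∫⁻ x : Fin k → UI, (g i x) ^ (2:ℝ)
        = ∫⁻ x : Fin k → UI, (f i x) ^ (2:ℝ) := by
      intro i
      simp_rw [hsq]
      rw [MeasureTheory.volume_pi]
      refine lintegral_eq_of_lmarginal_eq {j}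
        (((hmeas i).pow_const (2:ℝ)).lmarginal μ) ((hmeas i).pow_const (2:ℝ)) ?_
      funext x
      rw [lmarginal_singleton]
      have h : ∀ t : UI, (∫⋯∫⁻_{j}, (fun y => f i y ^ (2:ℝ)) ∂μ) (update x j t)
          = (∫⋯∫⁻_{j}, (fun y => f i y ^ (2:ℝ)) ∂μ) x :=
        fun t => lmarginal_update_of_mem μ (Finset.mem_singleton_self j) _ x t
      simp_rw [h]
      simp [hμ]
    -- the pointwise marginal inequality
    set T : Finset (Fin n) := Finset.univ.filter (fun i => j ∈ S i) with hT
    have hi₀T : i₀ ∈ T := by simp [hT, hj]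
    have hmar : ∀ x, (∫⋯∫⁻_{j}, (fun y => ∏ i, f i y) ∂μ) x ≤ ∏ i, g i x := by
      intro x
      rw [lmarginal_singleton]
      have hsplit : ∀ t : UI, ∏ i, f i (update x j t)
          = (∏ i ∈ T, f i (update x j t)) * ∏ i ∈ Finset.univ.filter (fun i => ¬ j ∈ S i), f i x := by
        intro t
        rw [hT, ← Finset.prod_filter_mul_prod_filter_not Finset.univ (fun i => j ∈ S i)
          (fun i => f i (update x j t))]
        congr 1
        refine Finset.prod_congr rfl fun i hi => ?_
        simp only [Finset.mem_filter] at hi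
        refine hdep i _ _ fun l hl => ?_
        have hlj : l ≠ j := fun h => hi.2 (h ▸ hl)
        rw [update_of_ne hlj]
      simp_rw [hsplit]
      rw [lintegral_mul_const'' (f := fun t : UI => ∏ i ∈ T, f i (update x j t)) _
        ((Finset.measurable_prod T (f := fun i t => f i (update x j t)) fun i _ =>
          (hmeas i).comp (measurable_update x)).aemeasurable)]
      have hCeq : ∏ i ∈ Finset.univ.filter (fun i => ¬ j ∈ S i), f i x
          = ∏ i ∈ Finset.univ.filter (fun i => ¬ j ∈ S i), g i x := by
        refine Finset.prod_congr rfl fun i hi => ?_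
        simp only [Finset.mem_filter] at hi
        exact (hgof i hi.2 x).symm
      have hTbound : ∫⁻ t : UI, ∏ i ∈ T, f i (update x j t) ≤ ∏ i ∈ T, g i x := by
        have hcard : T.card = 0 ∨ T.card = 1 ∨ T.card = 2 := by
          have := htwo j; rw [← hT] at this; omega
        rcases hcard with hc | hc | hc
        · rw [Finset.card_eq_zero.mp hc]; simp
        · obtain ⟨a, ha⟩ := Finset.card_eq_one.mp hc
          rw [ha]
          simp only [Finset.prod_singleton]
          rw [hgval]
          exact cs_one volume ((hmeas a).comp (measurable_update x))
        · obtain ⟨a, b, hab, hab2⟩ := Finset.card_eq_two.mp hc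
          rw [hab2]
          have hpp : ∀ t : UI, ∏ i ∈ ({a, b} : Finset (Fin n)), f i (update x j t)
              = f a (update x j t) * f b (update x j t) := fun t => Finset.prod_pair hab
          simp_rw [hpp]
          rw [Finset.prod_pair hab, hgval, hgval]
          exact cs_two volume ((hmeas a).comp (measurable_update x))
            ((hmeas b).comp (measurable_update x))
      calc (∫⁻ t : UI, ∏ i ∈ T, f i (update x j t)) *
              ∏ i ∈ Finset.univ.filter (fun i => ¬ j ∈ S i), f i x
          ≤ (∏ i ∈ T, g i x) * ∏ i ∈ Finset.univ.filter (fun i => ¬ j ∈ S i), g i x := by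
            rw [hCeq]
            exact mul_le_mul_left hTbound _
        _ = ∏ i, g i x := by
            rw [hT]
            exact Finset.prod_filter_mul_prod_filter_not Finset.univ _ _
    -- lift to an inequality of integrals
    have hfprod : Measurable fun x : Fin k → UI => ∏ i, f i x :=
      Finset.measurable_prod _ fun i _ => hmeas i
    have hgprod : Measurable fun x : Fin k → UI => ∏ i, g i x :=
      Finset.measurable_prod _ fun i _ => hgmeas i
    have hstep1 : ∫⁻ x : Fin k → UI, ∏ i, f i x ≤ ∫⁻ x : Fin k → UI, ∏ i, g i x := by
      rw [MeasureTheory.volume_pi]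
      refine lintegral_le_of_lmarginal_le {j} hfprod hgprod ?_
      intro x
      refine le_trans (hmar x) ?_
      -- ∏ g is independent of coordinate j
      rw [lmarginal_singleton]
      have h : ∀ t : UI, ∏ i, g i (update x j t) = ∏ i, g i x := by
        intro t
        refine Finset.prod_congr rfl fun i _ => ?_
        rw [hg]
        simp only []
        rw [lmarginal_update_of_mem μ (Finset.mem_singleton_self j)]
      simp_rw [h]
      rw [lintegral_const, measure_univ, mul_one]
    -- apply the induction hypothesis to g
    have hgtwo : ∀ l : Fin k,
        (Finset.univ.filter (fun i : Fin n => l ∈ (S i).erase j)).card ≤ 2 := by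
      intro l
      refine le_trans (Finset.card_le_card ?_) (htwo l)
      intro i hi
      simp only [Finset.mem_filter, Finset.mem_erase] at hi ⊢
      exact ⟨hi.1, hi.2.2⟩
    have hgsum : ∑ i, ((S i).erase j).card ≤ N := by
      have hlt : ∑ i, ((S i).erase j).card < ∑ i, (S i).card := by
        refine Finset.sum_lt_sum (fun i _ => Finset.card_le_card (Finset.erase_subset _ _))
          ⟨i₀, Finset.mem_univ _, ?_⟩
        rw [Finset.card_erase_of_mem hj]
        have : 0 < (S i₀).card := Finset.card_pos.mpr ⟨j, hj⟩
        omega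
      omega
    have hstep2 := ih k n g hgmeas (fun i => (S i).erase j) hgdep hgtwo hgsum
    refine le_trans hstep1 (le_trans hstep2 (le_of_eq ?_))
    exact Finset.prod_congr rfl fun i _ => by rw [heq i]


theorem generalized_cauchy_schwarz
    (k n : ℕ) (f : Fin n → (Fin k → UI) → ℝ)
    (hmeas : ∀ i, Measurable (f i))
    (hbdd : ∀ i, ∃ C : ℝ, ∀ x, |f i x| ≤ C)
    (S : Fin n → Finset (Fin k))
    (hdep : ∀ (i : Fin n) (x y : Fin k → UI),
      (∀ j ∈ S i, x j = y j) → f i x = f i y)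
    (htwo : ∀ j : Fin k, (Finset.univ.filter (fun i : Fin n => j ∈ S i)).card ≤ 2) :
    ∫ x : Fin k → UI, ∏ i : Fin n, f i x ≤
      ∏ i : Fin n, (∫ x : Fin k → UI, (f i x) ^ 2) ^ ((1 : ℝ) / 2) := by
  classical
  choose C hC using hbdd
  set F : Fin n → (Fin k → UI) → ℝ≥0∞ := fun i x => ENNReal.ofReal |f i x| with hF
  have hFmeas : ∀ i, Measurable (F i) := fun i => (hmeas i).abs.ennreal_ofReal
  have hFdep : ∀ (i : Fin n) (x y : Fin k → UI), (∀ j ∈ S i, x j = y j) → F i x = F i y := by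
    intro i x y h
    rw [hF]
    simp only [hdep i x y h]
  have hkey := key (∑ i, (S i).card) k n F hFmeas S hFdep htwo le_rfl
  have hF2 : ∀ i x, F i x ^ (2:ℝ) = ENNReal.ofReal ((f i x) ^ 2) := by
    intro i x
    rw [hF]
    simp only []
    rw [ENNReal.ofReal_rpow_of_nonneg (abs_nonneg _) (by norm_num)]
    congr 1
    rw [show ((2:ℝ)) = ((2:ℕ):ℝ) by norm_num, Real.rpow_natCast, sq_abs]
  -- finiteness of the square integrals
  have hfin : ∀ i, ∫⁻ x : Fin k → UI, F i x ^ (2:ℝ) ≠ ⊤ := by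
    intro i
    have hb : ∀ x, F i x ^ (2:ℝ) ≤ ENNReal.ofReal (C i ^ 2) := by
      intro x
      rw [hF2]
      exact ENNReal.ofReal_le_ofReal (by
        have h1 := hC i x
        have h2 := abs_nonneg (f i x)
        nlinarith [sq_abs (f i x)])
    refine ne_top_of_le_ne_top ?_ (lintegral_mono hb)
    rw [lintegral_const, measure_univ, mul_one]
    exact ENNReal.ofReal_ne_top
  have hRHSfin : ∏ i, (∫⁻ x : Fin k → UI, F i x ^ (2:ℝ)) ^ ((1:ℝ)/2) ≠ ⊤ := by
    refine (ENNReal.prod_lt_top fun i _ => ?_).ne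
    exact (ENNReal.rpow_lt_top_of_nonneg (by norm_num) (hfin i))
  -- relate real integrals to lintegrals
  have habs_meas : Measurable fun x : Fin k → UI => ∏ i, |f i x| :=
    Finset.measurable_prod _ fun i _ => (hmeas i).abs
  have h2 : ∫ x : Fin k → UI, ∏ i, |f i x| = (∫⁻ x : Fin k → UI, ∏ i, F i x).toReal := by
    rw [integral_eq_lintegral_of_nonneg_ae
      (Filter.Eventually.of_forall fun x => Finset.prod_nonneg fun i _ => abs_nonneg _)
      habs_meas.aestronglyMeasurable]
    congr 1
    refine lintegral_congr fun x => ?_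
    rw [ENNReal.ofReal_prod_of_nonneg fun i _ => abs_nonneg _]
  have h4 : ∀ i, ∫ x : Fin k → UI, (f i x) ^ 2 = (∫⁻ x : Fin k → UI, F i x ^ (2:ℝ)).toReal := by
    intro i
    rw [integral_eq_lintegral_of_nonneg_ae
      (Filter.Eventually.of_forall fun x => sq_nonneg _)
      ((hmeas i).pow_const 2).aestronglyMeasurable]
    congr 1
    exact lintegral_congr fun x => (hF2 i x).symm
  -- first step: bound by integral of absolute values
  have hprodmeas : Measurable fun x : Fin k → UI => ∏ i, f i x :=
    Finset.measurable_prod _ fun i _ => hmeas i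
  have h1 : ∫ x : Fin k → UI, ∏ i, f i x ≤ ∫ x : Fin k → UI, ∏ i, |f i x| := by
    have := norm_integral_le_integral_norm (μ := (volume : Measure (Fin k → UI)))
      (f := fun x => ∏ i, f i x)
    simp only [Real.norm_eq_abs] at this
    calc ∫ x : Fin k → UI, ∏ i, f i x ≤ |∫ x : Fin k → UI, ∏ i, f i x| := le_abs_self _
      _ ≤ ∫ x : Fin k → UI, |∏ i, f i x| := this
      _ = ∫ x : Fin k → UI, ∏ i, |f i x| := by
          refine integral_congr_ae (Filter.Eventually.of_forall fun x => ?_)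
          exact Finset.abs_prod _ _
  calc ∫ x : Fin k → UI, ∏ i, f i x
      ≤ ∫ x : Fin k → UI, ∏ i, |f i x| := h1
    _ = (∫⁻ x : Fin k → UI, ∏ i, F i x).toReal := h2
    _ ≤ (∏ i, (∫⁻ x : Fin k → UI, F i x ^ (2:ℝ)) ^ ((1:ℝ)/2)).toReal :=
        ENNReal.toReal_mono hRHSfin hkey
    _ = ∏ i, ((∫⁻ x : Fin k → UI, F i x ^ (2:ℝ)) ^ ((1:ℝ)/2)).toReal := ENNReal.toReal_prod _ _
    _ = ∏ i, (∫ x : Fin k → UI, (f i x) ^ 2) ^ ((1:ℝ)/2) := by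
        refine Finset.prod_congr rfl fun i _ => ?_
        rw [h4 i, ENNReal.toReal_rpow]


end
end

section
/- Let F and G be finite bipartite graphs such that t(F,U) ≤ t(G,U) for every measurable U : [0,1]² → [−1,1]. Then t(F^sub,U) ≤ t(G^sub,U) for every measurable U : [0,1]² → [−1,1], where for a bipartite graph H, H^sub denotes the subdivision of H obtained by placing one new vertex on each edge; H^sub is bipartite with first class V(H) and second class E(H), each edge e = (a,b) of H giving rise to the two edges (a,e) and (b,e) of H^sub. -/
/- STATEMENT 12: Subdivision preserves the density order.  A bipartite graph is
   encoded by its two finite vertex classes and its edge set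
   `E : Finset (α × β)`.  Its subdivision has first class `α ⊕ β` (the original
   vertices) and second class the edges of `E`; each edge `e = (a,b)` gives
   rise to the two subdivision edges `(a,e)` and `(b,e)`. -/

open MeasureTheory

noncomputable section

/-- Homomorphism density `t(F,U)` of a bipartite graph `F` in a kernel `U`. -/
def bipDensity {α β : Type} [Fintype α] [Fintype β]
    (E : Finset (α × β)) (U : UI → UI → ℝ) : ℝ :=
  ∫ x : α → UI, ∫ y : β → UI, ∏ e ∈ E, U (x e.1) (y e.2)

/-- The edge set of the subdivision of the bipartite graph with edge set `E`. -/
def subdivisionEdges {α β : Type} [DecidableEq α] [DecidableEq β]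
    (E : Finset (α × β)) : Finset ((α ⊕ β) × {e // e ∈ E}) :=
  (Finset.univ.image fun e : {e // e ∈ E} => ((Sum.inl e.val.1 : α ⊕ β), e)) ∪
  (Finset.univ.image fun e : {e // e ∈ E} => ((Sum.inr e.val.2 : α ⊕ β), e))

namespace SubdivHelper

/-- The "cherry" kernel `W(x,y) = ∫ U(x,z) U(y,z) dz`. -/
def W (U : UI → UI → ℝ) (x y : UI) : ℝ := ∫ z : UI, U x z * U y z

lemma W_measurable {U : UI → UI → ℝ} (hU : Measurable (Function.uncurry U)) :
    Measurable (Function.uncurry (W U)) := by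
  have h : StronglyMeasurable (fun p : (UI × UI) × UI => U p.1.1 p.2 * U p.1.2 p.2) := by
    apply Measurable.stronglyMeasurable
    exact (hU.comp (measurable_fst.fst.prodMk measurable_snd)).mul
      (hU.comp (measurable_fst.snd.prodMk measurable_snd))
  exact h.integral_prod_right'.measurable

lemma W_mem {U : UI → UI → ℝ} (hb : ∀ x y : UI, U x y ∈ Set.Icc (-1 : ℝ) 1) :
    ∀ x y : UI, W U x y ∈ Set.Icc (-1 : ℝ) 1 := by
  intro x y
  rw [Set.mem_Icc, ← abs_le]
  have h : ‖∫ z : UI, U x z * U y z‖ ≤ 1 * (volume (Set.univ : Set UI)).toReal := by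
    apply norm_integral_le_of_norm_le_const
    filter_upwards with z
    rw [Real.norm_eq_abs, abs_mul]
    have h1 : |U x z| ≤ 1 := abs_le.mpr ⟨(hb x z).1, (hb x z).2⟩
    have h2 : |U y z| ≤ 1 := abs_le.mpr ⟨(hb y z).1, (hb y z).2⟩
    calc |U x z| * |U y z| ≤ 1 * 1 := mul_le_mul h1 h2 (abs_nonneg _) zero_le_one
    _ = 1 := by ring
  rw [Real.norm_eq_abs] at h
  simpa [W] using h

lemma density_sub {α β : Type} [Fintype α] [Fintype β] [DecidableEq α] [DecidableEq β]
    (E : Finset (α × β)) {U : UI → UI → ℝ} (hU : Measurable (Function.uncurry U))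
    (hb : ∀ x y : UI, U x y ∈ Set.Icc (-1 : ℝ) 1) :
    bipDensity (subdivisionEdges E) U = bipDensity E (W U) := by
  unfold bipDensity
  have h1 : ∀ x : (α ⊕ β) → UI,
      (∫ y : {e // e ∈ E} → UI, ∏ p ∈ subdivisionEdges E, U (x p.1) (y p.2))
      = ∏ e : {e // e ∈ E}, W U (x (Sum.inl e.1.1)) (x (Sum.inr e.1.2)) := by
    intro x
    have hdisj : Disjoint
        (Finset.univ.image fun e : {e // e ∈ E} => ((Sum.inl e.val.1 : α ⊕ β), e))
        (Finset.univ.image fun e : {e // e ∈ E} => ((Sum.inr e.val.2 : α ⊕ β), e)) := by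
      simp [Finset.disjoint_left, Finset.mem_image]
    have hprod : ∀ y : {e // e ∈ E} → UI,
        (∏ p ∈ subdivisionEdges E, U (x p.1) (y p.2))
        = ∏ e : {e // e ∈ E},
            (U (x (Sum.inl e.1.1)) (y e) * U (x (Sum.inr e.1.2)) (y e)) := by
      intro y
      unfold subdivisionEdges
      rw [Finset.prod_union hdisj,
        Finset.prod_image (fun e _ e' _ h => congrArg Prod.snd h),
        Finset.prod_image (fun e _ e' _ h => congrArg Prod.snd h),
        ← Finset.prod_mul_distrib]
    simp_rw [hprod]
    exact integral_fintype_prod_eq_prod (ι := {e // e ∈ E})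
      (fun e z => U (x (Sum.inl e.1.1)) z * U (x (Sum.inr e.1.2)) z)
  simp_rw [h1]
  -- change of variables `(α ⊕ β) → UI  ≃  (α → UI) × (β → UI)`
  have hmp := measurePreserving_sumPiEquivProdPi_symm
    (X := fun _ : α ⊕ β => UI) (fun _ => (volume : Measure UI))
  set F : ((α ⊕ β) → UI) → ℝ :=
    fun x => ∏ e : {e // e ∈ E}, W U (x (Sum.inl e.1.1)) (x (Sum.inr e.1.2)) with hF
  have hFmeas : Measurable F := by
    apply Finset.measurable_prod
    intro e _
    have h2 : Measurable fun a : (α ⊕ β) → UI =>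
        (a (Sum.inl e.1.1), a (Sum.inr e.1.2)) :=
      (measurable_pi_apply _).prodMk (measurable_pi_apply _)
    exact (W_measurable hU).comp h2
  have hFbd : ∀ x, ‖F x‖ ≤ 1 := by
    intro x
    rw [Real.norm_eq_abs, hF, Finset.abs_prod]
    refine Finset.prod_le_one (fun e _ => abs_nonneg _) (fun e _ => ?_)
    exact abs_le.mpr ⟨(W_mem hb _ _).1, (W_mem hb _ _).2⟩
  have heq : ∫ x : (α ⊕ β) → UI, F x
      = ∫ p : (α → UI) × (β → UI),
          F ((MeasurableEquiv.sumPiEquivProdPi (fun _ : α ⊕ β => UI)).symm p) := by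
    exact (hmp.integral_comp
      (MeasurableEquiv.sumPiEquivProdPi (fun _ : α ⊕ β => UI)).symm.measurableEmbedding F).symm
  rw [heq]
  have hInt : Integrable
      (fun p : (α → UI) × (β → UI) =>
        F ((MeasurableEquiv.sumPiEquivProdPi (fun _ : α ⊕ β => UI)).symm p)) volume := by
    apply Integrable.mono' (integrable_const (1 : ℝ))
    · exact (hFmeas.comp
        (MeasurableEquiv.sumPiEquivProdPi (fun _ : α ⊕ β => UI)).symm.measurable).aestronglyMeasurable
    · filter_upwards with p using hFbd _
  rw [show (volume : Measure ((α → UI) × (β → UI)))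
      = (volume : Measure (α → UI)).prod (volume : Measure (β → UI)) from rfl] at hInt ⊢
  rw [integral_prod _ hInt]
  congr 1
  ext a
  congr 1
  ext b
  have : F ((MeasurableEquiv.sumPiEquivProdPi (fun _ : α ⊕ β => UI)).symm (a, b))
      = ∏ e : {e // e ∈ E}, W U (a e.1.1) (b e.1.2) := rfl
  rw [this, ← Finset.prod_coe_sort E (fun p => W U (a p.1) (b p.2))]

end SubdivHelper

theorem subdivision_monotone
    {α β γ δ : Type} [Fintype α] [Fintype β] [Fintype γ] [Fintype δ]
    [DecidableEq α] [DecidableEq β] [DecidableEq γ] [DecidableEq δ]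
    (EF : Finset (α × β)) (EG : Finset (γ × δ))
    (hle : ∀ U : UI → UI → ℝ, Measurable (Function.uncurry U) →
      (∀ x y : UI, U x y ∈ Set.Icc (-1 : ℝ) 1) →
      bipDensity EF U ≤ bipDensity EG U) :
    ∀ U : UI → UI → ℝ, Measurable (Function.uncurry U) →
      (∀ x y : UI, U x y ∈ Set.Icc (-1 : ℝ) 1) →
      bipDensity (subdivisionEdges EF) U ≤ bipDensity (subdivisionEdges EG) U := by
  intro U hU hb
  rw [SubdivHelper.density_sub EF hU hb, SubdivHelper.density_sub EG hU hb]
  exact hle (SubdivHelper.W U) (SubdivHelper.W_measurable hU) (SubdivHelper.W_mem hb)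

end
end

section
/- Let F be a finite simple bipartite graph containing two distinct nonadjacent vertices each of degree at least 2. Then for every measurable U : [0,1]² → [−1,1], t(F,U) ≤ t(C₄,U). -/
/- STATEMENT 13: If a bipartite graph has two distinct nonadjacent vertices of
   degree at least 2, then its density is at most that of `C₄`. -/

open MeasureTheory

noncomputable section

/-- Density `t(F,U)` of a 2-colored simple graph `F` in the kernel `U`, the
edges being oriented from the `false` class to the `true` class. -/
def coloredDensity {V : Type} [Fintype V] (F : SimpleGraph V)
    [DecidableRel F.Adj] (c : V → Bool) (U : UI → UI → ℝ) : ℝ :=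
  ∫ x : V → UI,
    ∏ p ∈ Finset.univ.filter (fun p : V × V => F.Adj p.1 p.2 ∧ c p.1 = false),
      U (x p.1) (x p.2)

/-- Density `t(C₄,U) = ∫ U(x₁,y₁)U(x₁,y₂)U(x₂,y₁)U(x₂,y₂)`. -/
def c4Density (U : UI → UI → ℝ) : ℝ :=
  ∫ x : Fin 2 → UI, ∫ y : Fin 2 → UI,
    U (x 0) (y 0) * U (x 0) (y 1) * U (x 1) (y 0) * U (x 1) (y 1)

namespace TwoNonadjAux

lemma integrable_of_bdd {α : Type*} [MeasurableSpace α] {ν : Measure α} [IsFiniteMeasure ν]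
    {f : α → ℝ} {C : ℝ} (hf : Measurable f) (h : ∀ a, |f a| ≤ C) : Integrable f ν :=
  (integrable_const C).mono' hf.aestronglyMeasurable
    (Filter.Eventually.of_forall fun a => by simpa [Real.norm_eq_abs] using h a)

lemma abs_integral_le_one {α : Type*} [MeasurableSpace α] {ν : Measure α}
    [IsProbabilityMeasure ν] {f : α → ℝ} (h : ∀ a, |f a| ≤ 1) : |∫ a, f a ∂ν| ≤ 1 := by
  have := norm_integral_le_of_norm_le_const (μ := ν) (f := f) (C := 1)
    (Filter.Eventually.of_forall (by simpa [Real.norm_eq_abs] using h))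
  simpa [Real.norm_eq_abs, measure_univ] using this

lemma abs_prod_le_one {ι : Type*} (E : Finset ι) (f : ι → ℝ) (h : ∀ p ∈ E, |f p| ≤ 1) :
    |∏ p ∈ E, f p| ≤ 1 := by
  rw [Finset.abs_prod]
  exact Finset.prod_le_one (fun p _ => abs_nonneg _) h

lemma measU {α : Type*} [MeasurableSpace α] {U : UI → UI → ℝ}
    (hmeas : Measurable (Function.uncurry U)) {g h : α → UI}
    (hg : Measurable g) (hh : Measurable h) : Measurable (fun a => U (g a) (h a)) :=
  hmeas.comp (hg.prodMk hh)

/-- The map resampling coordinate `i` is measure preserving. -/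
lemma map_update_pi {V : Type} [Fintype V] [DecidableEq V] (i : V) :
    Measure.map (fun p : (V → UI) × UI => Function.update p.1 i p.2)
      ((volume : Measure (V → UI)).prod (volume : Measure UI)) = volume := by
  rw [volume_pi]
  refine (Measure.pi_eq fun s hs => ?_).symm
  rw [Measure.map_apply measurable_update' (MeasurableSet.univ_pi hs)]
  have hpre : (fun p : (V → UI) × UI => Function.update p.1 i p.2) ⁻¹' (Set.univ.pi s)
      = (Set.univ.pi (Function.update s i Set.univ)) ×ˢ (s i) := by
    ext ⟨x, t⟩
    simp only [Set.mem_preimage, Set.mem_pi, Set.mem_univ, true_implies, Set.mem_prod]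
    constructor
    · intro h
      refine ⟨fun j => ?_, by simpa using h i⟩
      rcases eq_or_ne j i with rfl | hj
      · simp
      · simpa [Function.update_of_ne hj] using h j
    · rintro ⟨h1, h2⟩ j
      rcases eq_or_ne j i with rfl | hj
      · simpa using h2
      · simpa [Function.update_of_ne hj] using h1 j
  rw [hpre, Measure.prod_prod, Measure.pi_pi]
  have : ∀ j, (volume : Measure UI) (Function.update s i Set.univ j)
      = Function.update (fun j => (volume : Measure UI) (s j)) i 1 j := by
    intro j
    rcases eq_or_ne j i with rfl | hj
    · simp
    · simp [Function.update_of_ne hj]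
  rw [Finset.prod_congr rfl (fun j _ => this j), Finset.prod_update_of_mem (Finset.mem_univ i)]
  rw [← Finset.mul_prod_erase Finset.univ _ (Finset.mem_univ i)]
  rw [Finset.sdiff_singleton_eq_erase, mul_comm, one_mul]

lemma integral_resample {V : Type} [Fintype V] [DecidableEq V] (i : V)
    (f : (V → UI) → ℝ) (hf : Measurable f) (hbd : ∀ x, |f x| ≤ 1) :
    ∫ x : V → UI, f x = ∫ x : V → UI, ∫ t : UI, f (Function.update x i t) := by
  have hT : Measurable (fun p : (V → UI) × UI => Function.update p.1 i p.2) :=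
    measurable_update'
  have h1 : ∫ x : V → UI, f x
      = ∫ p : (V → UI) × UI, f (Function.update p.1 i p.2) ∂(volume.prod volume) := by
    conv_lhs => rw [← map_update_pi (V := V) i]
    exact integral_map hT.aemeasurable hf.aestronglyMeasurable
  rw [h1]
  exact integral_prod _ (integrable_of_bdd (hf.comp hT) (fun p => hbd _))


section Kernel

variable {U : UI → UI → ℝ}

/-- `w(s,s') = ∫ U(s,z)U(s',z) dz`. -/
def W (U : UI → UI → ℝ) (p : UI × UI) : ℝ := ∫ z : UI, U p.1 z * U p.2 z

lemma measW (hmeas : Measurable (Function.uncurry U)) : Measurable (W U) := by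
  have : Measurable (fun q : (UI × UI) × UI => U q.1.1 q.2 * U q.1.2 q.2) :=
    (measU hmeas (measurable_fst.comp measurable_fst) measurable_snd).mul
      (measU hmeas (measurable_snd.comp measurable_fst) measurable_snd)
  exact (this.stronglyMeasurable.integral_prod_right').measurable

lemma absW_le_one (habs : ∀ a b, |U a b| ≤ 1) (p : UI × UI) : |W U p| ≤ 1 :=
  abs_integral_le_one fun z => by
    rw [abs_mul]
    exact mul_le_one₀ (habs _ _) (abs_nonneg _) (habs _ _)

lemma integral_finTwo (g : UI → UI → ℝ) :
    ∫ x : Fin 2 → UI, g (x 0) (x 1)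
      = ∫ p : UI × UI, g p.1 p.2 ∂((volume : Measure UI).prod volume) := by
  have h := (volume_preserving_piFinTwo (fun _ : Fin 2 => UI)).integral_comp
    (MeasurableEquiv.measurableEmbedding _) (fun p : UI × UI => g p.1 p.2)
  rw [Measure.volume_eq_prod] at h
  rw [← h]
  rfl

lemma c4_eq_W_sq (U : UI → UI → ℝ) :
    c4Density U = ∫ p : UI × UI, (W U p) ^ 2 ∂((volume : Measure UI).prod volume) := by
  rw [c4Density]
  have h1 : ∀ x : Fin 2 → UI,
      (∫ y : Fin 2 → UI, U (x 0) (y 0) * U (x 0) (y 1) * U (x 1) (y 0) * U (x 1) (y 1))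
        = ∫ q : UI × UI, U (x 0) q.1 * U (x 0) q.2 * U (x 1) q.1 * U (x 1) q.2
            ∂((volume : Measure UI).prod volume) := by
    intro x
    exact integral_finTwo (fun a b => U (x 0) a * U (x 0) b * U (x 1) a * U (x 1) b)
  simp only [h1]
  rw [integral_finTwo (fun a b => ∫ q : UI × UI,
      U a q.1 * U a q.2 * U b q.1 * U b q.2 ∂((volume : Measure UI).prod volume))]
  refine integral_congr_ae (.of_forall fun p => ?_)
  show _ = W U p ^ 2
  rw [show W U p = ∫ z : UI, U p.1 z * U p.2 z from rfl, sq, ← integral_prod_mul]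
  refine integral_congr_ae (.of_forall fun q => ?_)
  show _ = (U p.1 q.1 * U p.2 q.1) * (U p.1 q.2 * U p.2 q.2)
  ring

lemma sq_marginal_le_c4 (hmeas : Measurable (Function.uncurry U))
    (habs : ∀ a b, |U a b| ≤ 1) {V : Type} [Fintype V] [DecidableEq V]
    (S : Finset V) (hS : 2 ≤ S.card) :
    ∫ x : V → UI, (∫ s : UI, ∏ n ∈ S, U s (x n)) ^ 2 ≤ c4Density U := by
  have habs' : ∀ (s : UI) (x : V → UI), |∏ n ∈ S, U s (x n)| ≤ 1 :=
    fun s x => abs_prod_le_one _ _ fun n _ => habs _ _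
  have hsq : ∀ x : V → UI, (∫ s : UI, ∏ n ∈ S, U s (x n)) ^ 2
      = ∫ p : UI × UI, ∏ n ∈ S, (U p.1 (x n) * U p.2 (x n))
          ∂((volume : Measure UI).prod volume) := by
    intro x
    rw [sq, ← integral_prod_mul]
    exact integral_congr_ae (.of_forall fun p => by
      simp only [← Finset.prod_mul_distrib])
  simp only [hsq]
  have hswap : ∫ x : V → UI, ∫ p : UI × UI, ∏ n ∈ S, (U p.1 (x n) * U p.2 (x n))
        ∂((volume : Measure UI).prod volume)
      = ∫ p : UI × UI, ∫ x : V → UI, ∏ n ∈ S, (U p.1 (x n) * U p.2 (x n))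
        ∂volume ∂((volume : Measure UI).prod volume) := by
    refine integral_integral_swap ?_
    refine integrable_of_bdd (C := 1) ?_ ?_
    · refine Finset.measurable_prod _ fun n _ => ?_
      exact (measU hmeas (measurable_fst.comp measurable_snd)
          ((measurable_pi_apply n).comp measurable_fst)).mul
        (measU hmeas (measurable_snd.comp measurable_snd)
          ((measurable_pi_apply n).comp measurable_fst))
    · rintro ⟨x, p⟩
      exact abs_prod_le_one _ _ fun n _ => by
        rw [abs_mul]; exact mul_le_one₀ (habs _ _) (abs_nonneg _) (habs _ _)
  rw [hswap]
  have hinner : ∀ p : UI × UI,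
      (∫ x : V → UI, ∏ n ∈ S, (U p.1 (x n) * U p.2 (x n))) = (W U p) ^ S.card := by
    intro p
    have h1 : ∀ x : V → UI, (∏ n ∈ S, (U p.1 (x n) * U p.2 (x n)))
        = ∏ n : V, (fun z : UI => if n ∈ S then U p.1 z * U p.2 z else 1) (x n) := by
      intro x
      simp only [apply_ite (fun r : ℝ => r)]
      rw [Finset.prod_ite_mem, Finset.univ_inter]
    simp only [h1]
    rw [MeasureTheory.integral_fintype_prod_volume_eq_prod
      (fun n (z : UI) => if n ∈ S then U p.1 z * U p.2 z else 1)]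
    have h2 : ∀ n : V, (∫ z : UI, if n ∈ S then U p.1 z * U p.2 z else 1)
        = if n ∈ S then W U p else 1 := by
      intro n
      split_ifs
      · rfl
      · simp
    rw [Finset.prod_congr rfl fun n _ => h2 n, Finset.prod_ite_mem, Finset.univ_inter,
      Finset.prod_const]
  simp only [hinner]
  rw [c4_eq_W_sq]
  refine integral_mono ?_ ?_ ?_
  · exact integrable_of_bdd (C := 1) ((measW hmeas).pow_const _)
      (fun p => by rw [abs_pow]; exact pow_le_one₀ (abs_nonneg _) (absW_le_one habs p))
  · exact integrable_of_bdd (C := 1) ((measW hmeas).pow_const _)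
      (fun p => by rw [abs_pow]; exact pow_le_one₀ (abs_nonneg _) (absW_le_one habs p))
  · intro p
    calc (W U p) ^ S.card ≤ |(W U p) ^ S.card| := le_abs_self _
      _ = |W U p| ^ S.card := abs_pow _ _
      _ ≤ |W U p| ^ 2 := pow_le_pow_of_le_one (abs_nonneg _) (absW_le_one habs p) hS
      _ = (W U p) ^ 2 := sq_abs _

lemma c4_flip (hmeas : Measurable (Function.uncurry U))
    (habs : ∀ a b, |U a b| ≤ 1) : c4Density (fun a b => U b a) = c4Density U := by
  have hm : Measurable (Function.uncurry fun (x y : Fin 2 → UI) =>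
      U (y 0) (x 0) * U (y 0) (x 1) * U (y 1) (x 0) * U (y 1) (x 1)) := by
    refine ((((measU hmeas ((measurable_pi_apply 0).comp measurable_snd)
      ((measurable_pi_apply 0).comp measurable_fst)).mul
      (measU hmeas ((measurable_pi_apply 0).comp measurable_snd)
        ((measurable_pi_apply 1).comp measurable_fst))).mul
      (measU hmeas ((measurable_pi_apply 1).comp measurable_snd)
        ((measurable_pi_apply 0).comp measurable_fst))).mul
      (measU hmeas ((measurable_pi_apply 1).comp measurable_snd)
        ((measurable_pi_apply 1).comp measurable_fst)))
  have key : (∫ x : Fin 2 → UI, ∫ y : Fin 2 → UI,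
        U (y 0) (x 0) * U (y 0) (x 1) * U (y 1) (x 0) * U (y 1) (x 1))
      = ∫ y : Fin 2 → UI, ∫ x : Fin 2 → UI,
        U (y 0) (x 0) * U (y 0) (x 1) * U (y 1) (x 0) * U (y 1) (x 1) := by
    refine integral_integral_swap ?_
    refine integrable_of_bdd (C := 1) hm ?_
    rintro ⟨x, y⟩
    simp only [Function.uncurry]
    rw [abs_mul, abs_mul, abs_mul]
    exact mul_le_one₀ (mul_le_one₀ (mul_le_one₀ (habs _ _) (abs_nonneg _) (habs _ _))
      (abs_nonneg _) (habs _ _)) (abs_nonneg _) (habs _ _)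
  rw [c4Density, c4Density]
  calc (∫ x : Fin 2 → UI, ∫ y : Fin 2 → UI,
        (fun a b => U b a) (x 0) (y 0) * (fun a b => U b a) (x 0) (y 1) *
          (fun a b => U b a) (x 1) (y 0) * (fun a b => U b a) (x 1) (y 1))
      = ∫ x : Fin 2 → UI, ∫ y : Fin 2 → UI,
        U (y 0) (x 0) * U (y 0) (x 1) * U (y 1) (x 0) * U (y 1) (x 1) := by
        refine integral_congr_ae (.of_forall fun x => ?_)
        refine integral_congr_ae (.of_forall fun y => ?_)
        ring
    _ = ∫ y : Fin 2 → UI, ∫ x : Fin 2 → UI,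
        U (y 0) (x 0) * U (y 0) (x 1) * U (y 1) (x 0) * U (y 1) (x 1) := key

end Kernel
lemma phi_sq_le {V : Type} [Fintype V] [DecidableEq V] (F : SimpleGraph V) [DecidableRel F.Adj]
    (c : V → Bool) (hc : ∀ a b : V, F.Adj a b → c a ≠ c b)
    (U : UI → UI → ℝ) (hmeas : Measurable (Function.uncurry U)) (habs : ∀ a b, |U a b| ≤ 1)
    (w : V) (hw : 2 ≤ F.degree w) (E : Finset (V × V))
    (hE : ∀ p : V × V, p ∈ E ↔ (F.Adj p.1 p.2 ∧ c p.1 = false) ∧ (p.1 = w ∨ p.2 = w)) :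
    ∫ x : V → UI,
      (∫ t : UI, ∏ p ∈ E, U (Function.update x w t p.1) (Function.update x w t p.2)) ^ 2
      ≤ c4Density U := by
  rw [← SimpleGraph.card_neighborFinset_eq_degree] at hw
  cases hcw : c w with
  | false =>
    have hEeq : E = (F.neighborFinset w).image (fun n => (w, n)) := by
      ext ⟨p1, p2⟩
      simp only [hE, Finset.mem_image, SimpleGraph.mem_neighborFinset, Prod.mk.injEq]
      constructor
      · rintro ⟨⟨hadj, hcol⟩, h | h⟩
        · exact ⟨p2, by rw [← h]; exact hadj, h.symm, rfl⟩
        · rw [h] at hadj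
          have hne := hc p1 w hadj
          rw [hcw] at hne
          exact absurd hcol hne
      · rintro ⟨n, hadj, h1, h2⟩
        rw [← h1, ← h2]
        exact ⟨⟨hadj, hcw⟩, Or.inl rfl⟩
    have hprod : ∀ (x : V → UI) (t : UI),
        (∏ p ∈ E, U (Function.update x w t p.1) (Function.update x w t p.2))
          = ∏ n ∈ F.neighborFinset w, U t (x n) := by
      intro x t
      rw [hEeq, Finset.prod_image (fun a _ b _ h => by simpa using h)]
      refine Finset.prod_congr rfl fun n hn => ?_
      rw [Function.update_self,
        Function.update_of_ne ((SimpleGraph.mem_neighborFinset _ _ _).mp hn).ne']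
    simp only [hprod]
    exact sq_marginal_le_c4 hmeas habs _ hw
  | true =>
    have hEeq : E = (F.neighborFinset w).image (fun n => (n, w)) := by
      ext ⟨p1, p2⟩
      simp only [hE, Finset.mem_image, SimpleGraph.mem_neighborFinset, Prod.mk.injEq]
      constructor
      · rintro ⟨⟨hadj, hcol⟩, h | h⟩
        · rw [h, hcw] at hcol
          exact absurd hcol (by simp)
        · rw [h] at hadj
          exact ⟨p1, hadj.symm, rfl, h.symm⟩
      · rintro ⟨n, hadj, h1, h2⟩
        rw [← h1, ← h2]
        have hcn : c n = false := by
          have hne := hc w n hadj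
          rw [hcw] at hne
          exact Bool.eq_false_iff.mpr (Ne.symm hne)
        exact ⟨⟨hadj.symm, hcn⟩, Or.inr rfl⟩
    have hprod : ∀ (x : V → UI) (t : UI),
        (∏ p ∈ E, U (Function.update x w t p.1) (Function.update x w t p.2))
          = ∏ n ∈ F.neighborFinset w, (fun a b => U b a) t (x n) := by
      intro x t
      rw [hEeq, Finset.prod_image (fun a _ b _ h => by simpa using h)]
      refine Finset.prod_congr rfl fun n hn => ?_
      rw [Function.update_self,
        Function.update_of_ne ((SimpleGraph.mem_neighborFinset _ _ _).mp hn).ne']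
    simp only [hprod]
    have := sq_marginal_le_c4 (U := fun a b => U b a)
      (hmeas.comp measurable_swap) (fun a b => habs b a) (F.neighborFinset w) hw
    rw [c4_flip hmeas habs] at this
    exact this
lemma prod_update_eq {V : Type} [DecidableEq V] (U : UI → UI → ℝ) (E : Finset (V × V)) (i : V)
    (hw : ∀ p ∈ E, p.1 ≠ i ∧ p.2 ≠ i) (x : V → UI) (t : UI) :
    ∏ p ∈ E, U (Function.update x i t p.1) (Function.update x i t p.2)
      = ∏ p ∈ E, U (x p.1) (x p.2) :=
  Finset.prod_congr rfl fun p hp => by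
    rw [Function.update_of_ne (hw p hp).1, Function.update_of_ne (hw p hp).2]

end TwoNonadjAux

open TwoNonadjAux in
theorem two_nonadjacent_deg_two_bound
    {V : Type} [Fintype V] (F : SimpleGraph V) [DecidableRel F.Adj]
    (c : V → Bool) (hc : ∀ u v : V, F.Adj u v → c u ≠ c v)
    (u v : V) (huv : u ≠ v) (hnadj : ¬ F.Adj u v)
    (hu : 2 ≤ F.degree u) (hv : 2 ≤ F.degree v)
    (U : UI → UI → ℝ)
    (hmeas : Measurable (Function.uncurry U))
    (hbd : ∀ x y : UI, U x y ∈ Set.Icc (-1 : ℝ) 1) :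
    coloredDensity F c U ≤ c4Density U := by
  classical
  have habs : ∀ a b : UI, |U a b| ≤ 1 := fun a b => abs_le.mpr ⟨(hbd a b).1, (hbd a b).2⟩
  have hnadj' : ¬ F.Adj v u := fun h => hnadj h.symm
  -- exclusion: no edge touches both `u` and `v`
  have hexcl : ∀ p : V × V, F.Adj p.1 p.2 →
      ¬((p.1 = u ∨ p.2 = u) ∧ (p.1 = v ∨ p.2 = v)) := by
    rintro ⟨p1, p2⟩ hadj ⟨hu', hv'⟩
    rcases hu' with h1 | h1 <;> rcases hv' with h2 | h2
    · exact huv (h1.symm.trans h2)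
    · rw [h1, h2] at hadj; exact hnadj hadj
    · rw [h2, h1] at hadj; exact hnadj' hadj
    · exact huv (h1.symm.trans h2)
  -- the three edge classes
  set Eu : Finset (V × V) := Finset.univ.filter
    (fun p : V × V => (F.Adj p.1 p.2 ∧ c p.1 = false) ∧ (p.1 = u ∨ p.2 = u)) with hEu_def
  set Ev : Finset (V × V) := Finset.univ.filter
    (fun p : V × V => (F.Adj p.1 p.2 ∧ c p.1 = false) ∧ ¬(p.1 = u ∨ p.2 = u)
      ∧ (p.1 = v ∨ p.2 = v)) with hEv_def
  set Eo : Finset (V × V) := Finset.univ.filter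
    (fun p : V × V => (F.Adj p.1 p.2 ∧ c p.1 = false) ∧ ¬(p.1 = u ∨ p.2 = u)
      ∧ ¬(p.1 = v ∨ p.2 = v)) with hEo_def
  have hEu_mem : ∀ p : V × V, p ∈ Eu ↔
      (F.Adj p.1 p.2 ∧ c p.1 = false) ∧ (p.1 = u ∨ p.2 = u) := by
    intro p; rw [hEu_def]; simp
  have hEv_mem : ∀ p : V × V, p ∈ Ev ↔
      (F.Adj p.1 p.2 ∧ c p.1 = false) ∧ ¬(p.1 = u ∨ p.2 = u) ∧ (p.1 = v ∨ p.2 = v) := by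
    intro p; rw [hEv_def]; simp
  have hEo_mem : ∀ p : V × V, p ∈ Eo ↔
      (F.Adj p.1 p.2 ∧ c p.1 = false) ∧ ¬(p.1 = u ∨ p.2 = u) ∧ ¬(p.1 = v ∨ p.2 = v) := by
    intro p; rw [hEo_def]; simp
  have hEv_mem' : ∀ p : V × V, p ∈ Ev ↔
      (F.Adj p.1 p.2 ∧ c p.1 = false) ∧ (p.1 = v ∨ p.2 = v) := by
    intro p
    rw [hEv_mem p]
    constructor
    · rintro ⟨hb, _, hv'⟩; exact ⟨hb, hv'⟩
    · rintro ⟨hb, hv'⟩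
      exact ⟨hb, fun hu' => hexcl p hb.1 ⟨hu', hv'⟩, hv'⟩
  -- the avoided-vertex facts
  have hEu_ne : ∀ p ∈ Eu, p.1 ≠ v ∧ p.2 ≠ v := by
    intro p hp
    obtain ⟨hb, hu'⟩ := (hEu_mem p).mp hp
    exact ⟨fun h => hexcl p hb.1 ⟨hu', Or.inl h⟩, fun h => hexcl p hb.1 ⟨hu', Or.inr h⟩⟩
  have hEv_ne : ∀ p ∈ Ev, p.1 ≠ u ∧ p.2 ≠ u := by
    intro p hp
    obtain ⟨_, hnu, _⟩ := (hEv_mem p).mp hp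
    exact ⟨fun h => hnu (Or.inl h), fun h => hnu (Or.inr h)⟩
  have hEo_ne_u : ∀ p ∈ Eo, p.1 ≠ u ∧ p.2 ≠ u := by
    intro p hp
    obtain ⟨_, hnu, _⟩ := (hEo_mem p).mp hp
    exact ⟨fun h => hnu (Or.inl h), fun h => hnu (Or.inr h)⟩
  have hEo_ne_v : ∀ p ∈ Eo, p.1 ≠ v ∧ p.2 ≠ v := by
    intro p hp
    obtain ⟨_, _, hnv⟩ := (hEo_mem p).mp hp
    exact ⟨fun h => hnv (Or.inl h), fun h => hnv (Or.inr h)⟩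
  -- partial products
  set Pu : (V → UI) → ℝ := fun x => ∏ p ∈ Eu, U (x p.1) (x p.2) with hPu_def
  set Pv : (V → UI) → ℝ := fun x => ∏ p ∈ Ev, U (x p.1) (x p.2) with hPv_def
  set Po : (V → UI) → ℝ := fun x => ∏ p ∈ Eo, U (x p.1) (x p.2) with hPo_def
  have hPu_meas : Measurable Pu :=
    Finset.measurable_prod _ fun p _ => measU hmeas (measurable_pi_apply p.1) (measurable_pi_apply p.2)
  have hPv_meas : Measurable Pv :=
    Finset.measurable_prod _ fun p _ => measU hmeas (measurable_pi_apply p.1) (measurable_pi_apply p.2)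
  have hPo_meas : Measurable Po :=
    Finset.measurable_prod _ fun p _ => measU hmeas (measurable_pi_apply p.1) (measurable_pi_apply p.2)
  have hPu_bd : ∀ x, |Pu x| ≤ 1 := fun x => abs_prod_le_one _ _ fun p _ => habs _ _
  have hPv_bd : ∀ x, |Pv x| ≤ 1 := fun x => abs_prod_le_one _ _ fun p _ => habs _ _
  have hPo_bd : ∀ x, |Po x| ≤ 1 := fun x => abs_prod_le_one _ _ fun p _ => habs _ _
  -- invariance under updates
  have hPu_v : ∀ (x : V → UI) (t : UI), Pu (Function.update x v t) = Pu x :=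
    fun x t => prod_update_eq U Eu v hEu_ne x t
  have hPv_u : ∀ (x : V → UI) (t : UI), Pv (Function.update x u t) = Pv x :=
    fun x t => prod_update_eq U Ev u hEv_ne x t
  have hPo_u : ∀ (x : V → UI) (t : UI), Po (Function.update x u t) = Po x :=
    fun x t => prod_update_eq U Eo u hEo_ne_u x t
  have hPo_v : ∀ (x : V → UI) (t : UI), Po (Function.update x v t) = Po x :=
    fun x t => prod_update_eq U Eo v hEo_ne_v x t
  -- the marginals
  set φu : (V → UI) → ℝ := fun x => ∫ t : UI, Pu (Function.update x u t) with hφu_def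
  set φv : (V → UI) → ℝ := fun x => ∫ t : UI, Pv (Function.update x v t) with hφv_def
  have hφu_meas : Measurable φu :=
    ((hPu_meas.comp (measurable_update' (a := u))).stronglyMeasurable.integral_prod_right').measurable
  have hφv_meas : Measurable φv :=
    ((hPv_meas.comp (measurable_update' (a := v))).stronglyMeasurable.integral_prod_right').measurable
  have hφu_bd : ∀ x, |φu x| ≤ 1 := fun x => abs_integral_le_one fun t => hPu_bd _
  have hφv_bd : ∀ x, |φv x| ≤ 1 := fun x => abs_integral_le_one fun t => hPv_bd _
  have hφu_v : ∀ (x : V → UI) (t : UI), φu (Function.update x v t) = φu x := by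
    intro x t
    show (∫ s : UI, Pu (Function.update (Function.update x v t) u s)) = _
    refine integral_congr_ae (.of_forall fun s => ?_)
    show Pu (Function.update (Function.update x v t) u s) = Pu (Function.update x u s)
    rw [Function.update_comm (Ne.symm huv), hPu_v]
  -- splitting of the density
  have h0 : coloredDensity F c U = ∫ x : V → UI, Pu x * (Pv x * Po x) := by
    rw [coloredDensity]
    refine integral_congr_ae (.of_forall fun x => ?_)
    have hunion : Finset.univ.filter (fun p : V × V => F.Adj p.1 p.2 ∧ c p.1 = false)
        = Eu ∪ (Ev ∪ Eo) := by
      ext p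
      rw [Finset.mem_union, Finset.mem_union, hEu_mem, hEv_mem, hEo_mem]
      simp only [Finset.mem_filter, Finset.mem_univ, true_and]
      tauto
    have hd1 : Disjoint Ev Eo := by
      rw [Finset.disjoint_left]
      intro p hp hp'
      exact ((hEo_mem p).mp hp').2.2 ((hEv_mem p).mp hp).2.2
    have hd2 : Disjoint Eu (Ev ∪ Eo) := by
      rw [Finset.disjoint_left]
      intro p hp hp'
      have hu' := ((hEu_mem p).mp hp).2
      rcases Finset.mem_union.mp hp' with h | h
      · exact ((hEv_mem p).mp h).2.1 hu'
      · exact ((hEo_mem p).mp h).2.1 hu'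
    rw [hunion]
    show ∏ p ∈ Eu ∪ (Ev ∪ Eo), U (x p.1) (x p.2) = Pu x * (Pv x * Po x)
    rw [Finset.prod_union hd2, Finset.prod_union hd1]
  -- resample at u
  have hA1 : ∫ x : V → UI, Pu x * (Pv x * Po x) = ∫ x : V → UI, φu x * (Pv x * Po x) := by
    have hm : Measurable (fun x : V → UI => Pu x * (Pv x * Po x)) :=
      hPu_meas.mul (hPv_meas.mul hPo_meas)
    have hb : ∀ x : V → UI, |Pu x * (Pv x * Po x)| ≤ 1 := by
      intro x
      rw [abs_mul, abs_mul]
      exact mul_le_one₀ (hPu_bd x) (by positivity)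
        (mul_le_one₀ (hPv_bd x) (abs_nonneg _) (hPo_bd x))
    rw [integral_resample u _ hm hb]
    refine integral_congr_ae (.of_forall fun x => ?_)
    show (∫ t : UI, Pu (Function.update x u t) *
        (Pv (Function.update x u t) * Po (Function.update x u t))) = _
    calc (∫ t : UI, Pu (Function.update x u t) *
          (Pv (Function.update x u t) * Po (Function.update x u t)))
        = ∫ t : UI, Pu (Function.update x u t) * (Pv x * Po x) := by
          refine integral_congr_ae (.of_forall fun t => ?_)
          show Pu (Function.update x u t) *
              (Pv (Function.update x u t) * Po (Function.update x u t))
            = Pu (Function.update x u t) * (Pv x * Po x)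
          rw [hPv_u, hPo_u]
      _ = φu x * (Pv x * Po x) := integral_mul_const _ _
  -- resample at v
  have hB1 : ∫ x : V → UI, φu x * (Pv x * Po x) = ∫ x : V → UI, φv x * (φu x * Po x) := by
    have hm : Measurable (fun x : V → UI => φu x * (Pv x * Po x)) :=
      hφu_meas.mul (hPv_meas.mul hPo_meas)
    have hb : ∀ x : V → UI, |φu x * (Pv x * Po x)| ≤ 1 := by
      intro x
      rw [abs_mul, abs_mul]
      exact mul_le_one₀ (hφu_bd x) (by positivity)
        (mul_le_one₀ (hPv_bd x) (abs_nonneg _) (hPo_bd x))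
    rw [integral_resample v _ hm hb]
    refine integral_congr_ae (.of_forall fun x => ?_)
    show (∫ t : UI, φu (Function.update x v t) *
        (Pv (Function.update x v t) * Po (Function.update x v t))) = _
    calc (∫ t : UI, φu (Function.update x v t) *
          (Pv (Function.update x v t) * Po (Function.update x v t)))
        = ∫ t : UI, Pv (Function.update x v t) * (φu x * Po x) := by
          refine integral_congr_ae (.of_forall fun t => ?_)
          show φu (Function.update x v t) *
              (Pv (Function.update x v t) * Po (Function.update x v t))
            = Pv (Function.update x v t) * (φu x * Po x)
          rw [hφu_v, hPo_v]
          ring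
      _ = φv x * (φu x * Po x) := integral_mul_const _ _
  -- the two square bounds
  have hDu : ∫ x : V → UI, φu x ^ 2 ≤ c4Density U := by
    have := phi_sq_le F c hc U hmeas habs u hu Eu hEu_mem
    exact this
  have hDv : ∫ x : V → UI, φv x ^ 2 ≤ c4Density U := by
    have := phi_sq_le F c hc U hmeas habs v hv Ev hEv_mem'
    exact this
  -- integrability of the squares
  have hφu2_int : Integrable (fun x : V → UI => φu x ^ 2) :=
    integrable_of_bdd (C := 1) (hφu_meas.pow_const 2)
      (fun x => by rw [abs_pow]; exact pow_le_one₀ (abs_nonneg _) (hφu_bd x))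
  have hφv2_int : Integrable (fun x : V → UI => φv x ^ 2) :=
    integrable_of_bdd (C := 1) (hφv_meas.pow_const 2)
      (fun x => by rw [abs_pow]; exact pow_le_one₀ (abs_nonneg _) (hφv_bd x))
  -- AM-GM step
  have hstep : ∫ x : V → UI, φv x * (φu x * Po x)
      ≤ ∫ x : V → UI, (φu x ^ 2 + φv x ^ 2) / 2 := by
    refine integral_mono ?_ ?_ ?_
    · refine integrable_of_bdd (C := 1) (hφv_meas.mul (hφu_meas.mul hPo_meas)) ?_
      intro x
      rw [abs_mul, abs_mul]
      exact mul_le_one₀ (hφv_bd x) (by positivity)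
        (mul_le_one₀ (hφu_bd x) (abs_nonneg _) (hPo_bd x))
    · exact (hφu2_int.add hφv2_int).div_const 2
    · intro x
      have h1 : |φu x| ^ 2 ≤ 1 := pow_le_one₀ (abs_nonneg _) (hφu_bd x)
      have h2 : |φv x| ^ 2 ≤ 1 := pow_le_one₀ (abs_nonneg _) (hφv_bd x)
      have h3 : 2 * |φu x| * |φv x| ≤ |φu x| ^ 2 + |φv x| ^ 2 := two_mul_le_add_sq _ _
      calc φv x * (φu x * Po x) ≤ |φv x * (φu x * Po x)| := le_abs_self _
        _ = |φv x| * (|φu x| * |Po x|) := by rw [abs_mul, abs_mul]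
        _ ≤ |φv x| * (|φu x| * 1) := by
            refine mul_le_mul_of_nonneg_left ?_ (abs_nonneg _)
            exact mul_le_mul_of_nonneg_left (hPo_bd x) (abs_nonneg _)
        _ ≤ (φu x ^ 2 + φv x ^ 2) / 2 := by
            rw [← sq_abs (φu x), ← sq_abs (φv x)]
            nlinarith [h3]
  -- assemble
  have hsum : ∫ x : V → UI, (φu x ^ 2 + φv x ^ 2) / 2
      = ((∫ x : V → UI, φu x ^ 2) + ∫ x : V → UI, φv x ^ 2) / 2 := by
    rw [integral_div, integral_add hφu2_int hφv2_int]
  calc coloredDensity F c U = ∫ x : V → UI, Pu x * (Pv x * Po x) := h0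
    _ = ∫ x : V → UI, φu x * (Pv x * Po x) := hA1
    _ = ∫ x : V → UI, φv x * (φu x * Po x) := hB1
    _ ≤ ∫ x : V → UI, (φu x ^ 2 + φv x ^ 2) / 2 := hstep
    _ = ((∫ x : V → UI, φu x ^ 2) + ∫ x : V → UI, φv x ^ 2) / 2 := hsum
    _ ≤ c4Density U := by linarith

end
end

section
/- Let U : [0,1]² → [−1,1] be measurable. Then for every integer k ≥ 2, t(C₄,U)^{k−1} ≤ t(C_{2k},U) ≤ t(C₄,U)^{k/2}. -/
set_option linter.unusedSectionVars false

open MeasureTheory Function Filter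

noncomputable section

/-- Density `t(C_{2k}, U)` of the even cycle `C_{2k}`, viewed as a bipartite
graph whose two classes (each of size `k`) alternate along the cycle. -/
def evenCycleDensity (k : ℕ) (U : UI → UI → ℝ) : ℝ :=
  ∫ x : Fin k → UI, ∫ y : Fin k → UI,
    ∏ i : Fin k, (U (x i) (y i) * U (x (finRotate k i)) (y i))

namespace CycleAux

/-- Integrable of bounded measurable on a finite measure space. -/
lemma integrable_bdd {α : Type*} [MeasurableSpace α] {μ : Measure α} [IsFiniteMeasure μ]
    {f : α → ℝ} (hm : AEStronglyMeasurable f μ) {C : ℝ} (h : ∀ a, |f a| ≤ C) :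
    Integrable f μ :=
  (integrable_const C).mono' hm (Eventually.of_forall (by simpa [Real.norm_eq_abs] using h))

lemma abs_integral_le_one {α : Type*} [MeasurableSpace α] {μ : Measure α}
    [IsProbabilityMeasure μ] {f : α → ℝ} (h : ∀ a, |f a| ≤ 1) : |∫ a, f a ∂μ| ≤ 1 := by
  have := norm_integral_le_of_norm_le_const (μ := μ) (f := f) (C := 1)
    (Eventually.of_forall (by simpa [Real.norm_eq_abs] using h))
  simpa [Real.norm_eq_abs] using this

/-- Cauchy–Schwarz for integrals of bounded measurable real functions on a
probability space. -/
lemma integral_cauchy_schwarz {α : Type*} [MeasurableSpace α] {μ : Measure α}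
    [IsProbabilityMeasure μ] {f g : α → ℝ}
    (hfm : Measurable f) (hgm : Measurable g)
    (hfb : ∀ a, |f a| ≤ 1) (hgb : ∀ a, |g a| ≤ 1) :
    (∫ a, f a * g a ∂μ) ^ 2 ≤ (∫ a, f a ^ 2 ∂μ) * (∫ a, g a ^ 2 ∂μ) := by
  set A := ∫ a, f a ^ 2 ∂μ with hA
  set B := ∫ a, f a * g a ∂μ with hB
  set C := ∫ a, g a ^ 2 ∂μ with hC
  have hf2 : Integrable (fun a => f a ^ 2) μ := integrable_bdd
    (hfm.pow_const 2).aestronglyMeasurable (C := 1)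
    (fun a => by have := hfb a; rw [abs_pow]; nlinarith [abs_nonneg (f a)])
  have hg2 : Integrable (fun a => g a ^ 2) μ := integrable_bdd
    (hgm.pow_const 2).aestronglyMeasurable (C := 1)
    (fun a => by have := hgb a; rw [abs_pow]; nlinarith [abs_nonneg (g a)])
  have hfg : Integrable (fun a => f a * g a) μ := integrable_bdd
    (hfm.mul hgm).aestronglyMeasurable (C := 1)
    (fun a => by rw [abs_mul]; exact mul_le_one₀ (hfb a) (abs_nonneg _) (hgb a))
  have hCnn : 0 ≤ C := integral_nonneg fun a => sq_nonneg _
  rcases eq_or_lt_of_le hCnn with hC0 | hCpos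
  · -- g = 0 a.e., so B = 0
    have hg0 : (fun a => g a ^ 2) =ᵐ[μ] 0 := by
      have := (integral_eq_zero_iff_of_nonneg (fun a => sq_nonneg (g a)) hg2).1 hC0.symm
      simpa using this
    have hB0 : B = 0 := by
      rw [hB]
      have : (fun a => f a * g a) =ᵐ[μ] 0 := by
        filter_upwards [hg0] with a ha
        have : g a = 0 := by
          have := ha
          simp only [Pi.zero_apply] at this
          nlinarith [sq_nonneg (g a)]
        simp [this]
      rw [integral_congr_ae this]; simp
    have hAnn : 0 ≤ A := integral_nonneg fun a => sq_nonneg _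
    rw [hB0]; nlinarith
  · -- expand ∫ (C f - B g)^2 ≥ 0
    have key : 0 ≤ C ^ 2 * A - 2 * C * B * B + B ^ 2 * C := by
      have h0 : 0 ≤ ∫ a, (C * f a - B * g a) ^ 2 ∂μ := integral_nonneg fun a => sq_nonneg _
      have hexp : ∀ a, (C * f a - B * g a) ^ 2
          = C ^ 2 * f a ^ 2 - 2 * C * B * (f a * g a) + B ^ 2 * g a ^ 2 := by
        intro a; ring
      rw [integral_congr_ae (Eventually.of_forall hexp)] at h0
      have hI1 : Integrable (fun a => C ^ 2 * f a ^ 2 - 2 * C * B * (f a * g a)) μ :=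
        (hf2.const_mul _).sub (hfg.const_mul _)
      have hI2 : Integrable (fun a => B ^ 2 * g a ^ 2) μ := hg2.const_mul _
      rw [integral_add hI1 hI2,
        integral_sub ((hf2.const_mul _ : Integrable (fun a => C ^ 2 * f a ^ 2) μ))
          ((hfg.const_mul _ : Integrable (fun a => 2 * C * B * (f a * g a)) μ)),
        integral_const_mul, integral_const_mul, integral_const_mul] at h0
      simpa [← hA, ← hB, ← hC] using h0
    nlinarith

section Kernels

variable (U : UI → UI → ℝ)

/-- The symmetric kernel `K(x,y) = ∫ U(x,z) U(y,z) dz`. -/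
def K (x y : UI) : ℝ := ∫ z, U x z * U y z

/-- Iterated kernels: `R n = A^(n+1)` where `A` is the operator with kernel `K`. -/
def R : ℕ → UI → UI → ℝ
  | 0 => K U
  | n + 1 => fun a b => ∫ u, K U b u * R n a u

/-- `Q n = A^n U`. -/
def Q : ℕ → UI → UI → ℝ
  | 0 => U
  | n + 1 => fun x y => ∫ u, K U x u * Q n u y

/-- Traces `t n = tr (A^(n+1))`. -/
def t (n : ℕ) : ℝ := ∫ a, R U n a a

variable {U}
variable (hU : Measurable (uncurry U)) (hUb : ∀ x y, |U x y| ≤ 1)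

section Basic
include hU

lemma K_meas : Measurable (uncurry (K U)) := by
  have : Measurable (fun q : (UI × UI) × UI => U q.1.1 q.2 * U q.1.2 q.2) :=
    (hU.comp (measurable_fst.fst.prodMk measurable_snd)).mul
      (hU.comp (measurable_fst.snd.prodMk measurable_snd))
  exact this.stronglyMeasurable.integral_prod_right'.measurable

include hUb

lemma K_bd : ∀ x y, |K U x y| ≤ 1 := by
  intro x y
  exact abs_integral_le_one fun z => by
    rw [abs_mul]; exact mul_le_one₀ (hUb x z) (abs_nonneg _) (hUb y z)

end Basic

lemma K_symm (x y : UI) : K U x y = K U y x := by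
  unfold K; simp_rw [mul_comm]

section RQ
include hU hUb

lemma R_meas : ∀ n, Measurable (uncurry (R U n))
  | 0 => K_meas hU
  | n + 1 => by
    have hK := K_meas hU
    have ihm := R_meas n
    have : Measurable (fun q : (UI × UI) × UI => K U q.1.2 q.2 * R U n q.1.1 q.2) :=
      (hK.comp (measurable_fst.snd.prodMk measurable_snd)).mul
        (ihm.comp (measurable_fst.fst.prodMk measurable_snd))
    exact this.stronglyMeasurable.integral_prod_right'.measurable

lemma R_bd : ∀ n, ∀ a b, |R U n a b| ≤ 1
  | 0 => K_bd hU hUb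
  | n + 1 => by
    intro a b
    exact abs_integral_le_one fun u => by
      rw [abs_mul]
      exact mul_le_one₀ (K_bd hU hUb b u) (abs_nonneg _) (R_bd n a u)

lemma Q_meas : ∀ n, Measurable (uncurry (Q U n))
  | 0 => hU
  | n + 1 => by
    have hK := K_meas hU
    have ihm := Q_meas n
    have : Measurable (fun q : (UI × UI) × UI => K U q.1.1 q.2 * Q U n q.2 q.1.2) :=
      (hK.comp (measurable_fst.fst.prodMk measurable_snd)).mul
        (ihm.comp (measurable_snd.prodMk measurable_fst.snd))
    exact this.stronglyMeasurable.integral_prod_right'.measurable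

lemma Q_bd : ∀ n, ∀ x y, |Q U n x y| ≤ 1
  | 0 => hUb
  | n + 1 => by
    intro x y
    exact abs_integral_le_one fun u => by
      rw [abs_mul]
      exact mul_le_one₀ (K_bd hU hUb x u) (abs_nonneg _) (Q_bd n u y)

end RQ

section Fubini

/-- Fubini swap for bounded measurable kernels on the unit interval. -/
lemma fubini_swap {F : UI → UI → ℝ} (hm : Measurable (uncurry F))
    (hb : ∀ a b, |F a b| ≤ 1) :
    ∫ a, ∫ b, F a b = ∫ b, ∫ a, F a b :=
  integral_integral_swap (integrable_bdd hm.aestronglyMeasurable (fun p => hb p.1 p.2))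

end Fubini

section Comp

/-- Section measurability helpers. -/
lemma sec_left {F : UI → UI → ℝ} (hm : Measurable (uncurry F)) (a : UI) :
    Measurable (F a) := by
  have : Measurable fun b => uncurry F (a, b) := hm.comp (measurable_const.prodMk measurable_id)
  simpa [uncurry] using this

lemma sec_right {F : UI → UI → ℝ} (hm : Measurable (uncurry F)) (b : UI) :
    Measurable (fun a => F a b) := by
  have : Measurable fun a => uncurry F (a, b) := hm.comp (measurable_id.prodMk measurable_const)
  simpa [uncurry] using this

/-- Semigroup property: `R (m+n+1) = R m ∘ R n`. -/
lemma R_comp (hU : Measurable (uncurry U)) (hUb : ∀ x y, |U x y| ≤ 1) :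
    ∀ (n m : ℕ) (a b : UI),
    R U (m + n + 1) a b = ∫ u, R U m a u * R U n u b
  | 0, m, a, b => by
    show (∫ u, K U b u * R U m a u) = ∫ u, R U m a u * K U u b
    refine integral_congr_ae (Eventually.of_forall fun u => ?_)
    show K U b u * R U m a u = R U m a u * K U u b
    rw [K_symm b u]; ring
  | n + 1, m, a, b => by
    have hKm := K_meas hU
    have hKb := K_bd hU hUb
    have hRm : ∀ j, Measurable (uncurry (R U j)) := R_meas hU hUb
    have hRb : ∀ j, ∀ a b : UI, |R U j a b| ≤ 1 := R_bd hU hUb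
    have step1 : R U (m + (n + 1) + 1) a b
        = ∫ u, K U b u * R U (m + n + 1) a u := rfl
    rw [step1]
    have step2 : ∀ u : UI, K U b u * R U (m + n + 1) a u
        = ∫ v, K U b u * (R U m a v * R U n v u) := by
      intro u
      rw [R_comp hU hUb n m a u, ← integral_const_mul]
    rw [integral_congr_ae (Eventually.of_forall step2)]
    have hswap : (∫ u, ∫ v, K U b u * (R U m a v * R U n v u))
        = ∫ v, ∫ u, K U b u * (R U m a v * R U n v u) := by
      apply fubini_swap
      · show Measurable fun p : UI × UI => K U b p.1 * (R U m a p.2 * R U n p.2 p.1)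
        exact ((sec_left hKm b).comp measurable_fst).mul
          (((sec_left (hRm m) a).comp measurable_snd).mul
            ((hRm n).comp (measurable_snd.prodMk measurable_fst)))
      · intro u v
        rw [abs_mul, abs_mul]
        exact mul_le_one₀ (hKb b u) (by positivity)
          (mul_le_one₀ (hRb m a v) (abs_nonneg _) (hRb n v u))
    rw [hswap]
    refine integral_congr_ae (Eventually.of_forall fun v => ?_)
    show (∫ u, K U b u * (R U m a v * R U n v u)) = R U m a v * R U (n + 1) v b
    have : ∀ u, K U b u * (R U m a v * R U n v u)
        = R U m a v * (K U b u * R U n v u) := fun u => by ring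
    rw [integral_congr_ae (Eventually.of_forall this), integral_const_mul]
    rfl

/-- Symmetry of the iterated kernels. -/
lemma R_symm (hU : Measurable (uncurry U)) (hUb : ∀ x y, |U x y| ≤ 1) :
    ∀ (n : ℕ) (a b : UI), R U n a b = R U n b a
  | 0, a, b => K_symm a b
  | n + 1, a, b => by
    have h1 : R U (n + 1) a b = ∫ u, K U a u * R U n u b := by
      have h := R_comp hU hUb n 0 a b
      rw [Nat.zero_add] at h
      simpa [R] using h
    have h2 : R U (n + 1) b a = ∫ u, K U a u * R U n b u := rfl
    rw [h1, h2]
    refine integral_congr_ae (Eventually.of_forall fun u => ?_)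
    show K U a u * R U n u b = K U a u * R U n b u
    rw [R_symm hU hUb n u b]

/-- `∫ y, U x y * Q b x' y = R b x x'`. -/
lemma UQ (hU : Measurable (uncurry U)) (hUb : ∀ x y, |U x y| ≤ 1) :
    ∀ (b : ℕ) (x x' : UI), (∫ y, U x y * Q U b x' y) = R U b x x'
  | 0, x, x' => rfl
  | b + 1, x, x' => by
    have hKm := K_meas hU
    have hKb := K_bd hU hUb
    have hQm : Measurable (uncurry (Q U b)) := Q_meas hU hUb b
    have hQb : ∀ x y : UI, |Q U b x y| ≤ 1 := Q_bd hU hUb b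
    have step : ∀ y : UI, U x y * Q U (b + 1) x' y
        = ∫ u, U x y * (K U x' u * Q U b u y) := by
      intro y
      show U x y * (∫ u, K U x' u * Q U b u y) = _
      rw [← integral_const_mul]
    rw [integral_congr_ae (Eventually.of_forall step)]
    have hswap : (∫ y, ∫ u, U x y * (K U x' u * Q U b u y))
        = ∫ u, ∫ y, U x y * (K U x' u * Q U b u y) := by
      apply fubini_swap
      · show Measurable fun p : UI × UI => U x p.1 * (K U x' p.2 * Q U b p.2 p.1)
        exact ((sec_left hU x).comp measurable_fst).mul
          (((sec_left hKm x').comp measurable_snd).mul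
            (hQm.comp (measurable_snd.prodMk measurable_fst)))
      · intro y u
        rw [abs_mul, abs_mul]
        exact mul_le_one₀ (hUb x y) (by positivity)
          (mul_le_one₀ (hKb x' u) (abs_nonneg _) (hQb u y))
    rw [hswap]
    have step2 : ∀ u : UI, (∫ y, U x y * (K U x' u * Q U b u y))
        = K U x' u * R U b x u := by
      intro u
      have h : ∀ y, U x y * (K U x' u * Q U b u y)
          = K U x' u * (U x y * Q U b u y) := fun y => by ring
      rw [integral_congr_ae (Eventually.of_forall h), integral_const_mul,
        UQ hU hUb b x u]
    rw [integral_congr_ae (Eventually.of_forall step2)]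
    rfl

/-- `∫ y, Q a x y * Q b x' y = R (a+b) x x'`. -/
lemma QQ (hU : Measurable (uncurry U)) (hUb : ∀ x y, |U x y| ≤ 1) :
    ∀ (a b : ℕ) (x x' : UI),
    (∫ y, Q U a x y * Q U b x' y) = R U (a + b) x x'
  | 0, b, x, x' => by
    have := UQ hU hUb b x x'
    rw [Nat.zero_add]
    simpa [Q] using this
  | a + 1, b, x, x' => by
    have hKm := K_meas hU
    have hKb := K_bd hU hUb
    have hQam : Measurable (uncurry (Q U a)) := Q_meas hU hUb a
    have hQab : ∀ x y : UI, |Q U a x y| ≤ 1 := Q_bd hU hUb a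
    have hQbm : Measurable (uncurry (Q U b)) := Q_meas hU hUb b
    have hQbb : ∀ x y : UI, |Q U b x y| ≤ 1 := Q_bd hU hUb b
    have step : ∀ y : UI, Q U (a + 1) x y * Q U b x' y
        = ∫ u, (K U x u * Q U a u y) * Q U b x' y := by
      intro y
      show (∫ u, K U x u * Q U a u y) * Q U b x' y = _
      rw [← integral_mul_const]
    rw [integral_congr_ae (Eventually.of_forall step)]
    have hswap : (∫ y, ∫ u, (K U x u * Q U a u y) * Q U b x' y)
        = ∫ u, ∫ y, (K U x u * Q U a u y) * Q U b x' y := by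
      apply fubini_swap
      · show Measurable fun p : UI × UI =>
          (K U x p.2 * Q U a p.2 p.1) * Q U b x' p.1
        exact (((sec_left hKm x).comp measurable_snd).mul
          (hQam.comp (measurable_snd.prodMk measurable_fst))).mul
          ((sec_left hQbm x').comp measurable_fst)
      · intro y u
        rw [abs_mul, abs_mul]
        exact mul_le_one₀ (mul_le_one₀ (hKb x u) (abs_nonneg _) (hQab u y))
          (by positivity) (hQbb x' y)
    rw [hswap]
    have step2 : ∀ u : UI, (∫ y, (K U x u * Q U a u y) * Q U b x' y)
        = K U x u * R U (a + b) u x' := by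
      intro u
      have h : ∀ y, (K U x u * Q U a u y) * Q U b x' y
          = K U x u * (Q U a u y * Q U b x' y) := fun y => by ring
      rw [integral_congr_ae (Eventually.of_forall h), integral_const_mul,
        QQ hU hUb a b u x']
    rw [integral_congr_ae (Eventually.of_forall step2)]
    have harith : a + 1 + b = (a + b) + 1 := by omega
    rw [harith]
    have h := R_comp hU hUb (a + b) 0 x x'
    rw [Nat.zero_add] at h
    rw [h]
    refine integral_congr_ae (Eventually.of_forall fun u => ?_)
    show R U 0 x u * R U (a + b) u x' = K U x u * R U (a + b) u x'
    rfl

end Comp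

section Traces

include hU hUb

lemma t_odd_split (p q : ℕ) :
    t U (p + q + 1) = ∫ a, ∫ b, R U p a b * R U q a b := by
  unfold t
  refine integral_congr_ae (Eventually.of_forall fun a => ?_)
  show R U (p + q + 1) a a = ∫ b, R U p a b * R U q a b
  rw [R_comp hU hUb q p a a]
  refine integral_congr_ae (Eventually.of_forall fun b => ?_)
  show R U p a b * R U q b a = R U p a b * R U q a b
  rw [R_symm hU hUb q b a]

lemma t_even_split (a b : ℕ) :
    t U (a + b) = ∫ x, ∫ y, Q U a x y * Q U b x y := by
  unfold t
  refine integral_congr_ae (Eventually.of_forall fun x => ?_)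
  exact (QQ hU hUb a b x x).symm

lemma t_nonneg (n : ℕ) : 0 ≤ t U n := by
  rcases Nat.even_or_odd n with ⟨m, hm⟩ | ⟨m, hm⟩
  · have : n = m + m := by omega
    rw [this, t_even_split hU hUb m m]
    exact integral_nonneg fun x => integral_nonneg fun y => mul_self_nonneg _
  · have : n = m + m + 1 := by omega
    rw [this, t_odd_split hU hUb m m]
    exact integral_nonneg fun x => integral_nonneg fun y => mul_self_nonneg _

lemma t_le_one (n : ℕ) : t U n ≤ 1 := by
  have h := abs_integral_le_one (μ := (volume : Measure UI))
    (f := fun a => R U n a a) (fun a => R_bd hU hUb n a a)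
  exact (abs_le.1 h).2

/-- Cauchy–Schwarz for double integrals of bounded measurable kernels. -/
lemma kernel_cs {F G : UI → UI → ℝ}
    (hFm : Measurable (uncurry F)) (hGm : Measurable (uncurry G))
    (hFb : ∀ a b, |F a b| ≤ 1) (hGb : ∀ a b, |G a b| ≤ 1) :
    (∫ a, ∫ b, F a b * G a b) ^ 2
      ≤ (∫ a, ∫ b, F a b * F a b) * (∫ a, ∫ b, G a b * G a b) := by
  have hf : Measurable fun p : UI × UI => F p.1 p.2 := hFm
  have hg : Measurable fun p : UI × UI => G p.1 p.2 := hGm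
  have key := integral_cauchy_schwarz (μ := (volume : Measure (UI × UI)))
    (f := fun p => F p.1 p.2) (g := fun p => G p.1 p.2) hf hg
    (fun p => hFb p.1 p.2) (fun p => hGb p.1 p.2)
  have conv : ∀ (H : UI → UI → ℝ), Measurable (uncurry H) → (∀ a b, |H a b| ≤ 1) →
      (∫ p : UI × UI, H p.1 p.2) = ∫ a, ∫ b, H a b := by
    intro H hm hb
    rw [show (volume : Measure (UI × UI))
        = (volume : Measure UI).prod (volume : Measure UI) from rfl]
    exact integral_prod _ (integrable_bdd hm.aestronglyMeasurable (fun p => hb p.1 p.2))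
  have e1 := conv (fun a b => F a b * G a b)
    (hf.mul hg)
    (fun a b => by rw [abs_mul]; exact mul_le_one₀ (hFb a b) (abs_nonneg _) (hGb a b))
  have e2 := conv (fun a b => F a b * F a b) (hf.mul hf)
    (fun a b => by rw [abs_mul]; exact mul_le_one₀ (hFb a b) (abs_nonneg _) (hFb a b))
  have e3 := conv (fun a b => G a b * G a b) (hg.mul hg)
    (fun a b => by rw [abs_mul]; exact mul_le_one₀ (hGb a b) (abs_nonneg _) (hGb a b))
  rw [← e1, ← e2, ← e3]
  have sq_eq : ∀ h : UI × UI → ℝ, (∫ p, h p * h p) = ∫ p, h p ^ 2 := by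
    intro h
    refine integral_congr_ae (Eventually.of_forall fun p => ?_)
    ring
  rw [sq_eq, sq_eq]
  exact key

/-- Odd-split Cauchy–Schwarz : `t (p+q+1)² ≤ t (2p+1) * t (2q+1)`. -/
lemma t_cs_odd (p q : ℕ) :
    t U (p + q + 1) ^ 2 ≤ t U (2 * p + 1) * t U (2 * q + 1) := by
  rw [t_odd_split hU hUb p q,
    show 2 * p + 1 = p + p + 1 by ring, show 2 * q + 1 = q + q + 1 by ring,
    t_odd_split hU hUb p p, t_odd_split hU hUb q q]
  exact kernel_cs hU hUb (R_meas hU hUb p) (R_meas hU hUb q)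
    (R_bd hU hUb p) (R_bd hU hUb q)

/-- Even-split Cauchy–Schwarz : `t (a+b)² ≤ t (2a) * t (2b)`. -/
lemma t_cs_even (a b : ℕ) :
    t U (a + b) ^ 2 ≤ t U (2 * a) * t U (2 * b) := by
  rw [t_even_split hU hUb a b,
    show 2 * a = a + a by ring, show 2 * b = b + b by ring,
    t_even_split hU hUb a a, t_even_split hU hUb b b]
  exact kernel_cs hU hUb (Q_meas hU hUb a) (Q_meas hU hUb b)
    (Q_bd hU hUb a) (Q_bd hU hUb b)

/-- `R (m+1) x y = ∫ u, R m x u * K u y`. -/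
lemma R_succ_right (m : ℕ) (x y : UI) :
    R U (m + 1) x y = ∫ u, R U m x u * K U u y := by
  have h := R_comp hU hUb 0 m x y
  rw [Nat.add_zero] at h
  exact h

/-- Submultiplicativity: `t (2m+1) ≤ (t 1)^(m+1)`. -/
lemma t_odd_le : ∀ m : ℕ, t U (2 * m + 1) ≤ t U 1 ^ (m + 1)
  | 0 => by simp
  | m + 1 => by
    have hKm := K_meas hU
    have hKb := K_bd hU hUb
    have hRm : ∀ j, Measurable (uncurry (R U j)) := R_meas hU hUb
    have hRb : ∀ j, ∀ a b : UI, |R U j a b| ≤ 1 := R_bd hU hUb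
    set F : UI → ℝ := fun x => ∫ u, R U m x u * R U m x u with hF
    set G : UI → ℝ := fun y => ∫ u, K U u y * K U u y with hG
    have hFm : Measurable F := by
      have : Measurable (fun q : UI × UI => R U m q.1 q.2 * R U m q.1 q.2) :=
        (hRm m).mul (hRm m)
      exact this.stronglyMeasurable.integral_prod_right'.measurable
    have hGm : Measurable G := by
      have : Measurable (fun q : UI × UI => K U q.2 q.1 * K U q.2 q.1) :=
        ((hKm.comp (measurable_snd.prodMk measurable_fst))).mul
          (hKm.comp (measurable_snd.prodMk measurable_fst))
      exact this.stronglyMeasurable.integral_prod_right'.measurable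
    have hFb : ∀ x, |F x| ≤ 1 := fun x => abs_integral_le_one fun u => by
      rw [abs_mul]; exact mul_le_one₀ (hRb m x u) (abs_nonneg _) (hRb m x u)
    have hGb : ∀ y, |G y| ≤ 1 := fun y => abs_integral_le_one fun u => by
      rw [abs_mul]; exact mul_le_one₀ (hKb u y) (abs_nonneg _) (hKb u y)
    have hFnn : ∀ x, 0 ≤ F x := fun x => integral_nonneg fun u => mul_self_nonneg _
    have hGnn : ∀ y, 0 ≤ G y := fun y => integral_nonneg fun u => mul_self_nonneg _
    -- pointwise Cauchy–Schwarz
    have point : ∀ x y : UI, R U (m + 1) x y * R U (m + 1) x y ≤ F x * G y := by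
      intro x y
      have hcs := integral_cauchy_schwarz (μ := (volume : Measure UI))
        (f := fun u => R U m x u) (g := fun u => K U u y)
        (sec_left (hRm m) x) (sec_right hKm y)
        (fun u => hRb m x u) (fun u => hKb u y)
      have e1 : (∫ u, R U m x u * K U u y) = R U (m + 1) x y :=
        (R_succ_right hU hUb m x y).symm
      have e2 : (∫ u, (fun u => R U m x u) u ^ 2) = F x := by
        refine integral_congr_ae (Eventually.of_forall fun u => ?_) |>.trans rfl
        show R U m x u ^ 2 = R U m x u * R U m x u
        ring
      have e3 : (∫ u, (fun u => K U u y) u ^ 2) = G y := by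
        refine integral_congr_ae (Eventually.of_forall fun u => ?_) |>.trans rfl
        show K U u y ^ 2 = K U u y * K U u y
        ring
      calc R U (m + 1) x y * R U (m + 1) x y
          = (∫ u, R U m x u * K U u y) ^ 2 := by rw [e1]; ring
        _ ≤ F x * G y := by rw [← e2, ← e3]; exact hcs
    -- monotonicity of the double integral
    have key : t U (2 * (m + 1) + 1) ≤ t U (2 * m + 1) * t U 1 := by
      have e : 2 * (m + 1) + 1 = (m + 1) + (m + 1) + 1 := by ring
      rw [e, t_odd_split hU hUb (m + 1) (m + 1)]
      have mono : (∫ x, ∫ y, R U (m+1) x y * R U (m+1) x y)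
          ≤ ∫ x, ∫ y, F x * G y := by
        apply integral_mono
        · apply integrable_bdd (C := 1)
          · have : Measurable (fun q : UI × UI => R U (m+1) q.1 q.2 * R U (m+1) q.1 q.2) :=
              (hRm (m+1)).mul (hRm (m+1))
            exact this.stronglyMeasurable.integral_prod_right'.measurable.aestronglyMeasurable
          · intro x
            exact abs_integral_le_one fun y => by
              rw [abs_mul]
              exact mul_le_one₀ (hRb (m+1) x y) (abs_nonneg _) (hRb (m+1) x y)
        · apply integrable_bdd (C := 1)
          · have : Measurable (fun q : UI × UI => F q.1 * G q.2) :=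
              (hFm.comp measurable_fst).mul (hGm.comp measurable_snd)
            exact this.stronglyMeasurable.integral_prod_right'.measurable.aestronglyMeasurable
          · intro x
            exact abs_integral_le_one fun y => by
              rw [abs_mul]
              exact mul_le_one₀ (hFb x) (abs_nonneg _) (hGb y)
        · intro x
          apply integral_mono
          · apply integrable_bdd (C := 1)
            · exact ((sec_left (hRm (m+1)) x).mul (sec_left (hRm (m+1)) x)).aestronglyMeasurable
            · intro y
              rw [abs_mul]
              exact mul_le_one₀ (hRb (m+1) x y) (abs_nonneg _) (hRb (m+1) x y)
          · apply integrable_bdd (C := 1)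
            · exact (hGm.const_mul (F x)).aestronglyMeasurable
            · intro y
              rw [abs_mul]
              exact mul_le_one₀ (hFb x) (abs_nonneg _) (hGb y)
          · exact fun y => point x y
      have prod_eq : (∫ x, ∫ y, F x * G y) = (∫ x, F x) * ∫ y, G y := by
        have : ∀ x, (∫ y, F x * G y) = F x * ∫ y, G y := fun x => integral_const_mul _ _
        rw [integral_congr_ae (Eventually.of_forall this), integral_mul_const]
      have eF : (∫ x, F x) = t U (2 * m + 1) := by
        rw [show 2 * m + 1 = m + m + 1 by ring, t_odd_split hU hUb m m]
      have eG : (∫ y, G y) = t U 1 := by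
        have swap : (∫ y, ∫ u, K U u y * K U u y) = ∫ u, ∫ y, K U u y * K U u y := by
          apply fubini_swap
          · show Measurable fun p : UI × UI => K U p.2 p.1 * K U p.2 p.1
            exact ((hKm.comp (measurable_snd.prodMk measurable_fst))).mul
              (hKm.comp (measurable_snd.prodMk measurable_fst))
          · intro y u
            rw [abs_mul]; exact mul_le_one₀ (hKb u y) (abs_nonneg _) (hKb u y)
        rw [hG]
        rw [swap]
        have : t U 1 = t U (0 + 0 + 1) := by norm_num
        rw [this, t_odd_split hU hUb 0 0]
        rfl
      calc (∫ x, ∫ y, R U (m+1) x y * R U (m+1) x y) ≤ ∫ x, ∫ y, F x * G y := mono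
        _ = t U (2 * m + 1) * t U 1 := by rw [prod_eq, eF, eG]
    calc t U (2 * (m + 1) + 1) ≤ t U (2 * m + 1) * t U 1 := key
      _ ≤ t U 1 ^ (m + 1) * t U 1 :=
          mul_le_mul_of_nonneg_right (t_odd_le m) (t_nonneg hU hUb 1)
      _ = t U 1 ^ (m + 2) := by ring

/-- Log-convexity of traces. -/
lemma t_lc (m : ℕ) : t U (m + 1) ^ 2 ≤ t U m * t U (m + 2) := by
  rcases Nat.even_or_odd m with ⟨j, hj⟩ | ⟨j, hj⟩
  · have h := t_cs_even hU hUb j (j + 1)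
    have e1 : j + (j + 1) = m + 1 := by omega
    have e2 : 2 * j = m := by omega
    have e3 : 2 * (j + 1) = m + 2 := by omega
    rwa [e1, e2, e3] at h
  · have h := t_cs_odd hU hUb j (j + 1)
    have e1 : j + (j + 1) + 1 = m + 1 := by omega
    have e2 : 2 * j + 1 = m := by omega
    have e3 : 2 * (j + 1) + 1 = m + 2 := by omega
    rwa [e1, e2, e3] at h

/-- If `t 1 > 0` then all traces are positive. -/
lemma t_pos (h1 : 0 < t U 1) : ∀ n, 0 < t U n := by
  have h0 : 0 < t U 0 := by
    have hlc := t_lc hU hUb 0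
    have h2le := t_le_one hU hUb 2
    have h2nn := t_nonneg hU hUb 2
    have h0nn := t_nonneg hU hUb 0
    nlinarith
  intro n
  induction n using Nat.strong_induction_on with
  | _ n ih =>
    match n with
    | 0 => exact h0
    | 1 => exact h1
    | (n + 2) =>
      rcases Nat.even_or_odd (n + 2) with ⟨j, hj⟩ | ⟨j, hj⟩
      · -- n + 2 = 2j, j ≥ 1 ; t j ^ 2 ≤ t 0 * t (2j)
        have hcs := t_cs_even hU hUb 0 j
        have hjpos : 0 < t U j := ih j (by omega)
        have e : 0 + j = j := by omega
        rw [e, show (2*0 : ℕ) = 0 by norm_num] at hcs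
        have : 0 < t U 0 * t U (2 * j) := lt_of_lt_of_le (by positivity) hcs
        have h2j : 0 < t U (2 * j) := by
          by_contra hc
          push_neg at hc
          nlinarith
        rwa [show 2 * j = n + 2 by omega] at h2j
      · -- n + 2 = 2j + 1, j ≥ 1 ; t (j+1) ^ 2 ≤ t 1 * t (2j+1)
        have hcs := t_cs_odd hU hUb 0 j
        have hjpos : 0 < t U (j + 1) := ih (j + 1) (by omega)
        have e : 0 + j + 1 = j + 1 := by omega
        rw [e, show (2*0+1 : ℕ) = 1 by norm_num] at hcs
        have h2j : 0 < t U (2 * j + 1) := by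
          by_contra hc
          push_neg at hc
          nlinarith
        rwa [show 2 * j + 1 = n + 2 by omega] at h2j

/-- Increasing ratios: `t 1 * t n ≤ t 0 * t (n+1)`. -/
lemma t_ratio (h1 : 0 < t U 1) : ∀ n, t U 1 * t U n ≤ t U 0 * t U (n + 1)
  | 0 => le_of_eq (mul_comm _ _)
  | n + 1 => by
    have ih := t_ratio h1 n
    have hlc := t_lc hU hUb n
    have hp := t_pos hU hUb h1
    have h01 := hp 0
    have hn1 := hp (n + 1)
    have hn2 := hp (n + 2)
    have hn := hp n
    nlinarith [hp 1]

/-- Lower bound : `(t 1)^n ≤ t n` for `n ≥ 1`. -/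
lemma t_lower (n : ℕ) (hn : 1 ≤ n) : t U 1 ^ n ≤ t U n := by
  rcases eq_or_lt_of_le (t_nonneg hU hUb 1) with h1 | h1
  · rw [← h1, zero_pow (by omega)]
    exact t_nonneg hU hUb n
  · induction n with
    | zero => omega
    | succ n ih =>
      rcases Nat.eq_or_lt_of_le hn with h | h
      · simp [← h]
      · have hn' : 1 ≤ n := by omega
        have step := t_ratio hU hUb h1 n
        have h0le := t_le_one hU hUb 0
        have hn1nn := t_nonneg hU hUb (n + 1)
        calc t U 1 ^ (n + 1) = t U 1 ^ n * t U 1 := by ring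
          _ ≤ t U n * t U 1 := mul_le_mul_of_nonneg_right (ih hn') h1.le
          _ = t U 1 * t U n := by ring
          _ ≤ t U 0 * t U (n + 1) := step
          _ ≤ 1 * t U (n + 1) := mul_le_mul_of_nonneg_right h0le hn1nn
          _ = t U (n + 1) := one_mul _

/-- Upper bound : `(t n)^2 ≤ (t 1)^(n+1)` for `n ≥ 1`. -/
lemma t_upper (n : ℕ) (hn : 1 ≤ n) : t U n ^ 2 ≤ t U 1 ^ (n + 1) := by
  obtain ⟨q, rfl⟩ : ∃ q, n = q + 1 := ⟨n - 1, by omega⟩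
  have hcs := t_cs_odd hU hUb 0 q
  have e : 0 + q + 1 = q + 1 := by omega
  rw [e, show (2*0+1 : ℕ) = 1 by norm_num] at hcs
  have hodd := t_odd_le hU hUb q
  have h1nn := t_nonneg hU hUb 1
  calc t U (q + 1) ^ 2 ≤ t U 1 * t U (2 * q + 1) := hcs
    _ ≤ t U 1 * t U 1 ^ (q + 1) := mul_le_mul_of_nonneg_left hodd h1nn
    _ = t U 1 ^ (q + 2) := by ring

end Traces

section Chain

include hU hUb

/-- The operator `g ↦ (a,b) ↦ ∫ u, K b u * g a u`. -/
def Top (U : UI → UI → ℝ) (g : UI → UI → ℝ) : UI → UI → ℝ :=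
  fun a b => ∫ u, K U b u * g a u

lemma Top_meas {g : UI → UI → ℝ} (hg : Measurable (uncurry g)) :
    Measurable (uncurry (Top U g)) := by
  have hKm := K_meas hU
  have : Measurable (fun q : (UI × UI) × UI => K U q.1.2 q.2 * g q.1.1 q.2) :=
    (hKm.comp (measurable_fst.snd.prodMk measurable_snd)).mul
      (hg.comp (measurable_fst.fst.prodMk measurable_snd))
  exact this.stronglyMeasurable.integral_prod_right'.measurable

lemma Top_bd {g : UI → UI → ℝ} (hgb : ∀ a b, |g a b| ≤ 1) :
    ∀ a b, |Top U g a b| ≤ 1 := by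
  intro a b
  exact abs_integral_le_one fun u => by
    rw [abs_mul]
    exact mul_le_one₀ (K_bd hU hUb b u) (abs_nonneg _) (hgb a u)

lemma Top_iter_K : ∀ n, (Top U)^[n] (K U) = R U n
  | 0 => rfl
  | n + 1 => by
    rw [Function.iterate_succ_apply', Top_iter_K n]
    rfl

/-- The chain lemma: integrating a path of kernels with endpoints coupled by `g`. -/
lemma chain : ∀ (n : ℕ) (g : UI → UI → ℝ), Measurable (uncurry g) →
    (∀ a b : UI, |g a b| ≤ 1) →
    (∫ x : Fin (n+1) → UI,
        (∏ i : Fin n, K U (x i.castSucc) (x i.succ)) * g (x 0) (x (Fin.last n)))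
      = ∫ a, (Top U)^[n] g a a
  | 0, g, hg, hgb => by
    have e := MeasureTheory.volume_preserving_funUnique (Fin 1) UI
    have h := e.integral_comp
      (MeasurableEquiv.funUnique (Fin 1) UI).measurableEmbedding (fun a => g a a)
    simp only [Function.iterate_zero, id]
    simp at h ⊢
    convert h using 2 <;> rfl
  | n + 1, g, hg, hgb => by
    have hKm := K_meas hU
    have hKb := K_bd hU hUb
    set e := MeasurableEquiv.piFinSuccAbove (fun _ : Fin (n+2) => UI) (Fin.last (n+1))
      with he
    have hmp := volume_preserving_piFinSuccAbove (fun _ : Fin (n+2) => UI) (Fin.last (n+1))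
    set F : (Fin (n+2) → UI) → ℝ := fun x =>
      (∏ i : Fin (n+1), K U (x i.castSucc) (x i.succ)) * g (x 0) (x (Fin.last (n+1)))
      with hF
    have key : (∫ x : Fin (n+2) → UI, F x)
        = ∫ p : UI × (Fin (n+1) → UI), F (e.symm p) :=
      ((hmp.symm e).integral_comp e.symm.measurableEmbedding F).symm
    have esymm : ∀ p : UI × (Fin (n+1) → UI),
        (e.symm p : Fin (n+2) → UI) = Fin.snoc p.2 p.1 := by
      intro p
      simp [he, MeasurableEquiv.piFinSuccAbove_symm_apply, Fin.insertNthEquiv]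
    have pointwise : ∀ p : UI × (Fin (n+1) → UI), F (e.symm p)
        = (∏ i : Fin n, K U (p.2 i.castSucc) (p.2 i.succ))
            * (K U (p.2 (Fin.last n)) p.1 * g (p.2 0) p.1) := by
      intro p
      rw [hF]
      simp only [esymm p]
      rw [Fin.prod_univ_castSucc
        (f := fun i : Fin (n+1) =>
          K U ((Fin.snoc p.2 p.1 : Fin (n+2) → UI) i.castSucc)
            ((Fin.snoc p.2 p.1 : Fin (n+2) → UI) i.succ))]
      have h0 : (Fin.snoc p.2 p.1 : Fin (n+2) → UI) 0 = p.2 0 := by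
        rw [← Fin.castSucc_zero, Fin.snoc_castSucc]
      have hl : (Fin.snoc p.2 p.1 : Fin (n+2) → UI) (Fin.last (n+1)) = p.1 :=
        Fin.snoc_last _ _
      have hterm : ∀ j : Fin n,
          K U ((Fin.snoc p.2 p.1 : Fin (n+2) → UI) (j.castSucc).castSucc)
            ((Fin.snoc p.2 p.1 : Fin (n+2) → UI) (j.castSucc).succ)
          = K U (p.2 j.castSucc) (p.2 j.succ) := by
        intro j
        rw [Fin.succ_castSucc, Fin.snoc_castSucc, Fin.snoc_castSucc]
      have hlast : K U ((Fin.snoc p.2 p.1 : Fin (n+2) → UI) (Fin.last n).castSucc)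
          ((Fin.snoc p.2 p.1 : Fin (n+2) → UI) (Fin.last n).succ)
          = K U (p.2 (Fin.last n)) p.1 := by
        rw [Fin.succ_last, Fin.snoc_castSucc, Fin.snoc_last]
      rw [Finset.prod_congr rfl (fun j _ => hterm j), hlast, h0, hl]
      ring
    rw [key, integral_congr_ae (Eventually.of_forall pointwise)]
    -- now a product integral
    have hprodmeas : Measurable (fun p : UI × (Fin (n+1) → UI) =>
        (∏ i : Fin n, K U (p.2 i.castSucc) (p.2 i.succ))
          * (K U (p.2 (Fin.last n)) p.1 * g (p.2 0) p.1)) := by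
      have hev : ∀ j : Fin (n+1),
          Measurable (fun p : UI × (Fin (n+1) → UI) => p.2 j) := fun j =>
        (measurable_pi_apply j).comp measurable_snd
      refine Measurable.mul ?_ (Measurable.mul ?_ ?_)
      · exact Finset.measurable_prod Finset.univ fun i _ =>
          hKm.comp ((hev i.castSucc).prodMk (hev i.succ))
      · exact hKm.comp ((hev (Fin.last n)).prodMk measurable_fst)
      · exact hg.comp ((hev 0).prodMk measurable_fst)
    have hprodbd : ∀ p : UI × (Fin (n+1) → UI),
        |(∏ i : Fin n, K U (p.2 i.castSucc) (p.2 i.succ))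
          * (K U (p.2 (Fin.last n)) p.1 * g (p.2 0) p.1)| ≤ 1 := by
      intro p
      rw [abs_mul, abs_mul]
      have hprod : |∏ i : Fin n, K U (p.2 i.castSucc) (p.2 i.succ)| ≤ 1 := by
        rw [Finset.abs_prod]
        exact Finset.prod_le_one (fun i _ => abs_nonneg _) (fun i _ => hKb _ _)
      exact mul_le_one₀ hprod (by positivity)
        (mul_le_one₀ (hKb _ _) (abs_nonneg _) (hgb _ _))
    have hint : Integrable (fun p : UI × (Fin (n+1) → UI) =>
        (∏ i : Fin n, K U (p.2 i.castSucc) (p.2 i.succ))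
          * (K U (p.2 (Fin.last n)) p.1 * g (p.2 0) p.1))
        ((volume : Measure UI).prod (volume : Measure (Fin (n+1) → UI))) :=
      integrable_bdd hprodmeas.aestronglyMeasurable hprodbd
    have hvol : (volume : Measure (UI × (Fin (n+1) → UI)))
        = (volume : Measure UI).prod (volume : Measure (Fin (n+1) → UI)) := rfl
    rw [hvol, integral_prod_symm _ hint]
    have inner : ∀ x' : Fin (n+1) → UI,
        (∫ u : UI, (∏ i : Fin n, K U (x' i.castSucc) (x' i.succ))
            * (K U (x' (Fin.last n)) u * g (x' 0) u))
          = (∏ i : Fin n, K U (x' i.castSucc) (x' i.succ))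
              * (Top U g) (x' 0) (x' (Fin.last n)) := by
      intro x'
      rw [integral_const_mul]
      rfl
    rw [integral_congr_ae (Eventually.of_forall inner)]
    rw [chain n (Top U g) (Top_meas hU hUb hg) (Top_bd hU hUb hgb),
      Function.iterate_succ_apply]

end Chain

include hU hUb in
/-- The key identity: the even cycle density equals the trace `t (k-1)`. -/
lemma density_eq (k : ℕ) (hk : 2 ≤ k) : evenCycleDensity k U = t U (k - 1) := by
  obtain ⟨m, rfl⟩ : ∃ m, k = m + 2 := ⟨k - 2, by omega⟩
  have hKm := K_meas hU
  have hKb := K_bd hU hUb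
  unfold evenCycleDensity
  have step1 : ∀ x : Fin (m+2) → UI,
      (∫ y : Fin (m+2) → UI,
        ∏ i : Fin (m+2), (U (x i) (y i) * U (x (finRotate (m+2) i)) (y i)))
      = ∏ i : Fin (m+2), K U (x i) (x (finRotate (m+2) i)) := by
    intro x
    exact integral_fintype_prod_eq_prod (ι := Fin (m+2))
      (fun i t => U (x i) t * U (x (finRotate (m+2) i)) t)
  rw [integral_congr_ae (Eventually.of_forall step1)]
  have step2 : ∀ x : Fin (m+2) → UI,
      (∏ i : Fin (m+2), K U (x i) (x (finRotate (m+2) i)))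
      = (∏ i : Fin (m+1), K U (x i.castSucc) (x i.succ))
          * (fun a b => K U b a) (x 0) (x (Fin.last (m+1))) := by
    intro x
    simp only [finRotate_succ_apply]
    rw [Fin.prod_univ_castSucc (f := fun i : Fin (m+2) => K U (x i) (x (i + 1)))]
    congr 1
    · exact Finset.prod_congr rfl fun i _ => by rw [Fin.coeSucc_eq_succ]
    · rw [Fin.last_add_one]
  rw [integral_congr_ae (Eventually.of_forall step2)]
  have hgm : Measurable (uncurry fun a b : UI => K U b a) :=
    hKm.comp (measurable_snd.prodMk measurable_fst)
  have hgb : ∀ a b : UI, |(fun a b : UI => K U b a) a b| ≤ 1 := fun a b => hKb b a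
  rw [chain hU hUb (m+1) _ hgm hgb]
  have hfl : (fun a b : UI => K U b a) = K U := by
    funext a b
    exact K_symm b a
  rw [hfl, Top_iter_K hU hUb (m+1)]
  rfl

end Kernels

end CycleAux

theorem cycle_density_sandwich
    (U : UI → UI → ℝ)
    (hmeas : Measurable (Function.uncurry U))
    (hbd : ∀ x y : UI, U x y ∈ Set.Icc (-1 : ℝ) 1)
    (k : ℕ) (hk : 2 ≤ k) :
    (evenCycleDensity 2 U) ^ (k - 1) ≤ evenCycleDensity k U ∧
    evenCycleDensity k U ≤ (evenCycleDensity 2 U) ^ ((k : ℝ) / 2) := by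
  have hUb : ∀ x y : UI, |U x y| ≤ 1 := fun x y => abs_le.2 ⟨(hbd x y).1, (hbd x y).2⟩
  have hd2 : evenCycleDensity 2 U = CycleAux.t U 1 := by
    simpa using CycleAux.density_eq hmeas hUb 2 le_rfl
  have hdk : evenCycleDensity k U = CycleAux.t U (k - 1) :=
    CycleAux.density_eq hmeas hUb k hk
  have h1nn := CycleAux.t_nonneg hmeas hUb 1
  have hknn := CycleAux.t_nonneg hmeas hUb (k - 1)
  constructor
  · rw [hd2, hdk]
    exact CycleAux.t_lower hmeas hUb (k - 1) (by omega)
  · rw [hd2, hdk]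
    have hup := CycleAux.t_upper hmeas hUb (k - 1) (by omega)
    rw [show k - 1 + 1 = k by omega] at hup
    have hsq : CycleAux.t U 1 ^ ((k : ℝ) / 2) = Real.sqrt (CycleAux.t U 1 ^ k) := by
      rw [Real.sqrt_eq_rpow, ← Real.rpow_natCast (CycleAux.t U 1) k,
        ← Real.rpow_mul h1nn]
      rw [show ((k : ℝ) * (1 / 2)) = (k : ℝ) / 2 by ring]
    rw [hsq]
    rw [show (CycleAux.t U 1 ^ k : ℝ) = (CycleAux.t U 1 ^ k : ℝ) from rfl]
    exact (Real.le_sqrt hknn (by positivity)).2 hup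

end
end

section
/- Let U : [0,1]² → [−1,1] be symmetric and measurable, and let a, b ≥ 1 be integers. Then: (a) t(P_{a+b+1},U) ≤ t(P_{2a+1},U)^{1/2} · t(P_{2b+1},U)^{1/2}; and (b) t(P_{2a+b+1},U) ≤ t(P_{2a+1},U) · t(C_{4b},U)^{1/4}. -/
/- STATEMENT 17: Path density inequalities
   (a) `t(P_{a+b+1},U) ≤ t(P_{2a+1},U)^{1/2} t(P_{2b+1},U)^{1/2}`, and
   (b) `t(P_{2a+b+1},U) ≤ t(P_{2a+1},U) t(C_{4b},U)^{1/4}`.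
   Here the path with `n` vertices has `n - 1` edges, so `t(P_{e+1},U)` is
   `pathDensity e U` below. -/

open MeasureTheory

noncomputable section

/-- Density `t(P_{e+1}, U)` of the path with `e` edges (`e+1` vertices). -/
def pathDensity (e : ℕ) (U : UI → UI → ℝ) : ℝ :=
  ∫ x : Fin (e + 1) → UI, ∏ i : Fin e, U (x i.castSucc) (x i.succ)

/-- Density `t(C_n, U)` of the `n`-cycle in a symmetric kernel `U`:
`∫ ∏_{i=1}^{n} U(x_i, x_{i+1})` with indices mod `n`. -/
def cycleDensity (n : ℕ) (U : UI → UI → ℝ) : ℝ :=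
  ∫ x : Fin n → UI, ∏ i : Fin n, U (x i) (x (finRotate n i))

namespace PDI

def pf (U : UI → UI → ℝ) : ℕ → UI → ℝ
  | 0 => fun _ => 1
  | k + 1 => fun x => ∫ y, U x y * pf U k y

def Kk (U : UI → UI → ℝ) : ℕ → UI → UI → ℝ
  | 0 => U
  | m + 1 => fun x y => ∫ s, U x s * Kk U m s y

lemma ib' {α : Type*} [MeasurableSpace α] {μ : Measure α} [IsFiniteMeasure μ]
    {F : α → ℝ} (hm : Measurable F) (hb : ∀ x, |F x| ≤ 1) : Integrable F μ :=
  (integrable_const 1).mono' hm.aestronglyMeasurable (ae_of_all _ (by simpa using hb))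

lemma bd_int {α : Type*} [MeasureSpace α] [IsProbabilityMeasure (volume : Measure α)]
    {F : α → ℝ} (h : ∀ x, |F x| ≤ 1) : |∫ x, F x| ≤ 1 := by
  have := norm_integral_le_of_norm_le_const (μ := (volume : Measure α)) (f := F) (C := 1)
    (ae_of_all _ (by simpa using h))
  simpa using this

lemma abs_mul_le_one {x y : ℝ} (hx : |x| ≤ 1) (hy : |y| ≤ 1) : |x * y| ≤ 1 := by
  rw [abs_mul]
  calc |x| * |y| ≤ 1 * 1 := mul_le_mul hx hy (abs_nonneg _) zero_le_one
    _ = 1 := one_mul 1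

/-- quadratic Cauchy–Schwarz for integrals -/
lemma cs_sq {α : Type*} [MeasurableSpace α] {μ : Measure α} {f g : α → ℝ}
    (hff : Integrable (fun x => f x * f x) μ) (hgg : Integrable (fun x => g x * g x) μ)
    (hfg : Integrable (fun x => f x * g x) μ) :
    (∫ x, f x * g x ∂μ) ^ 2 ≤ (∫ x, f x * f x ∂μ) * ∫ x, g x * g x ∂μ := by
  set A := ∫ x, f x * f x ∂μ
  set B := ∫ x, f x * g x ∂μ
  set C := ∫ x, g x * g x ∂μ
  have key : ∀ t : ℝ, 0 ≤ A * (t * t) + (2 * B) * t + C := by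
    intro t
    have h0 : 0 ≤ ∫ x, (t * f x + g x) ^ 2 ∂μ :=
      integral_nonneg fun x => sq_nonneg _
    have hrw : (fun x => (t * f x + g x) ^ 2)
        = fun x => t ^ 2 * (f x * f x) + (2 * t * (f x * g x) + g x * g x) := by
      funext x; ring
    have h1 : ∫ x, (t * f x + g x) ^ 2 ∂μ
        = t ^ 2 * A + (2 * t * B + C) := by
      have hgI : Integrable (fun x => 2 * t * (f x * g x) + g x * g x) μ :=
        (hfg.const_mul _).add hgg
      rw [hrw, integral_add (hff.const_mul _) hgI,
        integral_add (hfg.const_mul _) hgg, integral_const_mul, integral_const_mul]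
    rw [h1] at h0
    nlinarith [h0]
  have hd := discrim_le_zero key
  rw [discrim] at hd
  nlinarith [hd]

lemma cs_sqrt {α : Type*} [MeasurableSpace α] {μ : Measure α} {f g : α → ℝ}
    (hff : Integrable (fun x => f x * f x) μ) (hgg : Integrable (fun x => g x * g x) μ)
    (hfg : Integrable (fun x => f x * g x) μ) :
    (∫ x, f x * g x ∂μ) ≤
      Real.sqrt (∫ x, f x * f x ∂μ) * Real.sqrt (∫ x, g x * g x ∂μ) := by
  have hA : 0 ≤ ∫ x, f x * f x ∂μ := integral_nonneg fun x => mul_self_nonneg _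
  calc (∫ x, f x * g x ∂μ) ≤ |∫ x, f x * g x ∂μ| := le_abs_self _
    _ = Real.sqrt ((∫ x, f x * g x ∂μ) ^ 2) := (Real.sqrt_sq_eq_abs _).symm
    _ ≤ Real.sqrt ((∫ x, f x * f x ∂μ) * ∫ x, g x * g x ∂μ) :=
        Real.sqrt_le_sqrt (cs_sq hff hgg hfg)
    _ = _ := Real.sqrt_mul hA _


variable {U : UI → UI → ℝ}

lemma meas_pf (hm : Measurable (Function.uncurry U)) (k : ℕ) : Measurable (pf U k) := by
  induction k with
  | zero => exact measurable_const
  | succ k ih =>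
      have h : Measurable (Function.uncurry fun x y => U x y * pf U k y) :=
        hm.mul (ih.comp measurable_snd)
      exact (h.stronglyMeasurable.integral_prod_right').measurable

lemma bd_pf (hb : ∀ x y, |U x y| ≤ 1) (k : ℕ) (x : UI) : |pf U k x| ≤ 1 := by
  induction k generalizing x with
  | zero => simp [pf]
  | succ k ih => exact bd_int fun y => abs_mul_le_one (hb x y) (ih y)

lemma meas_Kk (hm : Measurable (Function.uncurry U)) (k : ℕ) :
    Measurable (Function.uncurry (Kk U k)) := by
  induction k with
  | zero => exact hm
  | succ k ih =>
      have h : Measurable (Function.uncurry fun (p : UI × UI) (s : UI) =>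
          U p.1 s * Kk U k s p.2) := by
        apply Measurable.mul
        · exact hm.comp ((measurable_fst.comp measurable_fst).prodMk measurable_snd)
        · exact ih.comp (measurable_snd.prodMk (measurable_snd.comp measurable_fst))
      exact (h.stronglyMeasurable.integral_prod_right').measurable

lemma bd_Kk (hb : ∀ x y, |U x y| ≤ 1) (k : ℕ) (x y : UI) : |Kk U k x y| ≤ 1 := by
  induction k generalizing x y with
  | zero => exact hb x y
  | succ k ih => exact bd_int fun s => abs_mul_le_one (hb x s) (ih s y)

/-- peel off the first coordinate of an integral over `Fin (n+1) → UI` -/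
lemma integral_peel {n : ℕ} {F : (Fin (n + 1) → UI) → ℝ} (hF : Integrable F) :
    ∫ x, F x = ∫ x0 : UI, ∫ y : Fin n → UI, F (Fin.cons x0 y) := by
  have hmp := (measurePreserving_piFinSuccAbove (fun _ : Fin (n + 1) => (volume : Measure UI)) 0).symm
  have hemb := (MeasurableEquiv.piFinSuccAbove (fun _ : Fin (n + 1) => UI) 0).symm.measurableEmbedding
  have h1 : ∫ p : UI × (Fin n → UI),
      F ((MeasurableEquiv.piFinSuccAbove (fun _ : Fin (n + 1) => UI) 0).symm p) = ∫ x, F x :=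
    hmp.integral_comp hemb F
  have h2 : ∀ p : UI × (Fin n → UI),
      (MeasurableEquiv.piFinSuccAbove (fun _ : Fin (n + 1) => UI) 0).symm p
        = Fin.cons p.1 p.2 := by
    intro p
    funext j
    simp [MeasurableEquiv.piFinSuccAbove, Fin.insertNth_zero]
  rw [← h1]
  have hint : Integrable (fun p : UI × (Fin n → UI) => F (Fin.cons p.1 p.2))
      (volume.prod volume) := by
    have h3 := (hmp.integrable_comp_emb hemb).mpr hF
    simp [Function.comp, h2] at h3
    exact h3
  simp only [h2]
  exact integral_prod _ hint

lemma meas_eval_pair {n : ℕ} (hm : Measurable (Function.uncurry U)) (i j : Fin n) :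
    Measurable fun x : Fin n → UI => U (x i) (x j) := by
  have h1 : Measurable fun x : Fin n → UI => (x i, x j) :=
    (measurable_pi_apply i).prodMk (measurable_pi_apply j)
  exact hm.comp h1

/-- the weighted chain formula -/
lemma chain_weight (hm : Measurable (Function.uncurry U)) (hb : ∀ x y, |U x y| ≤ 1) :
    ∀ (e : ℕ) (g : UI → ℝ), Measurable g → (∀ x, |g x| ≤ 1) →
      (∫ x : Fin (e + 1) → UI, g (x 0) * ∏ i : Fin e, U (x i.castSucc) (x i.succ))
        = ∫ t, g t * pf U e t := by
  intro e
  induction e with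
  | zero =>
      intro g hgm hgb
      have h0 : ∀ x : Fin 1 → UI,
          g (x 0) * ∏ i : Fin 0, U (x i.castSucc) (x i.succ) = g (x 0) * pf U 0 (x 0) := by
        intro x; simp [pf]
      simp only [h0]
      exact (volume_preserving_funUnique (Fin 1) UI).integral_comp
        (MeasurableEquiv.funUnique _ _).measurableEmbedding (fun t => g t * pf U 0 t)
  | succ e ih =>
      intro g hgm hgb
      have hFm : Measurable fun x : Fin (e + 2) → UI =>
          g (x 0) * ∏ i : Fin (e + 1), U (x i.castSucc) (x i.succ) :=
        (hgm.comp (measurable_pi_apply 0)).mul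
          (Finset.measurable_prod _ fun i _ => meas_eval_pair hm _ _)
      have hFb : ∀ x : Fin (e + 2) → UI,
          |g (x 0) * ∏ i : Fin (e + 1), U (x i.castSucc) (x i.succ)| ≤ 1 := by
        intro x
        refine abs_mul_le_one (hgb _) ?_
        rw [Finset.abs_prod]
        exact Finset.prod_le_one (fun i _ => abs_nonneg _) (fun i _ => hb _ _)
      rw [integral_peel (ib' hFm hFb)]
      have hstep : ∀ (x0 : UI) (y : Fin (e + 1) → UI),
          g ((Fin.cons x0 y : Fin (e + 2) → UI) 0) *
              ∏ i : Fin (e + 1), U ((Fin.cons x0 y : Fin (e + 2) → UI) i.castSucc)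
                ((Fin.cons x0 y : Fin (e + 2) → UI) i.succ)
            = (fun t => g x0 * U x0 t) (y 0) * ∏ i : Fin e, U (y i.castSucc) (y i.succ) := by
        intro x0 y
        rw [Fin.prod_univ_succ]
        simp only [Fin.castSucc_zero, Fin.cons_zero, Fin.cons_succ, ← Fin.succ_castSucc]
        ring
      simp only [hstep]
      have hinner : ∀ x0 : UI,
          (∫ y : Fin (e + 1) → UI,
              (fun t => g x0 * U x0 t) (y 0) * ∏ i : Fin e, U (y i.castSucc) (y i.succ))
            = ∫ t, (g x0 * U x0 t) * pf U e t := by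
        intro x0
        exact ih (fun t => g x0 * U x0 t)
          ((hm.of_uncurry_left).const_mul _)
          (fun t => abs_mul_le_one (hgb x0) (hb x0 t))
      simp only [hinner]
      have hpull : ∀ x0 : UI,
          (∫ t, (g x0 * U x0 t) * pf U e t) = g x0 * pf U (e + 1) x0 := by
        intro x0
        have : ∀ t, (g x0 * U x0 t) * pf U e t = g x0 * (U x0 t * pf U e t) := by
          intro t; ring
        simp only [this, integral_const_mul]
        rfl
      simp only [hpull]

/-- self-adjointness of the kernel operator -/
lemma adj (hm : Measurable (Function.uncurry U)) (hs : ∀ x y, U x y = U y x)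
    (hb : ∀ x y, |U x y| ≤ 1) {g h : UI → ℝ}
    (hgm : Measurable g) (hgb : ∀ x, |g x| ≤ 1)
    (hhm : Measurable h) (hhb : ∀ x, |h x| ≤ 1) :
    ∫ x, (∫ y, U x y * g y) * h x = ∫ x, g x * ∫ y, U x y * h y := by
  have hI : Integrable (Function.uncurry fun x y => U x y * g y * h x)
      (volume.prod volume) := by
    apply ib'
    · exact (hm.mul (hgm.comp measurable_snd)).mul (hhm.comp measurable_fst)
    · rintro ⟨x, y⟩
      exact abs_mul_le_one (abs_mul_le_one (hb x y) (hgb y)) (hhb x)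
  calc ∫ x, (∫ y, U x y * g y) * h x
      = ∫ x, ∫ y, U x y * g y * h x := by simp only [integral_mul_const]
    _ = ∫ y, ∫ x, U x y * g y * h x := integral_integral_swap hI
    _ = ∫ y, g y * ∫ x, U y x * h x := by
        refine integral_congr_ae (ae_of_all _ fun y => ?_)
        have h1 : ∀ x, U x y * g y * h x = g y * (U y x * h x) := by
          intro x; rw [hs x y]; ring
        simp only [h1, integral_const_mul]

lemma pf_shift (hm : Measurable (Function.uncurry U)) (hs : ∀ x y, U x y = U y x)
    (hb : ∀ x y, |U x y| ≤ 1) (m n : ℕ) :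
    ∫ x, pf U (m + 1) x * pf U n x = ∫ x, pf U m x * pf U (n + 1) x :=
  adj hm hs hb (meas_pf hm m) (bd_pf hb m) (meas_pf hm n) (bd_pf hb n)

lemma pf_split (hm : Measurable (Function.uncurry U)) (hs : ∀ x y, U x y = U y x)
    (hb : ∀ x y, |U x y| ≤ 1) (m n : ℕ) :
    ∫ x, pf U m x * pf U n x = ∫ x, pf U (m + n) x := by
  induction n generalizing m with
  | zero => simp [pf]
  | succ n ih =>
      calc ∫ x, pf U m x * pf U (n + 1) x = ∫ x, pf U (m + 1) x * pf U n x :=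
            (pf_shift hm hs hb m n).symm
        _ = ∫ x, pf U (m + 1 + n) x := ih (m + 1)
        _ = ∫ x, pf U (m + (n + 1)) x := by rw [show m + 1 + n = m + (n + 1) from by omega]

lemma fub {F : UI → UI → ℝ} (hFm : Measurable (Function.uncurry F))
    (hFb : ∀ x y, |F x y| ≤ 1) :
    ∫ x, ∫ y, F x y = ∫ y, ∫ x, F x y :=
  integral_integral_swap (ib' hFm (by rintro ⟨x, y⟩; exact hFb x y))

lemma Kk_comp (hm : Measurable (Function.uncurry U)) (hb : ∀ x y, |U x y| ≤ 1)
    (m k : ℕ) : ∀ x y, Kk U (m + k + 1) x y = ∫ s, Kk U m x s * Kk U k s y := by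
  induction m with
  | zero => intro x y; rw [Nat.zero_add]; rfl
  | succ m ih =>
      intro x y
      rw [show m + 1 + k + 1 = (m + k + 1) + 1 from by omega]
      show ∫ s, U x s * Kk U (m + k + 1) s y = _
      have h2 : ∀ s, U x s * Kk U (m + k + 1) s y
          = ∫ t, U x s * (Kk U m s t * Kk U k t y) := by
        intro s; rw [ih s y, integral_const_mul]
      simp only [h2]
      rw [fub (F := fun s t => U x s * (Kk U m s t * Kk U k t y))]
      · have h3 : ∀ t, (∫ s, U x s * (Kk U m s t * Kk U k t y))
            = Kk U (m + 1) x t * Kk U k t y := by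
          intro t
          have h4 : ∀ s, U x s * (Kk U m s t * Kk U k t y)
              = (U x s * Kk U m s t) * Kk U k t y := fun s => by ring
          simp only [h4, integral_mul_const]
          rfl
        simp only [h3]
      · exact ((hm.of_uncurry_left).comp measurable_fst).mul
          (((meas_Kk hm m).comp (measurable_fst.prodMk measurable_snd)).mul
            (((meas_Kk hm k).of_uncurry_right).comp measurable_snd))
      · intro s t
        exact abs_mul_le_one (hb x s) (abs_mul_le_one (bd_Kk hb m s t) (bd_Kk hb k t y))

lemma Kk_symm (hm : Measurable (Function.uncurry U)) (hs : ∀ x y, U x y = U y x)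
    (hb : ∀ x y, |U x y| ≤ 1) (m : ℕ) : ∀ x y, Kk U m x y = Kk U m y x := by
  induction m with
  | zero => exact hs
  | succ m ih =>
      intro x y
      have h1 : Kk U (m + 1) y x = ∫ s, Kk U m x s * U s y := by
        show ∫ s, U y s * Kk U m s x = _
        refine integral_congr_ae (ae_of_all _ fun s => ?_)
        show U y s * Kk U m s x = Kk U m x s * U s y
        rw [hs y s, ih s x, mul_comm]
      rw [h1, Kk_comp hm hb m 0 x y]
      rfl

lemma pf_act (hm : Measurable (Function.uncurry U)) (hb : ∀ x y, |U x y| ≤ 1)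
    (m n : ℕ) : ∀ x, pf U (n + m + 1) x = ∫ y, Kk U m x y * pf U n y := by
  induction m with
  | zero =>
      intro x
      show ∫ y, U x y * pf U n y = _
      rfl
  | succ m ih =>
      intro x
      rw [show n + (m + 1) + 1 = (n + m + 1) + 1 from by omega]
      show ∫ s, U x s * pf U (n + m + 1) s = _
      have h2 : ∀ s, U x s * pf U (n + m + 1) s
          = ∫ y, U x s * (Kk U m s y * pf U n y) := by
        intro s; rw [ih s, integral_const_mul]
      simp only [h2]
      rw [fub (F := fun s y => U x s * (Kk U m s y * pf U n y))]
      · have h3 : ∀ y, (∫ s, U x s * (Kk U m s y * pf U n y))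
            = Kk U (m + 1) x y * pf U n y := by
          intro y
          have h4 : ∀ s, U x s * (Kk U m s y * pf U n y)
              = (U x s * Kk U m s y) * pf U n y := fun s => by ring
          simp only [h4, integral_mul_const]
          rfl
        simp only [h3]
      · exact ((hm.of_uncurry_left).comp measurable_fst).mul
          (((meas_Kk hm m).comp (measurable_fst.prodMk measurable_snd)).mul
            ((meas_pf hm n).comp measurable_snd))
      · intro s y
        exact abs_mul_le_one (hb x s) (abs_mul_le_one (bd_Kk hb m s y) (bd_pf hb n y))

/-- the chain formula with weights at both endpoints -/
lemma chain2 (hm : Measurable (Function.uncurry U)) (hb : ∀ x y, |U x y| ≤ 1) :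
    ∀ (e : ℕ) (g : UI → UI → ℝ), Measurable (Function.uncurry g) →
      (∀ x y, |g x y| ≤ 1) →
      (∫ x : Fin (e + 2) → UI, g (x 0) (x (Fin.last (e + 1))) *
          ∏ i : Fin (e + 1), U (x i.castSucc) (x i.succ))
        = ∫ x, ∫ y, g x y * Kk U e x y := by
  intro e
  induction e with
  | zero =>
      intro g hgm hgb
      have hgm2 : Measurable fun x : Fin 2 → UI => g (x 0) (x (Fin.last 1)) := by
        have h1 : Measurable fun x : Fin 2 → UI => (x 0, x (Fin.last 1)) :=
          (measurable_pi_apply _).prodMk (measurable_pi_apply _)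
        exact hgm.comp h1
      have hFm : Measurable fun x : Fin 2 → UI =>
          g (x 0) (x (Fin.last 1)) * ∏ i : Fin 1, U (x i.castSucc) (x i.succ) :=
        hgm2.mul (Finset.measurable_prod _ fun i _ => meas_eval_pair hm _ _)
      have hFb : ∀ x : Fin 2 → UI,
          |g (x 0) (x (Fin.last 1)) * ∏ i : Fin 1, U (x i.castSucc) (x i.succ)| ≤ 1 := by
        intro x
        refine abs_mul_le_one (hgb _ _) ?_
        rw [Finset.abs_prod]
        exact Finset.prod_le_one (fun i _ => abs_nonneg _) (fun i _ => hb _ _)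
      rw [integral_peel (ib' hFm hFb)]
      have hstep : ∀ (x0 : UI) (y : Fin 1 → UI),
          g ((Fin.cons x0 y : Fin 2 → UI) 0) ((Fin.cons x0 y : Fin 2 → UI) (Fin.last 1)) *
              ∏ i : Fin 1, U ((Fin.cons x0 y : Fin 2 → UI) i.castSucc)
                ((Fin.cons x0 y : Fin 2 → UI) i.succ)
            = (fun t => g x0 t * U x0 t) (y 0) := by
        intro x0 y
        rw [Fin.prod_univ_one]
        rw [show (Fin.last 1) = (Fin.last 0).succ from rfl]
        simp only [Fin.castSucc_zero, Fin.cons_zero, Fin.cons_succ]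
        have : Fin.last 0 = 0 := rfl
        rw [this]
      simp only [hstep]
      refine integral_congr_ae (ae_of_all _ fun x0 => ?_)
      exact (volume_preserving_funUnique (Fin 1) UI).integral_comp
        (MeasurableEquiv.funUnique _ _).measurableEmbedding (fun t => g x0 t * U x0 t)
  | succ e ih =>
      intro g hgm hgb
      have hgm2 : Measurable fun x : Fin (e + 3) → UI => g (x 0) (x (Fin.last (e + 2))) := by
        have h1 : Measurable fun x : Fin (e + 3) → UI => (x 0, x (Fin.last (e + 2))) :=
          (measurable_pi_apply _).prodMk (measurable_pi_apply _)
        exact hgm.comp h1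
      have hFm : Measurable fun x : Fin (e + 3) → UI =>
          g (x 0) (x (Fin.last (e + 2))) * ∏ i : Fin (e + 2), U (x i.castSucc) (x i.succ) :=
        hgm2.mul (Finset.measurable_prod _ fun i _ => meas_eval_pair hm _ _)
      have hFb : ∀ x : Fin (e + 3) → UI,
          |g (x 0) (x (Fin.last (e + 2))) * ∏ i : Fin (e + 2), U (x i.castSucc) (x i.succ)| ≤ 1 := by
        intro x
        refine abs_mul_le_one (hgb _ _) ?_
        rw [Finset.abs_prod]
        exact Finset.prod_le_one (fun i _ => abs_nonneg _) (fun i _ => hb _ _)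
      rw [integral_peel (ib' hFm hFb)]
      have hstep : ∀ (x0 : UI) (y : Fin (e + 2) → UI),
          g ((Fin.cons x0 y : Fin (e + 3) → UI) 0)
              ((Fin.cons x0 y : Fin (e + 3) → UI) (Fin.last (e + 2))) *
              ∏ i : Fin (e + 2), U ((Fin.cons x0 y : Fin (e + 3) → UI) i.castSucc)
                ((Fin.cons x0 y : Fin (e + 3) → UI) i.succ)
            = (fun s t => g x0 t * U x0 s) (y 0) (y (Fin.last (e + 1))) *
                ∏ i : Fin (e + 1), U (y i.castSucc) (y i.succ) := by
        intro x0 y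
        rw [Fin.prod_univ_succ]
        rw [show (Fin.last (e + 2)) = (Fin.last (e + 1)).succ from rfl]
        simp only [Fin.castSucc_zero, Fin.cons_zero, Fin.cons_succ, ← Fin.succ_castSucc]
        ring
      simp only [hstep]
      have hinner : ∀ x0 : UI,
          (∫ y : Fin (e + 2) → UI,
              (fun s t => g x0 t * U x0 s) (y 0) (y (Fin.last (e + 1))) *
                ∏ i : Fin (e + 1), U (y i.castSucc) (y i.succ))
            = ∫ x, ∫ y, (g x0 y * U x0 x) * Kk U e x y := by
        intro x0
        refine ih (fun s t => g x0 t * U x0 s) ?_ ?_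
        · exact ((hgm.of_uncurry_left).comp measurable_snd).mul
            ((hm.of_uncurry_left).comp measurable_fst)
        · intro s t; exact abs_mul_le_one (hgb x0 t) (hb x0 s)
      simp only [hinner]
      refine integral_congr_ae (ae_of_all _ fun x0 => ?_)
      show (∫ x, ∫ y, (g x0 y * U x0 x) * Kk U e x y) = ∫ y, g x0 y * Kk U (e + 1) x0 y
      have h2 : ∀ x, (∫ y, (g x0 y * U x0 x) * Kk U e x y)
          = ∫ y, g x0 y * (U x0 x * Kk U e x y) := by
        intro x
        refine integral_congr_ae (ae_of_all _ fun y => ?_)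
        show (g x0 y * U x0 x) * Kk U e x y = g x0 y * (U x0 x * Kk U e x y)
        ring
      simp only [h2]
      rw [fub (F := fun x y => g x0 y * (U x0 x * Kk U e x y))]
      · refine integral_congr_ae (ae_of_all _ fun y => ?_)
        show (∫ x, g x0 y * (U x0 x * Kk U e x y)) = g x0 y * Kk U (e + 1) x0 y
        rw [integral_const_mul]
        rfl
      · exact ((hgm.of_uncurry_left).comp measurable_snd).mul
          (((hm.of_uncurry_left).comp measurable_fst).mul
            ((meas_Kk hm e).comp (measurable_fst.prodMk measurable_snd)))
      · intro x y
        exact abs_mul_le_one (hgb x0 y) (abs_mul_le_one (hb x0 x) (bd_Kk hb e x y))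

lemma path_eq (hm : Measurable (Function.uncurry U)) (hb : ∀ x y, |U x y| ≤ 1) (e : ℕ) :
    pathDensity e U = ∫ x, pf U e x := by
  have h := chain_weight hm hb e (fun _ => 1) measurable_const (by intro x; simp)
  simp only [one_mul] at h
  exact h

lemma cycle_eq (hm : Measurable (Function.uncurry U)) (hs : ∀ x y, U x y = U y x)
    (hb : ∀ x y, |U x y| ≤ 1) (m : ℕ) :
    cycleDensity (m + 2) U = ∫ x, ∫ y, U y x * Kk U m x y := by
  have hpoint : ∀ x : Fin (m + 2) → UI,
      (∏ i : Fin (m + 2), U (x i) (x (finRotate (m + 2) i)))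
        = (fun a c => U c a) (x 0) (x (Fin.last (m + 1))) *
            ∏ i : Fin (m + 1), U (x i.castSucc) (x i.succ) := by
    intro x
    rw [Fin.prod_univ_castSucc]
    have h1 : ∀ i : Fin (m + 1), finRotate (m + 2) i.castSucc = i.succ := by
      intro i
      rw [finRotate_succ_apply, Fin.coeSucc_eq_succ]
    have h2 : finRotate (m + 2) (Fin.last (m + 1)) = 0 := finRotate_last
    simp only [h1, h2]
    ring
  rw [cycleDensity]
  simp only [hpoint]
  exact chain2 hm hb m (fun a c => U c a) (hm.comp measurable_swap) (fun a c => hb c a)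

lemma cycle_sq (hm : Measurable (Function.uncurry U)) (hs : ∀ x y, U x y = U y x)
    (hb : ∀ x y, |U x y| ≤ 1) (c : ℕ) :
    cycleDensity (4 * c + 4) U
      = ∫ x, ∫ y, Kk U (2 * c + 1) x y * Kk U (2 * c + 1) x y := by
  rw [show 4 * c + 4 = (4 * c + 2) + 2 from by omega, cycle_eq hm hs hb (4 * c + 2)]
  refine integral_congr_ae (ae_of_all _ fun x => ?_)
  show (∫ y, U y x * Kk U (4 * c + 2) x y)
      = ∫ y, Kk U (2 * c + 1) x y * Kk U (2 * c + 1) x y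
  have h1 : ∀ y, U y x * Kk U (4 * c + 2) x y
      = ∫ s, U y x * (Kk U (2 * c + 1) x s * Kk U (2 * c) s y) := by
    intro y
    rw [show 4 * c + 2 = (2 * c + 1) + (2 * c) + 1 from by omega,
      Kk_comp hm hb (2 * c + 1) (2 * c) x y, integral_const_mul]
  simp only [h1]
  rw [fub (F := fun y s => U y x * (Kk U (2 * c + 1) x s * Kk U (2 * c) s y))]
  · refine integral_congr_ae (ae_of_all _ fun s => ?_)
    show (∫ y, U y x * (Kk U (2 * c + 1) x s * Kk U (2 * c) s y))
        = Kk U (2 * c + 1) x s * Kk U (2 * c + 1) x s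
    have h2 : ∀ y, U y x * (Kk U (2 * c + 1) x s * Kk U (2 * c) s y)
        = Kk U (2 * c + 1) x s * (Kk U (2 * c) s y * U y x) := fun y => by ring
    simp only [h2, integral_const_mul]
    have h3 : (∫ y, Kk U (2 * c) s y * U y x) = Kk U (2 * c + 1) s x := by
      rw [show 2 * c + 1 = 2 * c + 0 + 1 from by omega, Kk_comp hm hb (2 * c) 0 s x]
      rfl
    rw [h3, Kk_symm hm hs hb _ s x]
  · exact ((hm.of_uncurry_right).comp measurable_fst).mul
      ((((meas_Kk hm (2 * c + 1)).of_uncurry_left).comp measurable_snd).mul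
        ((meas_Kk hm (2 * c)).comp (measurable_snd.prodMk measurable_fst)))
  · intro y s
    exact abs_mul_le_one (hb y x)
      (abs_mul_le_one (bd_Kk hb _ x s) (bd_Kk hb _ s y))

end PDI

open PDI in
theorem path_density_inequalities
    (U : UI → UI → ℝ)
    (hmeas : Measurable (Function.uncurry U))
    (hsym : ∀ x y : UI, U x y = U y x)
    (hbd : ∀ x y : UI, U x y ∈ Set.Icc (-1 : ℝ) 1)
    (a b : ℕ) (ha : 1 ≤ a) (hb : 1 ≤ b) :
    pathDensity (a + b) U ≤
      (pathDensity (2 * a) U) ^ ((1 : ℝ) / 2) *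
        (pathDensity (2 * b) U) ^ ((1 : ℝ) / 2) ∧
    pathDensity (2 * a + b) U ≤
      pathDensity (2 * a) U * (cycleDensity (4 * b) U) ^ ((1 : ℝ) / 4) := by
  have hb' : ∀ x y, |U x y| ≤ 1 := fun x y => abs_le.mpr ⟨(hbd x y).1, (hbd x y).2⟩
  have measpf := meas_pf (U := U) hmeas
  have bdpf := bd_pf (U := U) hb'
  have Iprod : ∀ m n : ℕ, Integrable (fun x => pf U m x * pf U n x) (volume : Measure UI) :=
    fun m n => ib' ((measpf m).mul (measpf n)) fun x => abs_mul_le_one (bdpf m x) (bdpf n x)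
  have hnn : ∀ m : ℕ, 0 ≤ ∫ x, pf U m x * pf U m x :=
    fun m => integral_nonneg fun x => mul_self_nonneg _
  have csf : ∀ m n : ℕ, (∫ x, pf U m x * pf U n x)
      ≤ Real.sqrt (∫ x, pf U m x * pf U m x) * Real.sqrt (∫ x, pf U n x * pf U n x) :=
    fun m n => cs_sqrt (Iprod m m) (Iprod n n) (Iprod m n)
  have hsplit : ∀ m n : ℕ, pathDensity (m + n) U = ∫ x, pf U m x * pf U n x := fun m n => by
    rw [path_eq hmeas hb', ← pf_split hmeas hsym hb' m n]
  have h2a : pathDensity (2 * a) U = ∫ x, pf U a x * pf U a x := by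
    rw [show 2 * a = a + a from by omega]; exact hsplit a a
  constructor
  · -- part (a)
    have h2b : pathDensity (2 * b) U = ∫ x, pf U b x * pf U b x := by
      rw [show 2 * b = b + b from by omega]; exact hsplit b b
    rw [hsplit a b, h2a, h2b, ← Real.sqrt_eq_rpow, ← Real.sqrt_eq_rpow]
    exact csf a b
  · -- part (b)
    obtain ⟨c, rfl⟩ : ∃ c, b = c + 1 := ⟨b - 1, by omega⟩
    have hA0 : 0 ≤ ∫ x, pf U a x * pf U a x := hnn a
    have hX : pathDensity (2 * a + (c + 1)) U = ∫ x, pf U a x * pf U (a + (c + 1)) x := by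
      rw [show 2 * a + (c + 1) = a + (a + (c + 1)) from by omega]
      exact hsplit a (a + (c + 1))
    have hY : ∫ x, pf U (a + (c + 1)) x * pf U (a + (c + 1)) x
        = ∫ x, pf U a x * pf U (a + (2 * c + 2)) x := by
      rw [pf_split hmeas hsym hb', pf_split hmeas hsym hb',
        show (a + (c + 1)) + (a + (c + 1)) = a + (a + (2 * c + 2)) from by omega]
    have hact : ∀ x, pf U (a + (2 * c + 2)) x = ∫ y, Kk U (2 * c + 1) x y * pf U a y := by
      intro x
      rw [show a + (2 * c + 2) = a + (2 * c + 1) + 1 from by omega]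
      exact pf_act hmeas hb' (2 * c + 1) a x
    have hC : cycleDensity (4 * (c + 1)) U
        = ∫ x, ∫ y, Kk U (2 * c + 1) x y * Kk U (2 * c + 1) x y := by
      rw [show 4 * (c + 1) = 4 * c + 4 from by omega]
      exact cycle_sq hmeas hsym hb' c
    have hC0 : 0 ≤ cycleDensity (4 * (c + 1)) U := by
      rw [hC]
      exact integral_nonneg fun x => integral_nonneg fun y => mul_self_nonneg _
    have hZle : ∫ x, pf U (a + (2 * c + 2)) x * pf U (a + (2 * c + 2)) x
        ≤ cycleDensity (4 * (c + 1)) U * ∫ x, pf U a x * pf U a x := by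
      have hKKm : Measurable fun x => ∫ y, Kk U (2 * c + 1) x y * Kk U (2 * c + 1) x y := by
        have hmm : Measurable (Function.uncurry
            fun x y => Kk U (2 * c + 1) x y * Kk U (2 * c + 1) x y) :=
          (meas_Kk hmeas _).mul (meas_Kk hmeas _)
        exact (hmm.stronglyMeasurable.integral_prod_right').measurable
      have hpoint : ∀ x, pf U (a + (2 * c + 2)) x * pf U (a + (2 * c + 2)) x
          ≤ (∫ y, Kk U (2 * c + 1) x y * Kk U (2 * c + 1) x y) * ∫ y, pf U a y * pf U a y := by
        intro x
        have IKK : Integrable (fun y => Kk U (2 * c + 1) x y * Kk U (2 * c + 1) x y)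
            (volume : Measure UI) :=
          ib' (((meas_Kk hmeas _).of_uncurry_left).mul ((meas_Kk hmeas _).of_uncurry_left))
            fun y => abs_mul_le_one (bd_Kk hb' _ x y) (bd_Kk hb' _ x y)
        have IKp : Integrable (fun y => Kk U (2 * c + 1) x y * pf U a y)
            (volume : Measure UI) :=
          ib' (((meas_Kk hmeas _).of_uncurry_left).mul (measpf a))
            fun y => abs_mul_le_one (bd_Kk hb' _ x y) (bdpf a y)
        have hcs := cs_sq (μ := (volume : Measure UI))
          (f := fun y => Kk U (2 * c + 1) x y) (g := pf U a) IKK (Iprod a a) IKp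
        rw [hact x]
        calc (∫ y, Kk U (2 * c + 1) x y * pf U a y) * (∫ y, Kk U (2 * c + 1) x y * pf U a y)
            = (∫ y, Kk U (2 * c + 1) x y * pf U a y) ^ 2 := (sq _).symm
          _ ≤ _ := hcs
      have hRHSI : Integrable (fun x =>
          (∫ y, Kk U (2 * c + 1) x y * Kk U (2 * c + 1) x y) * ∫ y, pf U a y * pf U a y)
          (volume : Measure UI) := by
        refine ib' (hKKm.mul_const _) fun x => abs_mul_le_one ?_ ?_
        · exact bd_int fun y => abs_mul_le_one (bd_Kk hb' _ x y) (bd_Kk hb' _ x y)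
        · exact bd_int fun y => abs_mul_le_one (bdpf a y) (bdpf a y)
      have hineq := integral_mono (Iprod (a + (2 * c + 2)) (a + (2 * c + 2))) hRHSI hpoint
      rw [integral_mul_const, ← hC] at hineq
      exact hineq
    -- combine
    rw [hX, h2a]
    have hXle := csf a (a + (c + 1))
    have hYle : ∫ x, pf U (a + (c + 1)) x * pf U (a + (c + 1)) x
        ≤ Real.sqrt (∫ x, pf U a x * pf U a x) *
          Real.sqrt (∫ x, pf U (a + (2 * c + 2)) x * pf U (a + (2 * c + 2)) x) := by
      rw [hY]; exact csf a (a + (2 * c + 2))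
    calc ∫ x, pf U a x * pf U (a + (c + 1)) x
        ≤ Real.sqrt (∫ x, pf U a x * pf U a x) *
          Real.sqrt (∫ x, pf U (a + (c + 1)) x * pf U (a + (c + 1)) x) := hXle
      _ ≤ Real.sqrt (∫ x, pf U a x * pf U a x) *
          Real.sqrt (Real.sqrt (∫ x, pf U a x * pf U a x) *
            Real.sqrt (∫ x, pf U (a + (2 * c + 2)) x * pf U (a + (2 * c + 2)) x)) :=
        mul_le_mul_of_nonneg_left (Real.sqrt_le_sqrt hYle) (Real.sqrt_nonneg _)
      _ ≤ Real.sqrt (∫ x, pf U a x * pf U a x) *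
          Real.sqrt (Real.sqrt (∫ x, pf U a x * pf U a x) *
            Real.sqrt (cycleDensity (4 * (c + 1)) U * ∫ x, pf U a x * pf U a x)) := by
        refine mul_le_mul_of_nonneg_left ?_ (Real.sqrt_nonneg _)
        refine Real.sqrt_le_sqrt ?_
        exact mul_le_mul_of_nonneg_left (Real.sqrt_le_sqrt hZle) (Real.sqrt_nonneg _)
      _ = (∫ x, pf U a x * pf U a x) * cycleDensity (4 * (c + 1)) U ^ ((1 : ℝ) / 4) := by
        rw [Real.sqrt_mul hC0]
        rw [show Real.sqrt (∫ x, pf U a x * pf U a x) *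
            (Real.sqrt (cycleDensity (4 * (c + 1)) U) * Real.sqrt (∫ x, pf U a x * pf U a x))
            = (∫ x, pf U a x * pf U a x) * Real.sqrt (cycleDensity (4 * (c + 1)) U) from by
          rw [mul_comm (Real.sqrt (cycleDensity (4 * (c + 1)) U)), ← mul_assoc,
            Real.mul_self_sqrt hA0]]
        rw [Real.sqrt_mul hA0, ← mul_assoc, Real.mul_self_sqrt hA0]
        rw [Real.sqrt_eq_rpow, Real.sqrt_eq_rpow, ← Real.rpow_mul hC0]
        norm_num

end
end

section
/- Let U : [0,1]² → [−1,1] be measurable and let h ≥ 1 be an integer. Then the sequence (t(K_{h,2k},U))_{k≥1} is nonnegative, log-convex, and monotone decreasing; that is: (i) t(K_{h,2k},U) ≥ 0 for every k ≥ 1; (ii) t(K_{h,a+b},U)² ≤ t(K_{h,2a},U) · t(K_{h,2b},U) for all integers a,b ≥ 1; and (iii) t(K_{h,2k+2},U) ≤ t(K_{h,2k},U) for every k ≥ 1. -/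
/- STATEMENT 18: The densities `t(K_{h,2k},U)` of complete bipartite graphs
   form a nonnegative, log-convex, monotone decreasing sequence. -/

open MeasureTheory

noncomputable section

/-- Density `t(K_{a,b}, U)` of the complete bipartite graph whose first class
has `a` vertices and second class has `b` vertices:
`∫ ∏_{i,j} U(x_i, y_j)`. -/
def completeBipDensity (a b : ℕ) (U : UI → UI → ℝ) : ℝ :=
  ∫ x : Fin a → UI, ∫ y : Fin b → UI, ∏ i : Fin a, ∏ j : Fin b, U (x i) (y j)

/-- Cauchy–Schwarz for real integrals. -/
lemma integral_mul_sq_le {α : Type*} [MeasurableSpace α] {μ : Measure α} {f g : α → ℝ}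
    (hf : Integrable (fun x => f x ^ 2) μ) (hg : Integrable (fun x => g x ^ 2) μ)
    (hfg : Integrable (fun x => f x * g x) μ) :
    (∫ x, f x * g x ∂μ) ^ 2 ≤ (∫ x, f x ^ 2 ∂μ) * (∫ x, g x ^ 2 ∂μ) := by
  set A := ∫ x, f x ^ 2 ∂μ
  set B := ∫ x, f x * g x ∂μ
  set C := ∫ x, g x ^ 2 ∂μ
  have key : ∀ t : ℝ, 0 ≤ A * (t * t) + (2 * B) * t + C := by
    intro t
    have e : (fun x => (t * f x + g x) ^ 2)
        = fun x => t ^ 2 * f x ^ 2 + (2 * t) * (f x * g x) + g x ^ 2 :=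
      funext fun x => by ring
    have h1 : Integrable (fun x => t ^ 2 * f x ^ 2) μ := hf.const_mul _
    have h2 : Integrable (fun x => (2 * t) * (f x * g x)) μ := hfg.const_mul _
    have hnn : (0:ℝ) ≤ ∫ x, (t * f x + g x) ^ 2 ∂μ :=
      integral_nonneg fun x => sq_nonneg _
    rw [e] at hnn
    have h12 : Integrable (fun x => t ^ 2 * f x ^ 2 + (2 * t) * (f x * g x)) μ := h1.add h2
    rw [integral_add h12 hg, integral_add h1 h2, integral_const_mul,
      integral_const_mul] at hnn
    calc (0:ℝ) ≤ t ^ 2 * A + (2 * t) * B + C := hnn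
      _ = A * (t * t) + (2 * B) * t + C := by ring
  have hd := discrim_le_zero key
  rw [discrim] at hd
  nlinarith [hd]

theorem complete_bipartite_densities_monotone
    (U : UI → UI → ℝ)
    (hmeas : Measurable (Function.uncurry U))
    (hbd : ∀ x y : UI, U x y ∈ Set.Icc (-1 : ℝ) 1)
    (h : ℕ) (hh : 1 ≤ h) :
    (∀ k : ℕ, 1 ≤ k → 0 ≤ completeBipDensity h (2 * k) U) ∧
    (∀ a b : ℕ, 1 ≤ a → 1 ≤ b →
      (completeBipDensity h (a + b) U) ^ 2 ≤
        completeBipDensity h (2 * a) U * completeBipDensity h (2 * b) U) ∧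
    (∀ k : ℕ, 1 ≤ k →
      completeBipDensity h (2 * k + 2) U ≤ completeBipDensity h (2 * k) U) := by
  -- the "one-sided" density function
  set G : (Fin h → UI) → ℝ := fun x => ∫ y : UI, ∏ i, U (x i) y with hGdef
  -- measurability of the joint map
  have hjoint : Measurable (fun p : (Fin h → UI) × UI => ∏ i, U (p.1 i) p.2) := by
    apply Finset.measurable_prod
    intro i _
    have hp : Measurable fun p : (Fin h → UI) × UI => (p.1 i, p.2) :=
      ((measurable_pi_apply i).comp measurable_fst).prodMk measurable_snd
    exact hmeas.comp hp
  have hGmeas : Measurable G := by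
    have := (hjoint.stronglyMeasurable).integral_prod_right'
      (ν := (volume : Measure UI))
    exact this.measurable
  -- |G| ≤ 1
  have hUabs : ∀ x y : UI, |U x y| ≤ 1 := fun x y =>
    abs_le.2 ⟨(hbd x y).1, (hbd x y).2⟩
  have hGbd : ∀ x, |G x| ≤ 1 := by
    intro x
    have : ‖∫ y : UI, ∏ i, U (x i) y‖ ≤ 1 * ((volume : Measure UI) Set.univ).toReal := by
      apply norm_integral_le_of_norm_le_const
      filter_upwards with y
      rw [Real.norm_eq_abs]
      calc |∏ i, U (x i) y| = ∏ i, |U (x i) y| := Finset.abs_prod _ _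
        _ ≤ ∏ i : Fin h, (1:ℝ) := Finset.prod_le_prod (fun i _ => abs_nonneg _)
            (fun i _ => hUabs _ _)
        _ = 1 := by simp
    simpa using this
  -- key identity: completeBipDensity h b U = ∫ G^b
  have hkey : ∀ b : ℕ, completeBipDensity h b U = ∫ x : Fin h → UI, (G x) ^ b := by
    intro b
    unfold completeBipDensity
    congr 1
    funext x
    have : (fun y : Fin b → UI => ∏ i : Fin h, ∏ j : Fin b, U (x i) (y j))
        = fun y => ∏ j : Fin b, (fun z : UI => ∏ i : Fin h, U (x i) z) (y j) := by
      funext y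
      exact Finset.prod_comm
    rw [this]; refine (MeasureTheory.integral_fintype_prod_eq_pow (ι := Fin b)
      (fun z : UI => ∏ i : Fin h, U (x i) z)).trans ?_
    simp [hGdef]
  -- integrability of G^n
  have hint : ∀ n : ℕ, Integrable (fun x => (G x) ^ n)
      (volume : Measure (Fin h → UI)) := by
    intro n
    refine (integrable_const (1:ℝ)).mono' ((hGmeas.pow_const n).aestronglyMeasurable) ?_
    filter_upwards with x
    rw [Real.norm_eq_abs, abs_pow]
    exact pow_le_one₀ (abs_nonneg _) (hGbd x)
  refine ⟨?_, ?_, ?_⟩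
  · -- nonnegativity
    intro k _
    rw [hkey]
    apply integral_nonneg
    intro x
    show (0:ℝ) ≤ G x ^ (2 * k)
    rw [pow_mul]
    positivity
  · -- log-convexity (Cauchy–Schwarz)
    intro a b _ _
    rw [hkey, hkey, hkey]
    have h1 : (fun x : Fin h → UI => (G x) ^ (a + b))
        = fun x => (G x) ^ a * (G x) ^ b := funext fun x => pow_add _ _ _
    have h2 : (fun x : Fin h → UI => (G x) ^ (2 * a))
        = fun x => ((G x) ^ a) ^ 2 := funext fun x => by rw [← pow_mul, mul_comm]
    have h3 : (fun x : Fin h → UI => (G x) ^ (2 * b))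
        = fun x => ((G x) ^ b) ^ 2 := funext fun x => by rw [← pow_mul, mul_comm]
    rw [h1, h2, h3]
    apply integral_mul_sq_le
    · simpa [← h2] using hint (2 * a)
    · simpa [← h3] using hint (2 * b)
    · simpa [← h1] using hint (a + b)
  · -- monotonicity
    intro k _
    rw [hkey, hkey]
    apply integral_mono (hint _) (hint _)
    intro x
    show G x ^ (2 * k + 2) ≤ G x ^ (2 * k)
    have hsq : (G x) ^ 2 ≤ 1 := by
      rw [← sq_abs]
      exact pow_le_one₀ (abs_nonneg _) (hGbd x)
    calc (G x) ^ (2 * k + 2) = (G x) ^ (2 * k) * (G x) ^ 2 := by rw [pow_add]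
      _ ≤ (G x) ^ (2 * k) * 1 := by
          apply mul_le_mul_of_nonneg_left hsq
          rw [pow_mul]; positivity
      _ = (G x) ^ (2 * k) := mul_one _
end
end
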